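/- arXiv:2005.08953 — 10 statements merged into one kernel-verified Lean document; each statement's English description precedes it below -/
import Mathlib

section
/- Let β ∈ ℝ, γ > 0, p > 0, η > 1 with pγ > β. Then the normalizing constant of the incomplete gamma distribution satisfies K_{β,γ,p,η} = (Γ(γ − β/p)/(p Γ(γ))) ∫_{1/η}^{1} (1−u)^{γ−1} u^{−1−β/p} du. -/
open MeasureTheory

section Helpers
open Real Set

lemma helper1 {p q s : ℝ} (hp : 0 < p) (hq : -1 < q) (hs : 0 < s) :
    IntegrableOn (fun u : ℝ => u ^ q * Real.exp (-(s * u ^ p))) (Ioi 0) := by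
  have base : IntegrableOn (fun y : ℝ => y ^ ((q+1)/p - 1) * Real.exp (-(s * y))) (Ioi 0) := by
    have := integrableOn_rpow_mul_exp_neg_mul_rpow
      (by have := div_pos (by linarith : 0 < q + 1) hp; linarith : (-1:ℝ) < (q+1)/p - 1)
      zero_lt_one hs
    refine this.congr_fun (fun x hx => ?_) measurableSet_Ioi
    beta_reduce
    rw [Real.rpow_one, neg_mul]
  have key := (integrableOn_Ioi_comp_rpow_iff'
      (fun y : ℝ => y ^ ((q+1)/p - 1) * Real.exp (-(s * y))) hp.ne').mpr base
  refine key.congr_fun (fun x hx => ?_) measurableSet_Ioi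
  have hx0 : (0:ℝ) < x := hx
  beta_reduce
  rw [smul_eq_mul, ← Real.rpow_mul hx0.le, ← mul_assoc, ← Real.rpow_add hx0]
  congr 1
  field_simp
  ring_nf

lemma helper2 {p q s : ℝ} (hp : 0 < p) (hq : -1 < q) (hs : 0 < s) :
    ∫ u in Ioi (0:ℝ), u ^ q * Real.exp (-(s * u ^ p))
      = s ^ (-(q+1)/p) * (1/p) * Real.Gamma ((q+1)/p) := by
  rw [← integral_rpow_mul_exp_neg_mul_rpow hp hq hs]
  exact setIntegral_congr_fun measurableSet_Ioi (fun x hx => by rw [neg_mul])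

lemma stepB {β γ p η : ℝ} (hγ : 0 < γ) (hp : 0 < p) (hη : 1 < η) {u : ℝ} (hu : 0 < u) :
    (∫ x in (0:ℝ)..(u ^ p), x ^ (γ - 1) * Real.exp (-(x * (η - 1)))) *
          Real.exp (-(u ^ p)) * u ^ (-1 - β)
      = ∫ t in Ioc (0:ℝ) 1,
          t ^ (γ - 1) * (u ^ (p * γ - 1 - β) * Real.exp (-((1 + t * (η - 1)) * u ^ p))) := by
  have hc : (0:ℝ) < u ^ p := Real.rpow_pos_of_pos hu p
  set c := u ^ p with hcdef
  have subst : (∫ x in (0:ℝ)..c, x ^ (γ - 1) * Real.exp (-(x * (η - 1))))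
      = c • ∫ t in (0:ℝ)..1, (c * t) ^ (γ - 1) * Real.exp (-((c * t) * (η - 1))) := by
    rw [intervalIntegral.smul_integral_comp_mul_left
      (fun x => x ^ (γ - 1) * Real.exp (-(x * (η - 1)))) c, mul_zero, mul_one]
  rw [subst, smul_eq_mul, intervalIntegral.integral_of_le zero_le_one,
    mul_assoc, ← integral_const_mul, mul_comm, ← integral_const_mul]
  refine setIntegral_congr_fun measurableSet_Ioc (fun t ht => ?_)
  obtain ⟨ht0, ht1⟩ := ht
  have h1 : (c * t) ^ (γ - 1) = c ^ (γ - 1) * t ^ (γ - 1) :=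
    Real.mul_rpow hc.le ht0.le
  rw [h1]
  have h2 : c * c ^ (γ - 1) = c ^ γ := by
    nth_rewrite 1 [← Real.rpow_one c]
    rw [← Real.rpow_add hc]; ring_nf
  have h3 : c ^ γ = u ^ (p * γ) := by rw [hcdef, ← Real.rpow_mul hu.le]
  have h4 : u ^ (p*γ) * u ^ (-1-β) = u ^ (p * γ - 1 - β) := by
    rw [← Real.rpow_add hu]; ring_nf
  have h5 : Real.exp (-((c*t) * (η-1))) * Real.exp (-c) = Real.exp (-((1 + t*(η-1)) * c)) := by
    rw [← Real.exp_add]; ring_nf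
  calc Real.exp (-c) * u ^ (-1 - β) * (c * (c ^ (γ-1) * t ^ (γ-1) * Real.exp (-(c * t * (η-1)))))
      = (c * c ^ (γ-1)) * u ^ (-1-β) * t ^ (γ-1) * (Real.exp (-(c*t*(η-1))) * Real.exp (-c)) := by ring
    _ = _ := by
        rw [h2, h3, h5, h4]; ring

lemma stepC {β γ p η : ℝ} (hγ : 0 < γ) (hp : 0 < p) (hη : 1 < η) (hβ : β < p * γ) :
    ∫ u in Ioi (0:ℝ), ∫ t in Ioc (0:ℝ) 1,
        t ^ (γ - 1) * (u ^ (p * γ - 1 - β) * Real.exp (-((1 + t * (η - 1)) * u ^ p)))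
      = ∫ t in Ioc (0:ℝ) 1, ∫ u in Ioi (0:ℝ),
        t ^ (γ - 1) * (u ^ (p * γ - 1 - β) * Real.exp (-((1 + t * (η - 1)) * u ^ p))) := by
  set q := p * γ - 1 - β with hq
  have hq1 : (-1:ℝ) < q := by simp only [hq]; linarith
  refine integral_integral_swap ?_
  have hmeas : AEStronglyMeasurable
      (fun z : ℝ × ℝ => z.2 ^ (γ - 1) * (z.1 ^ q * Real.exp (-((1 + z.2 * (η - 1)) * z.1 ^ p))))
      ((volume.restrict (Ioi (0:ℝ))).prod (volume.restrict (Ioc (0:ℝ) 1))) := by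
    apply Measurable.aestronglyMeasurable
    fun_prop
  have hb1 : IntegrableOn (fun u : ℝ => u ^ q * Real.exp (-(1 * u ^ p))) (Ioi 0) :=
    helper1 hp hq1 one_pos
  have hb2 : IntegrableOn (fun t : ℝ => t ^ (γ - 1)) (Ioc (0:ℝ) 1) := by
    rw [← intervalIntegrable_iff_integrableOn_Ioc_of_le zero_le_one]
    exact intervalIntegral.intervalIntegrable_rpow' (by linarith : (-1:ℝ) < γ - 1)
  have hbound : Integrable
      (fun z : ℝ × ℝ => (z.1 ^ q * Real.exp (-(1 * z.1 ^ p))) * z.2 ^ (γ - 1))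
      ((volume.restrict (Ioi (0:ℝ))).prod (volume.restrict (Ioc (0:ℝ) 1))) :=
    Integrable.mul_prod (L := ℝ) hb1 hb2
  refine hbound.mono' hmeas ?_
  rw [Measure.prod_restrict]
  filter_upwards [ae_restrict_mem (measurableSet_Ioi.prod measurableSet_Ioc)] with z hz
  obtain ⟨hz1, hz2⟩ := hz
  have hu : (0:ℝ) < z.1 := hz1
  have ht0 : (0:ℝ) < z.2 := hz2.1
  have h1 : (0:ℝ) ≤ z.2 ^ (γ - 1) := Real.rpow_nonneg ht0.le _
  have h2 : (0:ℝ) ≤ z.1 ^ q := Real.rpow_nonneg hu.le _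
  simp only [Function.uncurry]
  rw [Real.norm_eq_abs, abs_of_nonneg (mul_nonneg h1 (mul_nonneg h2 (Real.exp_pos _).le))]
  have hexp : Real.exp (-((1 + z.2 * (η - 1)) * z.1 ^ p)) ≤ Real.exp (-(1 * z.1 ^ p)) := by
    apply Real.exp_le_exp.mpr
    have : (0:ℝ) ≤ z.1 ^ p := Real.rpow_nonneg hu.le _
    nlinarith [mul_nonneg (mul_nonneg ht0.le (by linarith : (0:ℝ) ≤ η - 1)) this]
  calc z.2 ^ (γ - 1) * (z.1 ^ q * Real.exp (-((1 + z.2 * (η - 1)) * z.1 ^ p)))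
      ≤ z.2 ^ (γ - 1) * (z.1 ^ q * Real.exp (-(1 * z.1 ^ p))) := by
        apply mul_le_mul_of_nonneg_left (mul_le_mul_of_nonneg_left hexp h2) h1
    _ = (z.1 ^ q * Real.exp (-(1 * z.1 ^ p))) * z.2 ^ (γ - 1) := by ring

lemma stepE {β γ p η : ℝ} (hγ : 0 < γ) (hp : 0 < p) (hη : 1 < η) :
    ∫ v in Ioo (1/η : ℝ) 1, (1 - v) ^ (γ - 1) * v ^ (-1 - β / p)
      = (η - 1) ^ γ * ∫ t in Ioo (0:ℝ) 1,
          t ^ (γ - 1) * (1 + t * (η - 1)) ^ (-(γ - β / p)) := by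
  set a := η - 1 with ha
  have ha0 : 0 < a := by simp only [ha]; linarith
  set φ : ℝ → ℝ := fun t => (1 + t * a)⁻¹ with hφ
  have hw : ∀ t : ℝ, 0 < t → 0 < 1 + t * a := fun t ht => by nlinarith
  have hderiv : ∀ t ∈ Ioo (0:ℝ) 1,
      HasDerivWithinAt φ (-a / (1 + t * a)^2) (Ioo (0:ℝ) 1) t := by
    intro t ht
    have h1 : HasDerivAt (fun t : ℝ => 1 + t * a) a t := by
      simpa using ((hasDerivAt_id t).mul_const a).const_add 1
    exact (h1.inv (hw t ht.1).ne').hasDerivWithinAt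
  have hinj : InjOn φ (Ioo (0:ℝ) 1) := by
    intro x hx y hy hxy
    have h1 := inv_injective hxy
    have : x * a = y * a := by linarith [h1]
    exact mul_right_cancel₀ ha0.ne' this
  have himg : φ '' Ioo (0:ℝ) 1 = Ioo (1/η) 1 := by
    ext v
    constructor
    · rintro ⟨t, ⟨ht0, ht1⟩, rfl⟩
      have h1 : 1 < 1 + t * a := by nlinarith
      have h2 : 1 + t * a < η := by simp only [ha]; nlinarith
      constructor
      · rw [div_lt_iff₀ (by linarith : (0:ℝ) < η)]
        rw [inv_mul_eq_div, lt_div_iff₀ (by linarith)]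
        linarith
      · exact inv_lt_one_of_one_lt₀ h1
    · rintro ⟨hv1, hv2⟩
      have hv0 : 0 < v := lt_trans (by positivity) hv1
      refine ⟨(v⁻¹ - 1)/a, ⟨?_, ?_⟩, ?_⟩
      · have : 1 < v⁻¹ := (one_lt_inv₀ hv0).mpr hv2
        exact div_pos (by linarith) ha0
      · rw [div_lt_one ha0]
        have : v⁻¹ < η := by
          rw [inv_lt_comm₀ hv0 (by linarith : (0:ℝ) < η)]
          rwa [one_div] at hv1
        simp only [ha]; linarith
      · simp only [hφ]
        rw [div_mul_cancel₀ _ ha0.ne']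
        simp [inv_inv]
  rw [← himg, integral_image_eq_integral_abs_deriv_smul measurableSet_Ioo hderiv hinj,
    ← integral_const_mul]
  refine setIntegral_congr_fun measurableSet_Ioo (fun t ht => ?_)
  obtain ⟨ht0, ht1⟩ := ht
  have hw0 : 0 < 1 + t * a := hw t ht0
  set w := 1 + t * a with hwdef
  have habs : |(-a / w^2)| = a * w ^ (-2 : ℝ) := by
    rw [abs_div, abs_neg, abs_of_pos ha0, abs_of_pos (by positivity : (0:ℝ) < w^2),
      div_eq_mul_inv, ← Real.rpow_natCast w 2, ← Real.rpow_neg hw0.le]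
    norm_num
  have h1mφ : 1 - w⁻¹ = t * a / w := by field_simp; simp only [hwdef]; ring
  have hφt : φ t = w⁻¹ := rfl
  rw [smul_eq_mul, habs, hφt, h1mφ]
  rw [Real.div_rpow (by positivity) hw0.le, Real.mul_rpow ht0.le ha0.le,
    ← Real.rpow_neg_one w, ← Real.rpow_mul hw0.le, div_eq_mul_inv,
    ← Real.rpow_neg hw0.le (γ-1)]
  have collect : a * w ^ (-2:ℝ) * (t ^ (γ-1) * a ^ (γ-1) * w ^ (-(γ-1)) * w ^ ((-1) * (-1 - β/p)))
      = (a * a ^ (γ-1)) * (t ^ (γ-1) * (w ^ (-2:ℝ) * w ^ (-(γ-1)) * w ^ ((-1) * (-1 - β/p)))) := by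
    ring
  rw [collect, ← Real.rpow_add hw0, ← Real.rpow_add hw0]
  nth_rewrite 1 [← Real.rpow_one a]
  rw [← Real.rpow_add ha0]
  norm_num
  ring_nf
  exact Or.inl (Or.inl trivial)

end Helpers

open Real Set in
/-- For β ∈ ℝ, γ > 0, p > 0, η > 1 with pγ > β, the normalizing constant
K_{β,γ,p,η} = ∫_0^∞ G_{γ,(η−1)}(u^p) e^{−u^p} u^{−1−β} du of the incomplete gamma distribution
satisfies K_{β,γ,p,η} = (Γ(γ − β/p)/(p Γ(γ))) ∫_{1/η}^{1} (1−u)^{γ−1} u^{−1−β/p} du. -/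
theorem incomplete_gamma_normalizing_constant_formula
    (β γ p η : ℝ) (hγ : 0 < γ) (hp : 0 < p) (hη : 1 < η) (hβ : β < p * γ) :
    (∫ u in Set.Ioi (0:ℝ),
        (((η - 1) ^ γ / Real.Gamma γ) *
            ∫ x in (0:ℝ)..(u ^ p), x ^ (γ - 1) * Real.exp (-(x * (η - 1)))) *
          Real.exp (-(u ^ p)) * u ^ (-1 - β))
      = (Real.Gamma (γ - β / p) / (p * Real.Gamma γ)) *
          ∫ u in (1/η : ℝ)..1, (1 - u) ^ (γ - 1) * u ^ (-1 - β / p) := by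
  set C := (η - 1) ^ γ / Real.Gamma γ with hC
  set q := p * γ - 1 - β with hq
  have hq1 : (-1:ℝ) < q := by simp only [hq]; linarith
  have hδ : (q + 1) / p = γ - β / p := by field_simp [hq]; ring
  have step1 : (∫ u in Set.Ioi (0:ℝ),
        (C * ∫ x in (0:ℝ)..(u ^ p), x ^ (γ - 1) * Real.exp (-(x * (η - 1)))) *
          Real.exp (-(u ^ p)) * u ^ (-1 - β))
      = C * ∫ u in Ioi (0:ℝ), ∫ t in Ioc (0:ℝ) 1,
          t ^ (γ - 1) * (u ^ q * Real.exp (-((1 + t * (η - 1)) * u ^ p))) := by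
    rw [← integral_const_mul]
    refine setIntegral_congr_fun measurableSet_Ioi (fun u hu => ?_)
    rw [mul_assoc, mul_assoc, ← mul_assoc
      (∫ x in (0:ℝ)..(u ^ p), x ^ (γ - 1) * Real.exp (-(x * (η - 1)))),
      stepB hγ hp hη (mem_Ioi.mp hu)]
  rw [step1, stepC hγ hp hη hβ]
  have step3 : (∫ t in Ioc (0:ℝ) 1, ∫ u in Ioi (0:ℝ),
        t ^ (γ - 1) * (u ^ q * Real.exp (-((1 + t * (η - 1)) * u ^ p))))
      = ((1/p) * Real.Gamma (γ - β / p)) * ∫ t in Ioc (0:ℝ) 1,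
          t ^ (γ - 1) * (1 + t * (η - 1)) ^ (-(γ - β / p)) := by
    rw [← integral_const_mul]
    refine setIntegral_congr_fun measurableSet_Ioc (fun t ht => ?_)
    have hs : 0 < 1 + t * (η - 1) := by nlinarith [ht.1, ht.2]
    rw [integral_const_mul, helper2 hp hq1 hs, neg_div, hδ]
    ring
  rw [step3, integral_Ioc_eq_integral_Ioo,
    intervalIntegral.integral_of_le (by rw [div_le_one (by linarith)]; linarith : 1/η ≤ (1:ℝ)),
    integral_Ioc_eq_integral_Ioo, stepE hγ hp hη (β := β), hC]
  ring
end

section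
/- Let β ∈ ℝ, γ > 0, p > 0 with pγ > β. Then K_{β,γ,p,η} is asymptotically equivalent to (Γ(γ − β/p)/(p Γ(γ+1))) (η−1)^γ as η ↓ 1; that is, the limit as η → 1⁺ of K_{β,γ,p,η} / (η−1)^γ equals Γ(γ − β/p)/(p Γ(γ+1)). -/
open MeasureTheory Filter Set

private lemma myIntegrableOn {p s : ℝ} (hp : 0 < p) (hs : -1 < s) :
    IntegrableOn (fun x : ℝ => x ^ s * Real.exp (-x ^ p)) (Set.Ioi 0) := by
  have hq : 0 < (s + 1) / p := div_pos (by linarith) hp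
  have h1 : IntegrableOn (fun t : ℝ => t ^ ((s + 1) / p - 1) * Real.exp (-t)) (Set.Ioi 0) :=
    (Real.GammaIntegral_convergent hq).congr_fun (fun x _ => by rw [mul_comm]) measurableSet_Ioi
  have h2 := (integrableOn_Ioi_comp_rpow_iff'
    (fun t : ℝ => t ^ ((s + 1) / p - 1) * Real.exp (-t)) hp.ne').mpr h1
  refine h2.congr_fun (fun x hx => ?_) measurableSet_Ioi
  have hx0 : (0:ℝ) < x := hx
  have h3 : (x ^ p) ^ ((s + 1) / p - 1) = x ^ (s + 1 - p) := by
    rw [← Real.rpow_mul hx0.le]; congr 1; field_simp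
  have h4 : p - 1 + (s + 1 - p) = s := by ring
  dsimp only
  rw [smul_eq_mul, h3, ← mul_assoc, ← Real.rpow_add hx0, h4]

/-- For β ∈ ℝ, γ > 0, p > 0 with pγ > β, the normalizing constant
K_{β,γ,p,η} = ∫_0^∞ G_{γ,(η−1)}(u^p) e^{−u^p} u^{−1−β} du satisfies
K_{β,γ,p,η} / (η−1)^γ → Γ(γ − β/p)/(p Γ(γ+1)) as η ↓ 1. -/
theorem incomplete_gamma_normalizing_constant_asymp_eta_to_one
    (β γ p : ℝ) (hγ : 0 < γ) (hp : 0 < p) (hβ : β < p * γ) :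
    Tendsto (fun η : ℝ =>
        (∫ u in Set.Ioi (0:ℝ),
            (((η - 1) ^ γ / Real.Gamma γ) *
                ∫ x in (0:ℝ)..(u ^ p), x ^ (γ - 1) * Real.exp (-(x * (η - 1)))) *
              Real.exp (-(u ^ p)) * u ^ (-1 - β)) / (η - 1) ^ γ)
      (nhdsWithin 1 (Set.Ioi 1))
      (nhds (Real.Gamma (γ - β / p) / (p * Real.Gamma (γ + 1)))) := by
  have hΓ : 0 < Real.Gamma γ := Real.Gamma_pos_of_pos hγ
  set l : Filter ℝ := nhdsWithin 1 (Set.Ioi 1) with hl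
  set F : ℝ → ℝ → ℝ := fun η u =>
    ((1 / Real.Gamma γ) * ∫ x in (0:ℝ)..(u ^ p), x ^ (γ - 1) * Real.exp (-(x * (η - 1)))) *
      Real.exp (-(u ^ p)) * u ^ (-1 - β) with hF
  set f0 : ℝ → ℝ := fun u =>
    ((1 / Real.Gamma γ) * ((u ^ p) ^ γ / γ)) * Real.exp (-(u ^ p)) * u ^ (-1 - β) with hf0
  have hII : ∀ c a b : ℝ, IntervalIntegrable
      (fun x : ℝ => x ^ (γ - 1) * Real.exp (-(x * c))) volume a b := by
    intro c a b
    exact (intervalIntegral.intervalIntegrable_rpow' (by linarith)).mul_continuousOn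
      (Continuous.continuousOn (by continuity))
  have hγ1 : γ - 1 + 1 = γ := by ring
  have hval : ∀ T : ℝ, 0 ≤ T → (∫ x in (0:ℝ)..T, x ^ (γ - 1)) = T ^ γ / γ := by
    intro T hT
    rw [integral_rpow (Or.inl (by linarith)), hγ1, Real.zero_rpow hγ.ne']
    ring
  -- interval integral bound and nonnegativity
  have hIbound : ∀ c : ℝ, 0 ≤ c → ∀ T : ℝ, 0 ≤ T →
      (∫ x in (0:ℝ)..T, x ^ (γ - 1) * Real.exp (-(x * c))) ∈
        Set.Icc (0:ℝ) (T ^ γ / γ) := by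
    intro c hc T hT
    constructor
    · apply intervalIntegral.integral_nonneg hT
      intro x hx
      have h0 := Real.rpow_nonneg hx.1 (γ - 1)
      positivity
    · rw [← hval T hT]
      apply intervalIntegral.integral_mono_on hT (hII c 0 T) (by simpa using hII 0 0 T)
      intro x hx
      have h1 : Real.exp (-(x * c)) ≤ 1 := by
        rw [Real.exp_le_one_iff]
        have : 0 ≤ x * c := mul_nonneg hx.1 hc
        linarith
      calc x ^ (γ - 1) * Real.exp (-(x * c)) ≤ x ^ (γ - 1) * 1 :=
            mul_le_mul_of_nonneg_left h1 (Real.rpow_nonneg hx.1 _)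
        _ = x ^ (γ - 1) := mul_one _
  -- bound function
  set g : ℝ → ℝ := fun u => (1 / (Real.Gamma γ * γ)) *
      (u ^ (p * γ + (-1 - β)) * Real.exp (-u ^ p)) with hg
  have hgeq : ∀ u ∈ Set.Ioi (0:ℝ), f0 u = g u := by
    intro u hu
    have hu0 : (0:ℝ) < u := hu
    simp only [hf0, hg]
    rw [← Real.rpow_mul hu0.le, Real.rpow_add hu0]
    ring
  have hs1 : (-1:ℝ) < p * γ + (-1 - β) := by linarith
  have hgint : IntegrableOn g (Set.Ioi 0) := (myIntegrableOn hp hs1).const_mul _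
  have hf0int : IntegrableOn f0 (Set.Ioi 0) :=
    hgint.congr_fun (fun u hu => (hgeq u hu).symm) measurableSet_Ioi
  have hupow : Continuous (fun u : ℝ => u ^ p) := Real.continuous_rpow_const hp.le
  -- measurability
  have hFmeas : ∀ η : ℝ, AEStronglyMeasurable (F η) (volume.restrict (Set.Ioi 0)) := by
    intro η
    have hprim : Continuous (fun T : ℝ => ∫ x in (0:ℝ)..T,
        x ^ (γ - 1) * Real.exp (-(x * (η - 1)))) :=
      intervalIntegral.continuous_primitive (fun a b => hII (η - 1) a b) 0
    have h1 : ContinuousOn (fun u : ℝ => (1 / Real.Gamma γ) *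
        ∫ x in (0:ℝ)..(u ^ p), x ^ (γ - 1) * Real.exp (-(x * (η - 1)))) (Set.Ioi 0) :=
      (continuous_const.mul (hprim.comp hupow)).continuousOn
    have h2 : Continuous (fun u : ℝ => Real.exp (-(u ^ p))) := (hupow.neg).rexp
    have h3 : ContinuousOn (fun u : ℝ => u ^ (-1 - β)) (Set.Ioi 0) := fun u hu =>
      (Real.continuousAt_rpow_const u _ (Or.inl (ne_of_gt hu))).continuousWithinAt
    exact ((h1.mul h2.continuousOn).mul h3).aestronglyMeasurable measurableSet_Ioi
  -- dominated convergence
  have hB : Tendsto (fun η => ∫ u in Set.Ioi (0:ℝ), F η u) l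
      (nhds (∫ u in Set.Ioi (0:ℝ), f0 u)) := by
    apply tendsto_integral_filter_of_dominated_convergence f0
      (Eventually.of_forall hFmeas) ?_ hf0int ?_
    · -- bound
      filter_upwards [self_mem_nhdsWithin] with η hη
      rw [ae_restrict_iff' measurableSet_Ioi]
      refine ae_of_all _ fun u hu => ?_
      have hu0 : (0:ℝ) < u := hu
      have hc : (0:ℝ) ≤ η - 1 := by
        have : (1:ℝ) < η := hη
        linarith
      have hT : (0:ℝ) ≤ u ^ p := (Real.rpow_pos_of_pos hu0 p).le
      obtain ⟨hI0, hI1⟩ := hIbound (η - 1) hc (u ^ p) hT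
      have hU : 0 ≤ u ^ (-1 - β) := Real.rpow_nonneg hu0.le _
      have hE : 0 ≤ Real.exp (-(u ^ p)) := (Real.exp_pos _).le
      have hnn : 0 ≤ F η u := by
        simp only [hF]
        exact mul_nonneg (mul_nonneg (mul_nonneg (by positivity) hI0) hE) hU
      rw [Real.norm_eq_abs, abs_of_nonneg hnn]
      simp only [hF, hf0]
      have hle : (1 / Real.Gamma γ) *
          (∫ x in (0:ℝ)..(u ^ p), x ^ (γ - 1) * Real.exp (-(x * (η - 1)))) ≤
          (1 / Real.Gamma γ) * ((u ^ p) ^ γ / γ) :=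
        mul_le_mul_of_nonneg_left hI1 (by positivity)
      exact mul_le_mul_of_nonneg_right (mul_le_mul_of_nonneg_right hle hE) hU
    · -- pointwise limit
      rw [ae_restrict_iff' measurableSet_Ioi]
      refine ae_of_all _ fun u hu => ?_
      have hu0 : (0:ℝ) < u := hu
      have hT : (0:ℝ) ≤ u ^ p := (Real.rpow_pos_of_pos hu0 p).le
      have hinner : Tendsto
          (fun η : ℝ => ∫ x in (0:ℝ)..(u ^ p), x ^ (γ - 1) * Real.exp (-(x * (η - 1)))) l
          (nhds (∫ x in (0:ℝ)..(u ^ p), x ^ (γ - 1))) := by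
        apply intervalIntegral.tendsto_integral_filter_of_dominated_convergence
          (fun x : ℝ => x ^ (γ - 1))
        · refine Eventually.of_forall fun η => ?_
          rw [Set.uIoc_of_le hT]
          exact (hII (η - 1) 0 (u ^ p)).1.aestronglyMeasurable
        · filter_upwards [self_mem_nhdsWithin] with η hη
          refine ae_of_all _ fun x hx => ?_
          rw [Set.uIoc_of_le hT] at hx
          have hx0 : 0 < x := hx.1
          have hc : (0:ℝ) ≤ η - 1 := by
            have : (1:ℝ) < η := hη
            linarith
          have h1 : Real.exp (-(x * (η - 1))) ≤ 1 := by
            rw [Real.exp_le_one_iff]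
            have : 0 ≤ x * (η - 1) := mul_nonneg hx0.le hc
            linarith
          have h2 : 0 ≤ x ^ (γ - 1) := Real.rpow_nonneg hx0.le _
          rw [Real.norm_eq_abs, abs_of_nonneg (mul_nonneg h2 (Real.exp_pos _).le)]
          calc x ^ (γ - 1) * Real.exp (-(x * (η - 1))) ≤ x ^ (γ - 1) * 1 :=
                mul_le_mul_of_nonneg_left h1 h2
            _ = x ^ (γ - 1) := mul_one _
        · exact intervalIntegral.intervalIntegrable_rpow' (by linarith)
        · refine ae_of_all _ fun x _ => ?_
          have hcont : Continuous fun η : ℝ => Real.exp (-(x * (η - 1))) := by continuity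
          have h4 := (hcont.tendsto 1).mono_left (nhdsWithin_le_nhds : l ≤ nhds 1)
          simp only [sub_self, mul_zero, neg_zero, Real.exp_zero] at h4
          have h5 := tendsto_const_nhds (α := ℝ) (x := x ^ (γ - 1)) (f := l) |>.mul h4
          simpa using h5
      rw [hval (u ^ p) hT] at hinner
      have : Tendsto (fun η : ℝ => F η u) l (nhds (f0 u)) := by
        simp only [hF, hf0]
        exact (((tendsto_const_nhds.mul hinner).mul tendsto_const_nhds).mul tendsto_const_nhds)
      exact this
  -- the filter equality
  have hA : (fun η => ∫ u in Set.Ioi (0:ℝ), F η u) =ᶠ[l] fun η : ℝ =>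
      (∫ u in Set.Ioi (0:ℝ),
          (((η - 1) ^ γ / Real.Gamma γ) *
              ∫ x in (0:ℝ)..(u ^ p), x ^ (γ - 1) * Real.exp (-(x * (η - 1)))) *
            Real.exp (-(u ^ p)) * u ^ (-1 - β)) / (η - 1) ^ γ := by
    filter_upwards [self_mem_nhdsWithin] with η hη
    have hc : (0:ℝ) < η - 1 := by
      have : (1:ℝ) < η := hη
      linarith
    have hcγ : ((η - 1) ^ γ : ℝ) ≠ 0 := (Real.rpow_pos_of_pos hc γ).ne'
    rw [← MeasureTheory.integral_div]
    apply setIntegral_congr_fun measurableSet_Ioi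
    intro u _
    simp only [hF]
    generalize (∫ x in (0:ℝ)..(u ^ p), x ^ (γ - 1) * Real.exp (-(x * (η - 1)))) = I
    field_simp
  -- the value of the limit integral
  have hval2 : (∫ u in Set.Ioi (0:ℝ), f0 u) =
      Real.Gamma (γ - β / p) / (p * Real.Gamma (γ + 1)) := by
    rw [setIntegral_congr_fun measurableSet_Ioi hgeq]
    simp only [hg]
    rw [MeasureTheory.integral_const_mul, integral_rpow_mul_exp_neg_rpow hp hs1]
    rw [show (p * γ + (-1 - β) + 1) / p = γ - β / p by field_simp; ring]
    rw [Real.Gamma_add_one hγ.ne']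
    have h1 : Real.Gamma γ ≠ 0 := hΓ.ne'
    have h2 : γ ≠ 0 := hγ.ne'
    have h3 : p ≠ 0 := hp.ne'
    field_simp
  rw [← hval2]
  exact Tendsto.congr' hA hB
end

section
/- Let β > 0, γ > 0, p > 0 with pγ > β. Then K_{β,γ,p,η} is asymptotically equivalent to (Γ(γ − β/p)/(β Γ(γ))) η^{β/p} as η → ∞; that is, the limit as η → ∞ of K_{β,γ,p,η} / η^{β/p} equals Γ(γ − β/p)/(β Γ(γ)). -/
open MeasureTheory Filter

open Real Set

namespace IncGammaAux

variable {γ : ℝ}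

lemma g_integrableOn (hγ : 0 < γ) :
    IntegrableOn (fun y : ℝ => y ^ (γ - 1) * rexp (-y)) (Ioi 0) :=
  (Real.GammaIntegral_convergent hγ).congr_fun (fun x _ => mul_comm _ _) measurableSet_Ioi

lemma g_intervalIntegrable (hγ : 0 < γ) {T : ℝ} (hT : 0 ≤ T) :
    IntervalIntegrable (fun y : ℝ => y ^ (γ - 1) * rexp (-y)) volume 0 T := by
  rw [intervalIntegrable_iff_integrableOn_Ioc_of_le hT]
  exact (g_integrableOn hγ).mono_set Ioc_subset_Ioi_self

noncomputable def Phi (γ T : ℝ) : ℝ := ∫ y in (0:ℝ)..T, y ^ (γ - 1) * rexp (-y)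

lemma Phi_nonneg {T : ℝ} (hT : 0 ≤ T) : 0 ≤ Phi γ T :=
  intervalIntegral.integral_nonneg hT fun y hy =>
    mul_nonneg (Real.rpow_nonneg hy.1 _) (Real.exp_pos _).le

lemma Gamma_eq (hγ : 0 < γ) :
    Real.Gamma γ = ∫ y in Ioi (0:ℝ), y ^ (γ - 1) * rexp (-y) := by
  rw [Real.Gamma_eq_integral hγ]
  exact setIntegral_congr_fun measurableSet_Ioi fun x _ => mul_comm _ _

lemma Phi_le_Gamma (hγ : 0 < γ) {T : ℝ} (hT : 0 ≤ T) : Phi γ T ≤ Real.Gamma γ := by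
  rw [Gamma_eq hγ, Phi, intervalIntegral.integral_of_le hT]
  refine setIntegral_mono_set (g_integrableOn hγ) ?_ (HasSubset.Subset.eventuallyLE Ioc_subset_Ioi_self)
  refine (ae_restrict_iff' measurableSet_Ioi).mpr (Filter.Eventually.of_forall fun y hy => ?_)
  exact mul_nonneg (Real.rpow_nonneg (le_of_lt hy) _) (Real.exp_pos _).le

lemma Phi_le_rpow (hγ : 0 < γ) {T : ℝ} (hT : 0 ≤ T) : Phi γ T ≤ T ^ γ / γ := by
  have h1 : Phi γ T ≤ ∫ y in (0:ℝ)..T, y ^ (γ - 1) := by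
    refine intervalIntegral.integral_mono_on hT (g_intervalIntegrable hγ hT)
      (intervalIntegral.intervalIntegrable_rpow' (by linarith)) fun y hy => ?_
    calc y ^ (γ - 1) * rexp (-y) ≤ y ^ (γ - 1) * 1 := by
          refine mul_le_mul_of_nonneg_left ?_ (Real.rpow_nonneg hy.1 _)
          exact (Real.exp_le_exp.mpr (neg_nonpos.mpr hy.1)).trans_eq Real.exp_zero
      _ = y ^ (γ - 1) := mul_one _
  rw [integral_rpow (Or.inl (by linarith))] at h1
  have he : γ - 1 + 1 = γ := by ring
  rw [he, Real.zero_rpow hγ.ne', sub_zero] at h1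
  exact h1

lemma Phi_tendsto (hγ : 0 < γ) : Tendsto (Phi γ) atTop (nhds (Real.Gamma γ)) := by
  rw [Gamma_eq hγ]
  exact intervalIntegral_tendsto_integral_Ioi 0 (g_integrableOn hγ) tendsto_id

lemma Phi_hasDerivAt (hγ : 0 < γ) {T : ℝ} (hT : 0 < T) :
    HasDerivAt (Phi γ) (T ^ (γ - 1) * rexp (-T)) T := by
  have hm : Measurable (fun y : ℝ => y ^ (γ - 1) * rexp (-y)) := by fun_prop
  refine intervalIntegral.integral_hasDerivAt_right (g_intervalIntegrable hγ hT.le)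
    hm.stronglyMeasurable.stronglyMeasurableAtFilter ?_
  exact (Real.continuousAt_rpow_const T (γ - 1) (Or.inl hT.ne')).mul
    (Real.continuous_exp.comp continuous_neg).continuousAt

lemma Phi_zero : Phi γ 0 = 0 := intervalIntegral.integral_same



variable {β p : ℝ}

-- integrability of s ^ (p*γ - β - 1) * exp (-(s^p)) on Ioi 0
lemma h2_integrableOn (hγ : 0 < γ) (hp : 0 < p) (hβ : β < p * γ) :
    IntegrableOn (fun s : ℝ => s ^ (p * γ - β - 1) * rexp (-(s ^ p))) (Ioi 0) := by
  have hcγ : 0 < γ - β / p := by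
    rw [sub_pos, div_lt_iff₀ hp]; linarith [hβ]
  have hf : IntegrableOn (fun t : ℝ => t ^ (γ - β / p - 1) * rexp (-t)) (Ioi 0) :=
    g_integrableOn hcγ
  have h := (integrableOn_Ioi_comp_rpow_iff' (fun t : ℝ => t ^ (γ - β / p - 1) * rexp (-t))
    hp.ne').mpr hf
  refine h.congr_fun (fun x hx => ?_) measurableSet_Ioi
  have hx0 : (0:ℝ) < x := hx
  have e1 : (x ^ p) ^ (γ - β / p - 1) = x ^ (p * (γ - β / p - 1)) :=
    (Real.rpow_mul hx0.le _ _).symm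
  beta_reduce
  rw [smul_eq_mul, e1, ← mul_assoc, ← Real.rpow_add hx0]
  congr 2
  field_simp
  ring

lemma h2_value (hγ : 0 < γ) (hp : 0 < p) (hβpos : 0 < β) (hβ : β < p * γ) :
    ∫ s in Ioi (0:ℝ), s ^ (p * γ - β - 1) * rexp (-(s ^ p)) =
      (1 / p) * Real.Gamma (γ - β / p) := by
  have h := integral_rpow_mul_exp_neg_rpow hp (show (-1:ℝ) < p * γ - β - 1 by linarith)
  rw [show (p * γ - β - 1 + 1) / p = γ - β / p by field_simp; ring] at h
  simpa using h

lemma f1_continuousOn (hγ : 0 < γ) (hp : 0 < p) :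
    ContinuousOn (fun s : ℝ => Phi γ (s ^ p) * s ^ (-1 - β)) (Ioi 0) := by
  intro s hs
  have hs0 : (0:ℝ) < s := hs
  have hm : Measurable (fun y : ℝ => y ^ (γ - 1) * rexp (-y)) := by fun_prop
  have hT : (0:ℝ) < s ^ p := Real.rpow_pos_of_pos hs0 p
  have hPhi : ContinuousAt (Phi γ) (s ^ p) := by
    refine (intervalIntegral.integral_hasDerivAt_right ?_
      hm.stronglyMeasurable.stronglyMeasurableAtFilter ?_).continuousAt
    · rw [intervalIntegrable_iff_integrableOn_Ioc_of_le hT.le]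
      exact (g_integrableOn hγ).mono_set Ioc_subset_Ioi_self
    · exact (Real.continuousAt_rpow_const _ (γ - 1) (Or.inl hT.ne')).mul
        (Real.continuous_exp.comp continuous_neg).continuousAt
  have hc1 : ContinuousAt (Phi γ ∘ fun s : ℝ => s ^ p) s :=
    ContinuousAt.comp (x := s) hPhi (Real.continuousAt_rpow_const s p (Or.inl hs0.ne'))
  have hc1' : ContinuousAt (fun s : ℝ => Phi γ (s ^ p)) s := hc1
  exact (hc1'.mul (Real.continuousAt_rpow_const s (-1 - β) (Or.inl hs0.ne'))).continuousWithinAt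


lemma f1_integrableOn (hγ : 0 < γ) (hp : 0 < p) (hβpos : 0 < β) (hβ : β < p * γ) :
    IntegrableOn (fun s : ℝ => Phi γ (s ^ p) * s ^ (-1 - β)) (Ioi 0) := by
  have aesm : AEStronglyMeasurable (fun s : ℝ => Phi γ (s ^ p) * s ^ (-1 - β))
      (volume.restrict (Ioi (0:ℝ))) :=
    (f1_continuousOn hγ hp).aestronglyMeasurable measurableSet_Ioi
  have hIoc : IntegrableOn (fun s : ℝ => Phi γ (s ^ p) * s ^ (-1 - β)) (Ioc 0 1) := by
    have hgb : IntegrableOn (fun s : ℝ => γ⁻¹ * s ^ (p * γ - 1 - β)) (Ioc (0:ℝ) 1) := by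
      refine Integrable.const_mul ?_ _
      have h := intervalIntegral.intervalIntegrable_rpow' (a := 0) (b := 1)
        (show (-1:ℝ) < p * γ - 1 - β by linarith)
      rwa [intervalIntegrable_iff_integrableOn_Ioc_of_le zero_le_one] at h
    refine Integrable.mono' hgb (aesm.mono_set Ioc_subset_Ioi_self) ?_
    filter_upwards [ae_restrict_mem measurableSet_Ioc] with s hs
    have hs0 : (0:ℝ) < s := hs.1
    have hT : (0:ℝ) ≤ s ^ p := (Real.rpow_pos_of_pos hs0 p).le
    have hnn : 0 ≤ Phi γ (s ^ p) * s ^ (-1 - β) :=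
      mul_nonneg (Phi_nonneg hT) (Real.rpow_nonneg hs0.le _)
    rw [Real.norm_of_nonneg hnn]
    calc Phi γ (s ^ p) * s ^ (-1 - β) ≤ ((s ^ p) ^ γ / γ) * s ^ (-1 - β) :=
          mul_le_mul_of_nonneg_right (Phi_le_rpow hγ hT) (Real.rpow_nonneg hs0.le _)
      _ = γ⁻¹ * s ^ (p * γ - 1 - β) := by
          rw [← Real.rpow_mul hs0.le, div_eq_inv_mul, mul_assoc, ← Real.rpow_add hs0]
          congr 2
          ring
  have hIoi : IntegrableOn (fun s : ℝ => Phi γ (s ^ p) * s ^ (-1 - β)) (Ioi 1) := by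
    have hgb : IntegrableOn (fun s : ℝ => Real.Gamma γ * s ^ (-1 - β)) (Ioi (1:ℝ)) :=
      (integrableOn_Ioi_rpow_of_lt (show -1 - β < -1 by linarith) one_pos).const_mul _
    refine Integrable.mono' hgb (aesm.mono_set (Ioi_subset_Ioi zero_le_one)) ?_
    filter_upwards [ae_restrict_mem measurableSet_Ioi] with s hs
    have hs0 : (0:ℝ) < s := lt_trans one_pos hs
    have hT : (0:ℝ) ≤ s ^ p := (Real.rpow_pos_of_pos hs0 p).le
    have hnn : 0 ≤ Phi γ (s ^ p) * s ^ (-1 - β) :=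
      mul_nonneg (Phi_nonneg hT) (Real.rpow_nonneg hs0.le _)
    rw [Real.norm_of_nonneg hnn]
    exact mul_le_mul_of_nonneg_right (Phi_le_Gamma hγ hT) (Real.rpow_nonneg hs0.le _)
  have := hIoc.union hIoi
  rwa [Ioc_union_Ioi_eq_Ioi zero_le_one] at this


lemma I_value (hγ : 0 < γ) (hp : 0 < p) (hβpos : 0 < β) (hβ : β < p * γ) :
    ∫ s in Ioi (0:ℝ), Phi γ (s ^ p) * s ^ (-1 - β) =
      Real.Gamma (γ - β / p) / β := by
  set F : ℝ → ℝ := fun s => -β⁻¹ * (Phi γ (s ^ p) * s ^ (-β)) with hF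
  set f' : ℝ → ℝ := fun s =>
    Phi γ (s ^ p) * s ^ (-1 - β) - (p / β) * (s ^ (p * γ - β - 1) * rexp (-(s ^ p))) with hf'
  have hF0 : F 0 = 0 := by
    simp [hF, Real.zero_rpow hp.ne', Phi_zero, Real.zero_rpow (neg_ne_zero.mpr hβpos.ne')]
  have hderiv : ∀ s ∈ Ioi (0:ℝ), HasDerivAt F (f' s) s := by
    intro s hs
    have hs0 : (0:ℝ) < s := hs
    have hps : (0:ℝ) < s ^ p := Real.rpow_pos_of_pos hs0 p
    have hA : HasDerivAt (fun s : ℝ => Phi γ (s ^ p))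
        ((s ^ p) ^ (γ - 1) * rexp (-(s ^ p)) * (p * s ^ (p - 1))) s :=
      HasDerivAt.comp (x := s) (Phi_hasDerivAt hγ hps)
        (Real.hasDerivAt_rpow_const (Or.inl hs0.ne'))
    have hB : HasDerivAt (fun s : ℝ => s ^ (-β)) (-β * s ^ (-β - 1)) s :=
      Real.hasDerivAt_rpow_const (Or.inl hs0.ne')
    have hAB := (hA.mul hB).const_mul (-β⁻¹)
    convert hAB using 1
    · rfl
    · rfl
    · rfl
    have e1 : (s ^ p) ^ (γ - 1) = s ^ (p * (γ - 1)) := (Real.rpow_mul hs0.le _ _).symm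
    have e2 : s ^ (p * γ - β - 1) = s ^ (p * (γ - 1)) * (s ^ (p - 1) * s ^ (-β)) := by
      rw [← Real.rpow_add hs0, ← Real.rpow_add hs0]
      congr 1
      ring
    have e3 : s ^ (-1 - β) = s ^ (-β - 1) := by rw [show (-1:ℝ) - β = -β - 1 from by ring]
    rw [hf']
    simp only [e1, e2, e3]
    field_simp
    ring
  have hFt : Tendsto F atTop (nhds 0) := by
    have h1 : Tendsto (fun s : ℝ => Phi γ (s ^ p)) atTop (nhds (Real.Gamma γ)) :=
      (Phi_tendsto hγ).comp (tendsto_rpow_atTop hp)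
    have h2 : Tendsto (fun s : ℝ => s ^ (-β)) atTop (nhds 0) := tendsto_rpow_neg_atTop hβpos
    have := (h1.mul h2).const_mul (-β⁻¹)
    simpa only [mul_zero] using this
  have hFc : ContinuousWithinAt F (Ici 0) 0 := by
    rw [ContinuousWithinAt, hF0]
    have hq : (0:ℝ) < p * γ - β := by linarith
    refine squeeze_zero_norm' (a := fun s : ℝ => β⁻¹ * γ⁻¹ * s ^ (p * γ - β)) ?_ ?_
    · refine Filter.eventually_of_mem self_mem_nhdsWithin fun s (hs : s ∈ Ici (0:ℝ)) => ?_
      rcases eq_or_lt_of_le hs.out with h | hs0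
      · simp [hF, ← h, Real.zero_rpow hp.ne', Phi_zero,
          Real.zero_rpow (neg_ne_zero.mpr hβpos.ne'), Real.rpow_nonneg]
        positivity
      · have hps : (0:ℝ) < s ^ p := Real.rpow_pos_of_pos hs0 p
        have hnn : 0 ≤ Phi γ (s ^ p) * s ^ (-β) :=
          mul_nonneg (Phi_nonneg hps.le) (Real.rpow_nonneg hs0.le _)
        have : ‖F s‖ = β⁻¹ * (Phi γ (s ^ p) * s ^ (-β)) := by
          rw [hF]
          simp only [norm_mul, norm_neg, norm_inv, Real.norm_of_nonneg hβpos.le,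
            Real.norm_of_nonneg hnn]
        rw [this]
        have hle : Phi γ (s ^ p) * s ^ (-β) ≤ (s ^ p) ^ γ / γ * s ^ (-β) :=
          mul_le_mul_of_nonneg_right (Phi_le_rpow hγ hps.le) (Real.rpow_nonneg hs0.le _)
        have heq : (s ^ p) ^ γ / γ * s ^ (-β) = γ⁻¹ * s ^ (p * γ - β) := by
          rw [← Real.rpow_mul hs0.le, div_eq_inv_mul, mul_assoc, ← Real.rpow_add hs0,
            ← sub_eq_add_neg]
        calc β⁻¹ * (Phi γ (s ^ p) * s ^ (-β)) ≤ β⁻¹ * (γ⁻¹ * s ^ (p * γ - β)) := by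
              rw [← heq]
              exact mul_le_mul_of_nonneg_left hle (inv_nonneg.mpr hβpos.le)
          _ = β⁻¹ * γ⁻¹ * s ^ (p * γ - β) := by ring
    · have hc : Tendsto (fun s : ℝ => s ^ (p * γ - β)) (nhds 0) (nhds ((0:ℝ) ^ (p * γ - β))) :=
        (Real.continuousAt_rpow_const 0 _ (Or.inr hq.le)).tendsto
      rw [Real.zero_rpow hq.ne'] at hc
      have := Tendsto.const_mul (β⁻¹ * γ⁻¹) (hc.mono_left (nhdsWithin_le_nhds (s := Ici (0:ℝ))))
      simpa using this
  have f'int : IntegrableOn f' (Ioi 0) :=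
    (f1_integrableOn hγ hp hβpos hβ).sub ((h2_integrableOn hγ hp hβ).const_mul (p / β))
  have key := integral_Ioi_of_hasDerivAt_of_tendsto hFc hderiv f'int hFt
  rw [hF0, sub_zero] at key
  have hsplit := integral_sub (f1_integrableOn hγ hp hβpos hβ)
    ((h2_integrableOn hγ hp hβ).const_mul (p / β))
  rw [hf'] at key
  rw [key] at hsplit
  have h2v := h2_value hγ hp hβpos hβ
  rw [integral_const_mul, h2v] at hsplit
  have : ∫ s in Ioi (0:ℝ), Phi γ (s ^ p) * s ^ (-1 - β) = p / β * (1 / p * Real.Gamma (γ - β / p)) := by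
    linarith [hsplit]
  rw [this]
  field_simp


lemma J_tendsto (hγ : 0 < γ) (hp : 0 < p) (hβpos : 0 < β) (hβ : β < p * γ) :
    Tendsto (fun η : ℝ =>
        ∫ s in Ioi (0:ℝ), Phi γ (s ^ p) * rexp (-((η - 1)⁻¹ * s ^ p)) * s ^ (-1 - β))
      atTop (nhds (Real.Gamma (γ - β / p) / β)) := by
  have hm : Measurable (fun y : ℝ => y ^ (γ - 1) * rexp (-y)) := by fun_prop
  have key := tendsto_integral_filter_of_dominated_convergence
    (μ := volume.restrict (Ioi (0:ℝ))) (l := atTop)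
    (F := fun (η : ℝ) (s : ℝ) => Phi γ (s ^ p) * rexp (-((η - 1)⁻¹ * s ^ p)) * s ^ (-1 - β))
    (f := fun s : ℝ => Phi γ (s ^ p) * s ^ (-1 - β))
    (bound := fun s : ℝ => Phi γ (s ^ p) * s ^ (-1 - β)) ?_ ?_ ?_ ?_
  · rwa [I_value hγ hp hβpos hβ] at key
  · refine Filter.Eventually.of_forall fun η => ContinuousOn.aestronglyMeasurable ?_ measurableSet_Ioi
    intro s hs
    have hs0 : (0:ℝ) < s := hs
    have hps : (0:ℝ) < s ^ p := Real.rpow_pos_of_pos hs0 p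
    have hPhi : ContinuousAt (Phi γ) (s ^ p) := by
      refine (intervalIntegral.integral_hasDerivAt_right ?_
        hm.stronglyMeasurable.stronglyMeasurableAtFilter ?_).continuousAt
      · rw [intervalIntegrable_iff_integrableOn_Ioc_of_le hps.le]
        exact (g_integrableOn hγ).mono_set Ioc_subset_Ioi_self
      · exact (Real.continuousAt_rpow_const _ (γ - 1) (Or.inl hps.ne')).mul
          (Real.continuous_exp.comp continuous_neg).continuousAt
    have hrp : ContinuousAt (fun s : ℝ => s ^ p) s :=
      Real.continuousAt_rpow_const s p (Or.inl hs0.ne')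
    have hc1 : ContinuousAt (fun s : ℝ => Phi γ (s ^ p)) s :=
      ContinuousAt.comp (g := Phi γ) (x := s) hPhi hrp
    have hc2 : ContinuousAt (fun s : ℝ => rexp (-((η - 1)⁻¹ * s ^ p))) s :=
      ContinuousAt.comp (g := rexp) (x := s) Real.continuous_exp.continuousAt
        ((hrp.const_mul _).neg)
    exact ((hc1.mul hc2).mul
      (Real.continuousAt_rpow_const s (-1 - β) (Or.inl hs0.ne'))).continuousWithinAt
  · filter_upwards [eventually_ge_atTop (1:ℝ)] with η hη
    filter_upwards [ae_restrict_mem measurableSet_Ioi] with s hs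
    have hs0 : (0:ℝ) < s := hs
    have hps : (0:ℝ) < s ^ p := Real.rpow_pos_of_pos hs0 p
    have hexp1 : rexp (-((η - 1)⁻¹ * s ^ p)) ≤ 1 := by
      have h0 : 0 ≤ (η - 1)⁻¹ * s ^ p :=
        mul_nonneg (inv_nonneg.mpr (by linarith)) hps.le
      have := Real.exp_le_exp.mpr (neg_nonpos.mpr h0)
      rwa [Real.exp_zero] at this
    have hnn : 0 ≤ Phi γ (s ^ p) * rexp (-((η - 1)⁻¹ * s ^ p)) * s ^ (-1 - β) :=
      mul_nonneg (mul_nonneg (Phi_nonneg hps.le) (Real.exp_pos _).le) (Real.rpow_nonneg hs0.le _)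
    rw [Real.norm_of_nonneg hnn]
    calc Phi γ (s ^ p) * rexp (-((η - 1)⁻¹ * s ^ p)) * s ^ (-1 - β)
        ≤ Phi γ (s ^ p) * 1 * s ^ (-1 - β) := by
          refine mul_le_mul_of_nonneg_right ?_ (Real.rpow_nonneg hs0.le _)
          exact mul_le_mul_of_nonneg_left hexp1 (Phi_nonneg hps.le)
      _ = Phi γ (s ^ p) * s ^ (-1 - β) := by ring
  · exact f1_integrableOn hγ hp hβpos hβ
  · filter_upwards [ae_restrict_mem measurableSet_Ioi] with s hs
    have h1 : Tendsto (fun η : ℝ => (η - 1)⁻¹) atTop (nhds 0) := by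
      have : Tendsto (fun η : ℝ => η - 1) atTop atTop :=
        tendsto_atTop_add_const_right atTop (-1) tendsto_id
      exact tendsto_inv_atTop_zero.comp this
    have h2 : Tendsto (fun η : ℝ => -((η - 1)⁻¹ * s ^ p)) atTop (nhds 0) := by
      simpa using (h1.mul_const (s ^ p)).neg
    have h3 : Tendsto (fun η : ℝ => rexp (-((η - 1)⁻¹ * s ^ p))) atTop (nhds 1) := by
      have := (Real.continuous_exp.continuousAt (x := (0:ℝ))).tendsto.comp h2
      simpa [Function.comp_def] using this
    have := (h3.const_mul (Phi γ (s ^ p))).mul_const (s ^ (-1 - β))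
    simpa using this

end IncGammaAux


open IncGammaAux in
/-- For β > 0, γ > 0, p > 0 with pγ > β, the normalizing constant
K_{β,γ,p,η} = ∫_0^∞ G_{γ,(η−1)}(u^p) e^{−u^p} u^{−1−β} du satisfies
K_{β,γ,p,η} / η^{β/p} → Γ(γ − β/p)/(β Γ(γ)) as η → ∞. -/
theorem incomplete_gamma_normalizing_constant_asymp_eta_to_infty_pos_beta
    (β γ p : ℝ) (hβpos : 0 < β) (hγ : 0 < γ) (hp : 0 < p) (hβ : β < p * γ) :
    Tendsto (fun η : ℝ =>
        (∫ u in Set.Ioi (0:ℝ),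
            (((η - 1) ^ γ / Real.Gamma γ) *
                ∫ x in (0:ℝ)..(u ^ p), x ^ (γ - 1) * Real.exp (-(x * (η - 1)))) *
              Real.exp (-(u ^ p)) * u ^ (-1 - β)) / η ^ (β / p))
      atTop
      (nhds (Real.Gamma (γ - β / p) / (β * Real.Gamma γ))) := by
  have hΓγ : 0 < Real.Gamma γ := Real.Gamma_pos_of_pos hγ
  have T1 : Tendsto (fun η : ℝ => ((η - 1) / η) ^ (β / p)) atTop (nhds 1) := by
    have h1 : Tendsto (fun η : ℝ => 1 - η⁻¹) atTop (nhds (1:ℝ)) := by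
      have := (tendsto_const_nhds (x := (1:ℝ)) (f := atTop)).sub tendsto_inv_atTop_zero
      simpa using this
    have h0 : Tendsto (fun η : ℝ => (η - 1) / η) atTop (nhds 1) := by
      refine h1.congr' ?_
      filter_upwards [eventually_gt_atTop (0:ℝ)] with η hη
      field_simp
    have := ((Real.continuousAt_rpow_const 1 (β / p) (Or.inl one_ne_zero)).tendsto).comp h0
    simpa [Real.one_rpow, Function.comp_def] using this
  have T2 : Tendsto (fun η : ℝ => (Real.Gamma γ)⁻¹ *
      ∫ s in Ioi (0:ℝ), Phi γ (s ^ p) * rexp (-((η - 1)⁻¹ * s ^ p)) * s ^ (-1 - β)) atTop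
      (nhds ((Real.Gamma γ)⁻¹ * (Real.Gamma (γ - β / p) / β))) :=
    (J_tendsto hγ hp hβpos hβ).const_mul _
  have T := T1.mul T2
  rw [one_mul] at T
  have hval : (Real.Gamma γ)⁻¹ * (Real.Gamma (γ - β / p) / β) =
      Real.Gamma (γ - β / p) / (β * Real.Gamma γ) := by
    have h1 : β ≠ 0 := hβpos.ne'
    have h2 : Real.Gamma γ ≠ 0 := hΓγ.ne'
    field_simp
  rw [hval] at T
  refine Filter.Tendsto.congr' ?_ T
  filter_upwards [eventually_gt_atTop (1:ℝ)] with η hη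
  have hη0 : (0:ℝ) < η := lt_trans one_pos hη
  set b : ℝ := η - 1 with hbdef
  have hb : (0:ℝ) < b := by simp [hbdef]; linarith
  -- Step A : rewrite the inner interval integral
  have step1 : ∀ u ∈ Ioi (0:ℝ),
      ((b ^ γ / Real.Gamma γ) * ∫ x in (0:ℝ)..(u ^ p), x ^ (γ - 1) * rexp (-(x * b))) *
          rexp (-(u ^ p)) * u ^ (-1 - β) =
        (Real.Gamma γ)⁻¹ * (Phi γ (b * u ^ p) * rexp (-(u ^ p)) * u ^ (-1 - β)) := by
    intro u hu
    have hu0 : (0:ℝ) < u := hu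
    have hT : (0:ℝ) ≤ u ^ p := (Real.rpow_pos_of_pos hu0 p).le
    have inner : ∫ x in (0:ℝ)..(u ^ p), x ^ (γ - 1) * rexp (-(x * b)) =
        b ^ (-γ) * Phi γ (b * u ^ p) := by
      have e : EqOn (fun x : ℝ => x ^ (γ - 1) * rexp (-(x * b)))
          (fun x : ℝ => b ^ (1 - γ) * ((b * x) ^ (γ - 1) * rexp (-(b * x))))
          (uIcc (0:ℝ) (u ^ p)) := by
        intro x hx
        rw [uIcc_of_le hT] at hx
        have hx0 : (0:ℝ) ≤ x := hx.1
        simp only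
        rw [Real.mul_rpow hb.le hx0, mul_comm x b]
        rw [show b ^ (1 - γ) * (b ^ (γ - 1) * x ^ (γ - 1) * rexp (-(b * x))) =
          (b ^ (1 - γ) * b ^ (γ - 1)) * (x ^ (γ - 1) * rexp (-(b * x))) from by ring]
        rw [← Real.rpow_add hb]
        norm_num
      rw [intervalIntegral.integral_congr e, intervalIntegral.integral_const_mul,
        intervalIntegral.integral_comp_mul_left (fun y : ℝ => y ^ (γ - 1) * rexp (-y)) hb.ne']
      rw [mul_zero, smul_eq_mul, ← mul_assoc]
      rw [show b⁻¹ = b ^ (-1 : ℝ) from (Real.rpow_neg_one b).symm, ← Real.rpow_add hb]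
      rw [show (1:ℝ) - γ + -1 = -γ from by ring]
      rfl
    rw [inner]
    have hbb : b ^ γ * b ^ (-γ) = 1 := by
      rw [← Real.rpow_add hb]
      simp
    rw [show (b ^ γ / Real.Gamma γ) * (b ^ (-γ) * Phi γ (b * u ^ p)) =
        (b ^ γ * b ^ (-γ)) * ((Real.Gamma γ)⁻¹ * Phi γ (b * u ^ p)) from by ring, hbb, one_mul]
    ring
  have hK1 : (∫ u in Set.Ioi (0:ℝ),
        ((b ^ γ / Real.Gamma γ) *
            ∫ x in (0:ℝ)..(u ^ p), x ^ (γ - 1) * rexp (-(x * b))) *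
          rexp (-(u ^ p)) * u ^ (-1 - β)) =
      (Real.Gamma γ)⁻¹ *
        ∫ u in Ioi (0:ℝ), Phi γ (b * u ^ p) * rexp (-(u ^ p)) * u ^ (-1 - β) := by
    rw [setIntegral_congr_fun measurableSet_Ioi step1, integral_const_mul]
  -- Step B : substitution u = b^(-(1/p)) * s
  set d : ℝ := b ^ (-(1/p)) with hddef
  have hd : (0:ℝ) < d := Real.rpow_pos_of_pos hb _
  have hdp : d ^ p = b⁻¹ := by
    rw [hddef, ← Real.rpow_mul hb.le, show -(1/p) * p = (-1:ℝ) from by field_simp,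
      Real.rpow_neg_one]
  have hsub := integral_comp_mul_left_Ioi
    (fun u : ℝ => Phi γ (b * u ^ p) * rexp (-(u ^ p)) * u ^ (-1 - β)) 0 hd
  rw [mul_zero] at hsub
  have hGu : (∫ u in Ioi (0:ℝ), Phi γ (b * u ^ p) * rexp (-(u ^ p)) * u ^ (-1 - β)) =
      d * ∫ s in Ioi (0:ℝ),
        Phi γ (b * (d * s) ^ p) * rexp (-((d * s) ^ p)) * (d * s) ^ (-1 - β) := by
    rw [hsub, smul_eq_mul, ← mul_assoc, mul_inv_cancel₀ hd.ne', one_mul]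
  have step2 : ∀ s ∈ Ioi (0:ℝ),
      Phi γ (b * (d * s) ^ p) * rexp (-((d * s) ^ p)) * (d * s) ^ (-1 - β) =
        d ^ (-1 - β) * (Phi γ (s ^ p) * rexp (-(b⁻¹ * s ^ p)) * s ^ (-1 - β)) := by
    intro s hs
    have hs0 : (0:ℝ) < s := hs
    have e1 : (d * s) ^ p = b⁻¹ * s ^ p := by
      rw [Real.mul_rpow hd.le hs0.le, hdp]
    have e2 : b * (d * s) ^ p = s ^ p := by
      rw [e1, ← mul_assoc, mul_inv_cancel₀ hb.ne', one_mul]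
    rw [e2, e1, Real.mul_rpow hd.le hs0.le]
    ring
  rw [setIntegral_congr_fun measurableSet_Ioi step2, integral_const_mul] at hGu
  have hdb : d * d ^ (-1 - β) = b ^ (β / p) := by
    nth_rewrite 1 [show d = d ^ (1:ℝ) from (Real.rpow_one d).symm]
    rw [← Real.rpow_add hd, hddef, ← Real.rpow_mul hb.le]
    congr 1
    field_simp
    ring
  -- final computation
  have hηp : η ^ (β / p) ≠ 0 := (Real.rpow_pos_of_pos hη0 _).ne'
  rw [hK1, hGu, ← mul_assoc d, hdb, Real.div_rpow hb.le hη0.le]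
  field_simp
end

section
/- Let γ > 0 and p > 0. Then K_{0,γ,p,η} is asymptotically equivalent to p^{−1} log(η) as η → ∞; that is, the limit as η → ∞ of K_{0,γ,p,η} / log(η) equals 1/p. -/
open MeasureTheory Filter Set intervalIntegral

namespace IGNCaux

noncomputable def Q (γ w : ℝ) : ℝ :=
  (∫ x in (0:ℝ)..w, x ^ (γ - 1) * Real.exp (-x)) / Real.Gamma γ

lemma intInt1 {γ : ℝ} (hγ : 0 < γ) (a b : ℝ) :
    IntervalIntegrable (fun x : ℝ => x ^ (γ - 1) * Real.exp (-x)) volume a b :=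
  (intervalIntegral.intervalIntegrable_rpow' (by linarith)).mul_continuousOn
    ((Real.continuous_exp.comp continuous_neg).continuousOn)

lemma intIntζ {γ : ℝ} (hγ : 0 < γ) (ζ a b : ℝ) :
    IntervalIntegrable (fun x : ℝ => x ^ (γ - 1) * Real.exp (-(x * ζ))) volume a b :=
  (intervalIntegral.intervalIntegrable_rpow' (by linarith)).mul_continuousOn
    (Continuous.continuousOn (by continuity))

lemma QInt {γ : ℝ} (hγ : 0 < γ) :
    IntegrableOn (fun x : ℝ => x ^ (γ - 1) * Real.exp (-x)) (Ioi 0) :=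
  (Real.GammaIntegral_convergent hγ).congr_fun (fun x _ => mul_comm _ _) measurableSet_Ioi

lemma Gamma_int {γ : ℝ} (hγ : 0 < γ) :
    ∫ x in Ioi (0:ℝ), x ^ (γ - 1) * Real.exp (-x) = Real.Gamma γ := by
  rw [Real.Gamma_eq_integral hγ]
  exact setIntegral_congr_fun measurableSet_Ioi fun x _ => mul_comm _ _

lemma Q_nonneg {γ : ℝ} (hγ : 0 < γ) {w : ℝ} (hw : 0 ≤ w) : 0 ≤ Q γ w := by
  apply div_nonneg _ (Real.Gamma_pos_of_pos hγ).le
  refine intervalIntegral.integral_nonneg hw fun x hx => ?_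
  exact mul_nonneg (Real.rpow_nonneg hx.1 _) (Real.exp_pos _).le

lemma Q_mono {γ : ℝ} (hγ : 0 < γ) {w w' : ℝ} (h0 : 0 ≤ w) (h : w ≤ w') :
    Q γ w ≤ Q γ w' := by
  have hΓ := Real.Gamma_pos_of_pos hγ
  have hadd := intervalIntegral.integral_add_adjacent_intervals
    (intInt1 hγ 0 w) (intInt1 hγ w w')
  have h2 : 0 ≤ ∫ x in w..w', x ^ (γ - 1) * Real.exp (-x) :=
    intervalIntegral.integral_nonneg h fun x hx =>
      mul_nonneg (Real.rpow_nonneg (h0.trans hx.1) _) (Real.exp_pos _).le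
  unfold Q
  rw [← hadd]
  gcongr
  linarith

lemma Q_le_one {γ : ℝ} (hγ : 0 < γ) {w : ℝ} (hw : 0 ≤ w) : Q γ w ≤ 1 := by
  have hΓ := Real.Gamma_pos_of_pos hγ
  rw [Q, div_le_one hΓ, intervalIntegral.integral_of_le hw, ← Gamma_int hγ]
  apply setIntegral_mono_set (QInt hγ) ?_ ?_
  · filter_upwards [ae_restrict_mem measurableSet_Ioi] with x hx using
      mul_nonneg (Real.rpow_nonneg (le_of_lt hx) _) (Real.exp_pos _).le
  · exact HasSubset.Subset.eventuallyLE Ioc_subset_Ioi_self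

lemma Q_le_pow {γ : ℝ} (hγ : 0 < γ) {w : ℝ} (hw : 0 ≤ w) :
    Q γ w ≤ w ^ γ / (γ * Real.Gamma γ) := by
  have hΓ := Real.Gamma_pos_of_pos hγ
  have h1 : (∫ x in (0:ℝ)..w, x ^ (γ - 1) * Real.exp (-x)) ≤ ∫ x in (0:ℝ)..w, x ^ (γ - 1) := by
    apply intervalIntegral.integral_mono_on hw (intInt1 hγ 0 w)
      (intervalIntegral.intervalIntegrable_rpow' (by linarith))
    intro x hx
    exact mul_le_of_le_one_right (Real.rpow_nonneg hx.1 _)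
      (Real.exp_le_one_iff.mpr (neg_nonpos.mpr hx.1))
  have h2 : (∫ x in (0:ℝ)..w, x ^ (γ - 1)) = w ^ γ / γ := by
    rw [integral_rpow (Or.inl (by linarith))]
    rw [Real.zero_rpow (by linarith : γ - 1 + 1 ≠ 0), sub_zero, sub_add_cancel]
  calc Q γ w ≤ (w ^ γ / γ) / Real.Gamma γ := by
        rw [Q]; gcongr; rw [← h2]; exact h1
    _ = w ^ γ / (γ * Real.Gamma γ) := by rw [div_div]

lemma Q_tendsto {γ : ℝ} (hγ : 0 < γ) : Tendsto (Q γ) atTop (nhds 1) := by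
  have hΓ := Real.Gamma_pos_of_pos hγ
  have h := intervalIntegral_tendsto_integral_Ioi 0 (QInt hγ) tendsto_id
  rw [Gamma_int hγ] at h
  have h2 := h.div_const (Real.Gamma γ)
  rw [div_self hΓ.ne'] at h2
  exact h2

lemma scaling {γ : ℝ} (hγ : 0 < γ) {ζ w : ℝ} (hζ : 0 < ζ) (hw : 0 ≤ w) :
    ζ ^ γ / Real.Gamma γ * ∫ x in (0:ℝ)..w, x ^ (γ - 1) * Real.exp (-(x * ζ)) = Q γ (ζ * w) := by
  have hΓ := Real.Gamma_pos_of_pos hγ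
  have h1 : (∫ x in (0:ℝ)..w, x ^ (γ - 1) * Real.exp (-(x * ζ)))
      = ∫ x in (0:ℝ)..w, ζ ^ (-(γ - 1)) * ((fun y : ℝ => y ^ (γ - 1) * Real.exp (-y)) (ζ * x)) := by
    apply intervalIntegral.integral_congr
    intro x hx
    rw [uIcc_of_le hw] at hx
    simp only
    rw [Real.mul_rpow hζ.le hx.1]
    have h2 : ζ ^ (-(γ - 1)) * ζ ^ (γ - 1) = 1 := by
      rw [← Real.rpow_add hζ]; simp
    calc x ^ (γ - 1) * Real.exp (-(x * ζ))
        = (ζ ^ (-(γ - 1)) * ζ ^ (γ - 1)) * (x ^ (γ - 1) * Real.exp (-(ζ * x))) := by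
          rw [h2, one_mul, mul_comm x ζ]
      _ = ζ ^ (-(γ - 1)) * (ζ ^ (γ - 1) * x ^ (γ - 1) * Real.exp (-(ζ * x))) := by ring
  rw [h1, intervalIntegral.integral_const_mul,
    intervalIntegral.integral_comp_mul_left (fun y : ℝ => y ^ (γ - 1) * Real.exp (-y)) hζ.ne',
    mul_zero, smul_eq_mul, Q]
  have h3 : ζ ^ γ * (ζ ^ (-(γ - 1)) * ζ⁻¹) = 1 := by
    calc ζ ^ γ * (ζ ^ (-(γ - 1)) * ζ⁻¹) = ζ ^ (γ + (-(γ - 1) + -1)) := by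
          rw [Real.rpow_add hζ, Real.rpow_add hζ, Real.rpow_neg_one]
      _ = 1 := by rw [show γ + (-(γ - 1) + -1) = 0 by ring, Real.rpow_zero]
  rw [div_mul_eq_mul_div]
  congr 1
  linear_combination (∫ x in (0:ℝ)..ζ * w, x ^ (γ - 1) * Real.exp (-x)) * h3

lemma expInt {p : ℝ} (hp : 0 < p) :
    IntegrableOn (fun u : ℝ => Real.exp (-(u ^ p))) (Ioi 0) := by
  have h0 : IntegrableOn (fun t : ℝ => p⁻¹ * (Real.exp (-t) * t ^ (p⁻¹ - 1))) (Ioi 0) :=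
    (Real.GammaIntegral_convergent (by positivity)).const_mul _
  have h1 := (integrableOn_Ioi_comp_rpow_iff'
    (fun t : ℝ => p⁻¹ * (Real.exp (-t) * t ^ (p⁻¹ - 1))) hp.ne').mpr h0
  have h2 : IntegrableOn (fun x : ℝ =>
      p * (x ^ (p - 1) • (p⁻¹ * (Real.exp (-(x ^ p)) * (x ^ p) ^ (p⁻¹ - 1))))) (Ioi 0) :=
    h1.const_mul p
  apply h2.congr_fun ?_ measurableSet_Ioi
  intro x hx
  have hx0 : (0:ℝ) < x := hx
  have e1 : (x ^ p) ^ (p⁻¹ - 1) = x ^ (p * (p⁻¹ - 1)) := (Real.rpow_mul hx0.le _ _).symm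
  have e2 : x ^ (p - 1) * x ^ (p * (p⁻¹ - 1)) = 1 := by
    rw [← Real.rpow_add hx0, show p - 1 + p * (p⁻¹ - 1) = 0 by field_simp; ring, Real.rpow_zero]
  simp only [smul_eq_mul, e1]
  calc p * (x ^ (p - 1) * (p⁻¹ * (Real.exp (-(x ^ p)) * x ^ (p * (p⁻¹ - 1)))))
      = (p * p⁻¹) * ((x ^ (p - 1) * x ^ (p * (p⁻¹ - 1))) * Real.exp (-(x ^ p))) := by ring
    _ = Real.exp (-(x ^ p)) := by rw [mul_inv_cancel₀ hp.ne', e2, one_mul, one_mul]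

noncomputable def gfun (γ p ζ : ℝ) : ℝ → ℝ := fun u => Q γ (ζ * u ^ p) * Real.exp (-(u ^ p)) * u⁻¹

lemma g_contOn {γ p ζ : ℝ} (hγ : 0 < γ) (hp : 0 < p) :
    ContinuousOn (gfun γ p ζ) (Ioi 0) := by
  have hQ : Continuous (Q γ) :=
    (intervalIntegral.continuous_primitive (intInt1 hγ) 0).div_const _
  have hpow : ContinuousOn (fun u : ℝ => u ^ p) (Ioi 0) := fun x hx =>
    (Real.continuousAt_rpow_const x p (Or.inl (ne_of_gt hx))).continuousWithinAt
  exact ((hQ.comp_continuousOn (continuousOn_const.mul hpow)).mul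
    ((Real.continuous_exp.comp continuous_neg).comp_continuousOn hpow)).mul
    (continuousOn_inv₀.mono fun x hx => ne_of_gt hx)

lemma g_nonneg {γ p ζ : ℝ} (hγ : 0 < γ) (hζ : 0 ≤ ζ) {u : ℝ} (hu : 0 < u) :
    0 ≤ gfun γ p ζ u :=
  mul_nonneg (mul_nonneg (Q_nonneg hγ (mul_nonneg hζ (Real.rpow_nonneg hu.le p)))
    (Real.exp_pos _).le) (inv_nonneg.mpr hu.le)

lemma g_le_pow {γ p ζ : ℝ} (hγ : 0 < γ) (hp : 0 < p) (hζ : 0 < ζ) {u : ℝ} (hu : 0 < u) :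
    gfun γ p ζ u ≤ ζ ^ γ / (γ * Real.Gamma γ) * u ^ (p * γ - 1) := by
  have hΓ := Real.Gamma_pos_of_pos hγ
  have h1 : Q γ (ζ * u ^ p) ≤ (ζ * u ^ p) ^ γ / (γ * Real.Gamma γ) :=
    Q_le_pow hγ (by positivity)
  have h2 : Real.exp (-(u ^ p)) ≤ 1 := Real.exp_le_one_iff.mpr (neg_nonpos.mpr (Real.rpow_nonneg hu.le p))
  have h3 : (ζ * u ^ p) ^ γ = ζ ^ γ * u ^ (p * γ) := by
    rw [Real.mul_rpow hζ.le (by positivity), ← Real.rpow_mul hu.le]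
  calc gfun γ p ζ u ≤ ((ζ * u ^ p) ^ γ / (γ * Real.Gamma γ)) * 1 * u⁻¹ := by
        unfold gfun
        exact mul_le_mul_of_nonneg_right
          (mul_le_mul h1 h2 (Real.exp_pos _).le (by positivity)) (inv_nonneg.mpr hu.le)
    _ = ζ ^ γ / (γ * Real.Gamma γ) * u ^ (p * γ - 1) := by
        rw [mul_one, h3, Real.rpow_sub hu, Real.rpow_one]
        ring

lemma g_le_exp_inv {γ p ζ : ℝ} (hγ : 0 < γ) (hζ : 0 ≤ ζ) {u : ℝ} (hu : 0 < u) :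
    gfun γ p ζ u ≤ Real.exp (-(u ^ p)) * u⁻¹ := by
  unfold gfun
  exact mul_le_mul_of_nonneg_right
    (mul_le_of_le_one_left (Real.exp_pos _).le
      (Q_le_one hγ (mul_nonneg hζ (Real.rpow_nonneg hu.le p))))
    (inv_nonneg.mpr hu.le)

lemma g_int {γ p ζ : ℝ} (hγ : 0 < γ) (hp : 0 < p) (hζ : 0 < ζ) :
    IntegrableOn (gfun γ p ζ) (Ioi 0) := by
  have hΓ := Real.Gamma_pos_of_pos hγ
  rw [← Ioc_union_Ioi_eq_Ioi (zero_le_one (α := ℝ)), integrableOn_union]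
  constructor
  · have hbound : IntegrableOn
        (fun u : ℝ => ζ ^ γ / (γ * Real.Gamma γ) * u ^ (p * γ - 1)) (Ioc 0 1) := by
      have h := intervalIntegral.intervalIntegrable_rpow' (r := p * γ - 1)
        (by nlinarith) (a := 0) (b := 1)
      rw [intervalIntegrable_iff_integrableOn_Ioc_of_le zero_le_one] at h
      exact h.const_mul _
    refine Integrable.mono' hbound
      (((g_contOn hγ hp).mono Ioc_subset_Ioi_self).aestronglyMeasurable measurableSet_Ioc) ?_
    filter_upwards [ae_restrict_mem measurableSet_Ioc] with u hu
    rw [Real.norm_eq_abs, abs_of_nonneg (g_nonneg hγ hζ.le hu.1)]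
    exact g_le_pow hγ hp hζ hu.1
  · refine Integrable.mono' ((expInt hp).mono_set (Ioi_subset_Ioi zero_le_one))
      (((g_contOn hγ hp).mono (Ioi_subset_Ioi zero_le_one)).aestronglyMeasurable
        measurableSet_Ioi) ?_
    filter_upwards [ae_restrict_mem measurableSet_Ioi] with u hu
    have hu0 : (0:ℝ) < u := lt_trans zero_lt_one hu
    rw [Real.norm_eq_abs, abs_of_nonneg (g_nonneg hγ hζ.le hu0)]
    calc gfun γ p ζ u ≤ Real.exp (-(u ^ p)) * u⁻¹ := g_le_exp_inv hγ hζ.le hu0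
      _ ≤ Real.exp (-(u ^ p)) * 1 := by
          exact mul_le_mul_of_nonneg_left (inv_le_one_of_one_le₀ hu.le) (Real.exp_pos _).le
      _ = Real.exp (-(u ^ p)) := mul_one _

lemma UB {γ p : ℝ} (hγ : 0 < γ) (hp : 0 < p) {ζ : ℝ} (hζ : 1 ≤ ζ) :
    ∫ u in Ioi (0:ℝ), gfun γ p ζ u ≤ (1 / p) * Real.log ζ +
      (1 / (p * γ * γ * Real.Gamma γ) + ∫ u in Ioi (0:ℝ), Real.exp (-(u ^ p))) := by
  have hΓ := Real.Gamma_pos_of_pos hγ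
  have hζ0 : (0:ℝ) < ζ := lt_of_lt_of_le one_pos hζ
  set u₀ : ℝ := ζ ^ (-(1 / p)) with hu₀def
  have hu₀pos : 0 < u₀ := Real.rpow_pos_of_pos hζ0 _
  have hu₀le1 : u₀ ≤ 1 :=
    Real.rpow_le_one_of_one_le_of_nonpos hζ (neg_nonpos.mpr (by positivity))
  have hint := g_int hγ hp hζ0
  have hI1 : IntegrableOn (gfun γ p ζ) (Ioc 0 u₀) := hint.mono_set Ioc_subset_Ioi_self
  have hI2 : IntegrableOn (gfun γ p ζ) (Ioc u₀ 1) :=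
    hint.mono_set (fun x hx => hu₀pos.trans hx.1)
  have hI3 : IntegrableOn (gfun γ p ζ) (Ioi 1) := hint.mono_set (Ioi_subset_Ioi zero_le_one)
  have hsplit : ∫ u in Ioi (0:ℝ), gfun γ p ζ u
      = ((∫ u in Ioc 0 u₀, gfun γ p ζ u) + ∫ u in Ioc u₀ 1, gfun γ p ζ u)
        + ∫ u in Ioi 1, gfun γ p ζ u := by
    rw [← Ioc_union_Ioi_eq_Ioi (zero_le_one (α := ℝ)),
      setIntegral_union (Ioc_disjoint_Ioi le_rfl) measurableSet_Ioi
        (hint.mono_set Ioc_subset_Ioi_self) hI3,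
      ← Ioc_union_Ioc_eq_Ioc hu₀pos.le hu₀le1,
      setIntegral_union (Ioc_disjoint_Ioc_of_le le_rfl) measurableSet_Ioc hI1 hI2]
  have hB1 : ∫ u in Ioc 0 u₀, gfun γ p ζ u ≤ 1 / (p * γ * γ * Real.Gamma γ) := by
    have hb : IntegrableOn
        (fun u : ℝ => ζ ^ γ / (γ * Real.Gamma γ) * u ^ (p * γ - 1)) (Ioc 0 u₀) := by
      have h := intervalIntegral.intervalIntegrable_rpow' (r := p * γ - 1)
        (by nlinarith) (a := 0) (b := u₀)
      rw [intervalIntegrable_iff_integrableOn_Ioc_of_le hu₀pos.le] at h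
      exact h.const_mul _
    calc ∫ u in Ioc 0 u₀, gfun γ p ζ u
        ≤ ∫ u in Ioc 0 u₀, ζ ^ γ / (γ * Real.Gamma γ) * u ^ (p * γ - 1) := by
          apply setIntegral_mono_on hI1 hb measurableSet_Ioc
          intro u hu; exact g_le_pow hγ hp hζ0 hu.1
      _ = ζ ^ γ / (γ * Real.Gamma γ) * ∫ u in Ioc 0 u₀, u ^ (p * γ - 1) :=
          MeasureTheory.integral_const_mul _ _
      _ ≤ 1 / (p * γ * γ * Real.Gamma γ) := by
          rw [← intervalIntegral.integral_of_le hu₀pos.le,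
            integral_rpow (Or.inl (by nlinarith)), show p * γ - 1 + 1 = p * γ by ring,
            Real.zero_rpow (by positivity : p * γ ≠ 0), sub_zero]
          have e : u₀ ^ (p * γ) = ζ ^ (-γ) := by
            rw [hu₀def, ← Real.rpow_mul hζ0.le]
            congr 1; field_simp
          have e2 : ζ ^ γ * ζ ^ (-γ) = 1 := by
            rw [← Real.rpow_add hζ0, show γ + -γ = 0 by ring, Real.rpow_zero]
          rw [e, div_mul_div_comm, e2]
          apply le_of_eq; ring
  have hB2 : ∫ u in Ioc u₀ 1, gfun γ p ζ u ≤ (1 / p) * Real.log ζ := by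
    have hb : IntegrableOn (fun u : ℝ => u⁻¹) (Ioc u₀ 1) := by
      have hc : ContinuousOn (fun u : ℝ => u⁻¹) (Icc u₀ 1) :=
        continuousOn_inv₀.mono fun x hx => ne_of_gt (lt_of_lt_of_le hu₀pos hx.1)
      exact (hc.integrableOn_Icc).mono_set Ioc_subset_Icc_self
    calc ∫ u in Ioc u₀ 1, gfun γ p ζ u ≤ ∫ u in Ioc u₀ 1, u⁻¹ := by
          apply setIntegral_mono_on hI2 hb measurableSet_Ioc
          intro u hu
          have hu0 : 0 < u := hu₀pos.trans hu.1
          calc gfun γ p ζ u ≤ Real.exp (-(u ^ p)) * u⁻¹ := g_le_exp_inv hγ hζ0.le hu0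
            _ ≤ 1 * u⁻¹ := mul_le_mul_of_nonneg_right
                (Real.exp_le_one_iff.mpr (neg_nonpos.mpr (Real.rpow_nonneg hu0.le p)))
                (inv_nonneg.mpr hu0.le)
            _ = u⁻¹ := one_mul _
      _ = (1 / p) * Real.log ζ := by
          rw [← intervalIntegral.integral_of_le hu₀le1,
            integral_inv (notMem_uIcc_of_lt hu₀pos one_pos)]
          have : (1:ℝ) / u₀ = ζ ^ (1 / p) := by
            rw [hu₀def, one_div, ← Real.rpow_neg hζ0.le, neg_neg]
          rw [this, Real.log_rpow hζ0]
  have hB3 : ∫ u in Ioi (1:ℝ), gfun γ p ζ u ≤ ∫ u in Ioi (0:ℝ), Real.exp (-(u ^ p)) := by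
    calc ∫ u in Ioi (1:ℝ), gfun γ p ζ u ≤ ∫ u in Ioi (1:ℝ), Real.exp (-(u ^ p)) := by
          apply setIntegral_mono_on hI3
            ((expInt hp).mono_set (Ioi_subset_Ioi zero_le_one)) measurableSet_Ioi
          intro u hu
          have hu0 : (0:ℝ) < u := zero_lt_one.trans hu
          calc gfun γ p ζ u ≤ Real.exp (-(u ^ p)) * u⁻¹ := g_le_exp_inv hγ hζ0.le hu0
            _ ≤ Real.exp (-(u ^ p)) * 1 := mul_le_mul_of_nonneg_left
                (inv_le_one_of_one_le₀ hu.le) (Real.exp_pos _).le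
            _ = _ := mul_one _
      _ ≤ ∫ u in Ioi (0:ℝ), Real.exp (-(u ^ p)) := by
          apply setIntegral_mono_set (expInt hp) ?_
            (HasSubset.Subset.eventuallyLE (Ioi_subset_Ioi zero_le_one))
          filter_upwards with u using (Real.exp_pos _).le
  rw [hsplit]; linarith

lemma LB {γ p : ℝ} (hγ : 0 < γ) (hp : 0 < p) {ζ M ε : ℝ} (hM : 1 ≤ M) (hε0 : 0 < ε)
    (hε1 : ε ≤ 1) (hcond : M / ε ^ p ≤ ζ) :
    Q γ M * Real.exp (-(ε ^ p)) * ((1 / p) * (Real.log ζ - Real.log M) + Real.log ε)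
      ≤ ∫ u in Ioi (0:ℝ), gfun γ p ζ u := by
  have hΓ := Real.Gamma_pos_of_pos hγ
  have hM0 : (0:ℝ) < M := lt_of_lt_of_le one_pos hM
  have hεp : (0:ℝ) < ε ^ p := Real.rpow_pos_of_pos hε0 p
  have hζ0 : (0:ℝ) < ζ := lt_of_lt_of_le (by positivity) hcond
  set a : ℝ := (M / ζ) ^ (1 / p) with hadef
  have hMζ : 0 < M / ζ := by positivity
  have ha0 : 0 < a := Real.rpow_pos_of_pos hMζ _
  have hap : a ^ p = M / ζ := by
    rw [hadef, ← Real.rpow_mul hMζ.le, one_div, inv_mul_cancel₀ hp.ne', Real.rpow_one]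
  have hMε : M / ζ ≤ ε ^ p := by
    rw [div_le_iff₀ hζ0]
    calc M ≤ ζ * ε ^ p := (div_le_iff₀ hεp).mp hcond
      _ = ε ^ p * ζ := mul_comm _ _
  have haε : a ≤ ε := by
    calc a ≤ (ε ^ p) ^ (1 / p) := Real.rpow_le_rpow hMζ.le hMε (by positivity)
      _ = ε := by
          rw [← Real.rpow_mul hε0.le, one_div, mul_inv_cancel₀ hp.ne', Real.rpow_one]
  have hsub : Ioc a ε ⊆ Ioi (0:ℝ) := fun x hx => ha0.trans hx.1
  have hloga : Real.log a = (1 / p) * (Real.log M - Real.log ζ) := by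
    rw [hadef, Real.log_rpow hMζ, Real.log_div hM0.ne' hζ0.ne']
  have hb : IntegrableOn
      (fun u : ℝ => Q γ M * Real.exp (-(ε ^ p)) * u⁻¹) (Ioc a ε) := by
    have hc : ContinuousOn (fun u : ℝ => u⁻¹) (Icc a ε) :=
      continuousOn_inv₀.mono fun x hx => ne_of_gt (lt_of_lt_of_le ha0 hx.1)
    exact ((hc.integrableOn_Icc).mono_set Ioc_subset_Icc_self).const_mul _
  have hval : ∫ u in Ioc a ε, Q γ M * Real.exp (-(ε ^ p)) * u⁻¹
      = Q γ M * Real.exp (-(ε ^ p)) * ((1 / p) * (Real.log ζ - Real.log M) + Real.log ε) := by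
    rw [MeasureTheory.integral_const_mul, ← intervalIntegral.integral_of_le haε,
      integral_inv (notMem_uIcc_of_lt ha0 hε0), Real.log_div hε0.ne' ha0.ne', hloga]
    ring
  have h1 : ∫ u in Ioc a ε, Q γ M * Real.exp (-(ε ^ p)) * u⁻¹
      ≤ ∫ u in Ioc a ε, gfun γ p ζ u := by
    apply setIntegral_mono_on hb ((g_int hγ hp hζ0).mono_set hsub) measurableSet_Ioc
    intro u hu
    have hu0 : 0 < u := ha0.trans hu.1
    have hQ : Q γ M ≤ Q γ (ζ * u ^ p) := by
      apply Q_mono hγ hM0.le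
      have h : a ^ p ≤ u ^ p := Real.rpow_le_rpow ha0.le hu.1.le hp.le
      rw [hap] at h
      calc M = ζ * (M / ζ) := by field_simp
        _ ≤ ζ * u ^ p := mul_le_mul_of_nonneg_left h hζ0.le
    have hE : Real.exp (-(ε ^ p)) ≤ Real.exp (-(u ^ p)) :=
      Real.exp_le_exp.mpr (neg_le_neg (Real.rpow_le_rpow hu0.le hu.2 hp.le))
    unfold gfun
    exact mul_le_mul_of_nonneg_right
      (mul_le_mul hQ hE (Real.exp_pos _).le (Q_nonneg hγ (by positivity)))
      (inv_nonneg.mpr hu0.le)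
  have h2 : ∫ u in Ioc a ε, gfun γ p ζ u ≤ ∫ u in Ioi (0:ℝ), gfun γ p ζ u := by
    apply setIntegral_mono_set (g_int hγ hp hζ0) ?_ (HasSubset.Subset.eventuallyLE hsub)
    filter_upwards [ae_restrict_mem measurableSet_Ioi] with u hu using g_nonneg hγ hζ0.le hu
  linarith

end IGNCaux

open IGNCaux

/-- For γ > 0 and p > 0, the normalizing constant
K_{0,γ,p,η} = ∫_0^∞ G_{γ,(η−1)}(u^p) e^{−u^p} u^{−1} du satisfies
K_{0,γ,p,η} / log(η) → 1/p as η → ∞. -/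
theorem incomplete_gamma_normalizing_constant_asymp_eta_to_infty_beta_zero
    (γ p : ℝ) (hγ : 0 < γ) (hp : 0 < p) :
    Tendsto (fun η : ℝ =>
        (∫ u in Set.Ioi (0:ℝ),
            (((η - 1) ^ γ / Real.Gamma γ) *
                ∫ x in (0:ℝ)..(u ^ p), x ^ (γ - 1) * Real.exp (-(x * (η - 1)))) *
              Real.exp (-(u ^ p)) * u ^ (-1 - (0:ℝ))) / Real.log η)
      atTop (nhds (1 / p)) := by
  have hΓ := Real.Gamma_pos_of_pos hγ
  have key : ∀ η : ℝ, 2 ≤ η →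
      (∫ u in Set.Ioi (0:ℝ),
          (((η - 1) ^ γ / Real.Gamma γ) *
              ∫ x in (0:ℝ)..(u ^ p), x ^ (γ - 1) * Real.exp (-(x * (η - 1)))) *
            Real.exp (-(u ^ p)) * u ^ (-1 - (0:ℝ)))
      = ∫ u in Set.Ioi (0:ℝ), gfun γ p (η - 1) u := by
    intro η hη
    apply setIntegral_congr_fun measurableSet_Ioi
    intro u hu
    have hu0 : (0:ℝ) < u := hu
    have h1 := scaling hγ (show (0:ℝ) < η - 1 by linarith) (Real.rpow_nonneg hu0.le p)
    show ((η - 1) ^ γ / Real.Gamma γ *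
        ∫ x in (0:ℝ)..(u ^ p), x ^ (γ - 1) * Real.exp (-(x * (η - 1)))) *
        Real.exp (-(u ^ p)) * u ^ (-1 - (0:ℝ)) = gfun γ p (η - 1) u
    rw [h1, show (-1 - (0:ℝ)) = (-1 : ℝ) by norm_num, Real.rpow_neg_one]
    rfl
  rw [tendsto_order]
  constructor
  · -- lower bound side
    intro b hb
    have hbp : b * p < 1 := (lt_div_iff₀ hp).mp hb
    set k : ℝ := max (1/2) ((b * p + 1) / 2) with hkdef
    have hk0 : 0 < k := lt_of_lt_of_le (by norm_num) (le_max_left _ _)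
    have hk1 : k < 1 := max_lt (by norm_num) (by linarith)
    have hbk : b * p < k := lt_of_lt_of_le (by linarith) (le_max_right _ _)
    set s : ℝ := Real.sqrt k with hsdef
    have hs0 : 0 < s := Real.sqrt_pos.mpr hk0
    have hs1 : s < 1 := by
      rw [hsdef, show (1:ℝ) = Real.sqrt 1 by rw [Real.sqrt_one]]
      exact Real.sqrt_lt_sqrt hk0.le hk1
    have hss : s * s = k := Real.mul_self_sqrt hk0.le
    obtain ⟨M, hM1, hQM⟩ : ∃ M : ℝ, 1 ≤ M ∧ s ≤ Q γ M := by
      have h := (Q_tendsto hγ).eventually (eventually_ge_nhds hs1)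
      exact ((eventually_ge_atTop (1:ℝ)).and h).exists
    have hM0 : (0:ℝ) < M := lt_of_lt_of_le one_pos hM1
    have hlogs : 0 < Real.log s⁻¹ := Real.log_pos ((one_lt_inv₀ hs0).mpr hs1)
    set ε : ℝ := min 1 ((Real.log s⁻¹) ^ p⁻¹) with hεdef
    have hε0 : 0 < ε := lt_min one_pos (Real.rpow_pos_of_pos hlogs _)
    have hε1 : ε ≤ 1 := min_le_left _ _
    have hεp : ε ^ p ≤ Real.log s⁻¹ := by
      calc ε ^ p ≤ ((Real.log s⁻¹) ^ p⁻¹) ^ p :=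
            Real.rpow_le_rpow hε0.le (min_le_right _ _) hp.le
        _ = Real.log s⁻¹ := by
            rw [← Real.rpow_mul hlogs.le, inv_mul_cancel₀ hp.ne', Real.rpow_one]
    have hexpε : s ≤ Real.exp (-(ε ^ p)) := by
      calc s = Real.exp (Real.log s) := (Real.exp_log hs0).symm
        _ ≤ Real.exp (-(ε ^ p)) := Real.exp_le_exp.mpr (by
            have := Real.log_inv s
            linarith)
    have hκk : k ≤ Q γ M * Real.exp (-(ε ^ p)) := by
      calc k = s * s := hss.symm
        _ ≤ Q γ M * Real.exp (-(ε ^ p)) := mul_le_mul hQM hexpε hs0.le (hs0.le.trans hQM)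
    have hκ1 : Q γ M * Real.exp (-(ε ^ p)) ≤ 1 := by
      calc Q γ M * Real.exp (-(ε ^ p)) ≤ 1 * 1 :=
            mul_le_mul (Q_le_one hγ hM0.le)
              (Real.exp_le_one_iff.mpr (neg_nonpos.mpr (Real.rpow_nonneg hε0.le p)))
              (Real.exp_pos _).le one_pos.le
        _ = 1 := one_mul _
    set D : ℝ := (1/p) * Real.log 2 + (1/p) * Real.log M - Real.log ε with hDdef
    have hD0 : 0 ≤ D := by
      have h2 : 0 ≤ Real.log 2 := Real.log_nonneg one_le_two
      have hM : 0 ≤ Real.log M := Real.log_nonneg hM1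
      have hεl : Real.log ε ≤ 0 := Real.log_nonpos hε0.le hε1
      have h1p : 0 < 1/p := by positivity
      rw [hDdef]; nlinarith
    clear_value k s ε D
    have htendD : Tendsto (fun η : ℝ => D / Real.log η) atTop (nhds 0) := by
      have h2 := Real.tendsto_log_atTop.inv_tendsto_atTop.const_mul D
      simpa [div_eq_mul_inv, mul_zero] using h2
    have hδ : 0 < k / p - b := by
      have : b < k / p := (lt_div_iff₀ hp).mpr hbk
      linarith
    filter_upwards [eventually_ge_atTop (2:ℝ),
      eventually_ge_atTop (M / ε ^ p + 1),
      htendD.eventually (eventually_lt_nhds hδ)] with η hη2 hηM hηD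
    rw [key η hη2]
    have hζ1 : (1:ℝ) ≤ η - 1 := by linarith
    have hlogη : 0 < Real.log η := Real.log_pos (by linarith)
    have hcond : M / ε ^ p ≤ η - 1 := by linarith
    have hLB := LB hγ hp hM1 hε0 hε1 hcond
    have hlogζ : Real.log η - Real.log 2 ≤ Real.log (η - 1) := by
      have h1 : Real.log (η / 2) ≤ Real.log (η - 1) :=
        Real.log_le_log (by linarith) (by linarith)
      rw [Real.log_div (by linarith) two_ne_zero] at h1
      linarith
    rw [lt_div_iff₀ hlogη]
    have hbound : Q γ M * Real.exp (-(ε ^ p)) * ((1/p) * Real.log η - D)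
        ≤ Q γ M * Real.exp (-(ε ^ p)) * ((1/p) * (Real.log (η-1) - Real.log M) + Real.log ε) := by
      apply mul_le_mul_of_nonneg_left ?_ (hk0.le.trans hκk)
      have h1p : (0:ℝ) ≤ 1/p := by positivity
      have h2 := mul_le_mul_of_nonneg_left hlogζ h1p
      rw [hDdef]
      nlinarith
    have h2 : k * ((1/p) * Real.log η) - D ≤
        Q γ M * Real.exp (-(ε ^ p)) * ((1/p) * Real.log η - D) := by
      have hκ0 : 0 ≤ Q γ M * Real.exp (-(ε ^ p)) := hk0.le.trans hκk
      have hl : 0 ≤ (1/p) * Real.log η := by positivity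
      have e1 := mul_le_mul_of_nonneg_right hκk hl
      have e2 : Q γ M * Real.exp (-(ε ^ p)) * D ≤ 1 * D :=
        mul_le_mul_of_nonneg_right hκ1 hD0
      have e3 : Q γ M * Real.exp (-(ε ^ p)) * ((1/p) * Real.log η - D)
          = Q γ M * Real.exp (-(ε ^ p)) * ((1/p) * Real.log η)
            - Q γ M * Real.exp (-(ε ^ p)) * D := by ring
      linarith
    have hD' : D < (k/p - b) * Real.log η := (div_lt_iff₀ hlogη).mp hηD
    have hring : (k/p - b) * Real.log η = k * ((1/p) * Real.log η) - b * Real.log η := by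
      ring
    linarith
  · -- upper bound side
    intro b hb
    set C : ℝ := 1 / (p * γ * γ * Real.Gamma γ) + ∫ u in Ioi (0:ℝ), Real.exp (-(u ^ p))
      with hCdef
    have htend : Tendsto (fun η : ℝ => C / Real.log η) atTop (nhds 0) := by
      have h2 := Real.tendsto_log_atTop.inv_tendsto_atTop.const_mul C
      simpa [div_eq_mul_inv, mul_zero] using h2
    filter_upwards [eventually_ge_atTop (2:ℝ),
      htend.eventually (eventually_lt_nhds (by linarith : (0:ℝ) < b - 1/p))] with η hη2 hηC
    rw [key η hη2]
    have hζ1 : (1:ℝ) ≤ η - 1 := by linarith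
    have hlogη : 0 < Real.log η := Real.log_pos (by linarith)
    have hUB := UB hγ hp hζ1
    rw [← hCdef] at hUB
    have hlog2 : Real.log (η - 1) ≤ Real.log η := Real.log_le_log (by linarith) (by linarith)
    have h1 : (1/p) * Real.log (η - 1) ≤ (1/p) * Real.log η :=
      mul_le_mul_of_nonneg_left hlog2 (by positivity)
    have hC' : C < (b - 1/p) * Real.log η := (div_lt_iff₀ hlogη).mp hηC
    have hexpand : (b - 1/p) * Real.log η = b * Real.log η - (1/p) * Real.log η := by ring
    rw [div_lt_iff₀ hlogη]
    linarith
end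

section
/- Let β < 0, γ > 0, p > 0. Then K_{β,γ,p,η} converges to p^{−1} Γ(|β|/p) as η → ∞. -/
open MeasureTheory Filter Set Real

-- substitution identity
lemma Gpart_eq' (γ : ℝ) (ζ a : ℝ) (hζ : 0 < ζ) (ha : 0 ≤ a) :
    ζ ^ γ / Real.Gamma γ * ∫ x in (0:ℝ)..a, x ^ (γ - 1) * Real.exp (-(x * ζ))
      = (Real.Gamma γ)⁻¹ * ∫ t in (0:ℝ)..(a * ζ), Real.exp (-t) * t ^ (γ - 1) := by
  have h1 : ∀ x ∈ Set.uIcc (0:ℝ) a,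
      x ^ (γ - 1) * Real.exp (-(x * ζ))
        = ζ ^ (1 - γ) * (Real.exp (-(x * ζ)) * (x * ζ) ^ (γ - 1)) := by
    intro x hx
    rw [Set.uIcc_of_le ha] at hx
    rw [Real.mul_rpow hx.1 hζ.le]
    rw [show ζ ^ (1 - γ) * (Real.exp (-(x * ζ)) * (x ^ (γ - 1) * ζ ^ (γ - 1)))
        = (ζ ^ (1 - γ) * ζ ^ (γ - 1)) * (x ^ (γ - 1) * Real.exp (-(x * ζ))) by ring,
      ← Real.rpow_add hζ]
    norm_num
  rw [intervalIntegral.integral_congr h1, intervalIntegral.integral_const_mul,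
    intervalIntegral.integral_comp_mul_right (fun t => Real.exp (-t) * t ^ (γ - 1)) hζ.ne',
    zero_mul, smul_eq_mul]
  rw [show ζ ^ γ / Real.Gamma γ * (ζ ^ (1 - γ) * (ζ⁻¹ * ∫ t in (0:ℝ)..(a*ζ), Real.exp (-t) * t ^ (γ - 1)))
      = (ζ ^ γ * ζ ^ (1 - γ) * ζ⁻¹) * ((Real.Gamma γ)⁻¹ * ∫ t in (0:ℝ)..(a*ζ), Real.exp (-t) * t ^ (γ - 1)) by
        rw [div_eq_mul_inv]; ring,
    ← Real.rpow_add hζ, ← Real.rpow_neg_one ζ, ← Real.rpow_add hζ]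
  norm_num

/-- For β < 0, γ > 0, p > 0, the normalizing constant
K_{β,γ,p,η} = ∫_0^∞ G_{γ,(η−1)}(u^p) e^{−u^p} u^{−1−β} du converges to p⁻¹ Γ(|β|/p)
as η → ∞. -/
theorem incomplete_gamma_normalizing_constant_asymp_eta_to_infty_neg_beta
    (β γ p : ℝ) (hβ : β < 0) (hγ : 0 < γ) (hp : 0 < p) :
    Tendsto (fun η : ℝ =>
        ∫ u in Set.Ioi (0:ℝ),
          (((η - 1) ^ γ / Real.Gamma γ) *
              ∫ x in (0:ℝ)..(u ^ p), x ^ (γ - 1) * Real.exp (-(x * (η - 1)))) *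
            Real.exp (-(u ^ p)) * u ^ (-1 - β))
      atTop (nhds (p⁻¹ * Real.Gamma (|β| / p))) := by
  have hΓpos := Real.Gamma_pos_of_pos hγ
  -- integrability of the Gamma-type integrand
  have hGint : IntegrableOn (fun t : ℝ => Real.exp (-t) * t ^ (γ - 1)) (Ioi 0) :=
    Real.GammaIntegral_convergent hγ
  -- the limit function / bound
  set f : ℝ → ℝ := fun u => Real.exp (-(u ^ p)) * u ^ (-1 - β) with hf
  -- value of the limit integral
  have hval : ∫ u in Ioi (0:ℝ), f u = p⁻¹ * Real.Gamma (|β| / p) := by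
    have h1 : ∫ u in Ioi (0:ℝ), f u = ∫ u in Ioi (0:ℝ), u ^ (-1 - β) * Real.exp (-u ^ p) := by
      refine setIntegral_congr_fun measurableSet_Ioi fun u _ => ?_
      simp [hf, mul_comm]
    rw [h1, integral_rpow_mul_exp_neg_rpow hp (by linarith : (-1:ℝ) < -1 - β),
      abs_of_neg hβ, one_div, show (-1:ℝ) - β + 1 = -β by ring]
  -- integrability of f
  have hfint : IntegrableOn f (Ioi 0) := by
    have hs : (0:ℝ) < -β / p := div_pos (neg_pos.mpr hβ) hp
    have h0 : IntegrableOn (fun y : ℝ => Real.exp (-y) * y ^ (-β / p - 1)) (Ioi 0) :=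
      Real.GammaIntegral_convergent hs
    have h2 := (integrableOn_Ioi_comp_rpow_iff'
      (fun y : ℝ => Real.exp (-y) * y ^ (-β / p - 1)) hp.ne').mpr h0
    refine h2.congr_fun (fun u hu => ?_) measurableSet_Ioi
    have hu : (0:ℝ) < u := hu
    have h3 : ((u ^ p) ^ (-β / p - 1) : ℝ) = u ^ (-β - p) := by
      rw [← Real.rpow_mul hu.le]
      congr 1
      field_simp
    simp only [smul_eq_mul, h3, hf]
    rw [show u ^ (p - 1) * (Real.exp (-(u ^ p)) * u ^ (-β - p))
        = (u ^ (p - 1) * u ^ (-β - p)) * Real.exp (-(u ^ p)) by ring,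
      ← Real.rpow_add hu]
    rw [show p - 1 + (-β - p) = -1 - β by ring]
    ring
  rw [← hval]
  -- dominated convergence
  refine tendsto_integral_filter_of_dominated_convergence f ?_ ?_ hfint ?_
  · -- measurability
    refine Eventually.of_forall fun η => ?_
    have hii : ∀ a b : ℝ, IntervalIntegrable
        (fun x => x ^ (γ - 1) * Real.exp (-(x * (η - 1)))) volume a b := by
      intro a b
      exact (intervalIntegral.intervalIntegrable_rpow' (by linarith)).mul_continuousOn
        (Continuous.continuousOn (by continuity))
    have hprim : Continuous fun t : ℝ =>
        ∫ x in (0:ℝ)..t, x ^ (γ - 1) * Real.exp (-(x * (η - 1))) :=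
      intervalIntegral.continuous_primitive hii 0
    have hup : ContinuousOn (fun u : ℝ => u ^ p) (Ioi 0) := fun u hu =>
      (Real.continuousAt_rpow_const u p (Or.inl (ne_of_gt hu))).continuousWithinAt
    have hco : ContinuousOn (fun u : ℝ =>
        (((η - 1) ^ γ / Real.Gamma γ) *
            ∫ x in (0:ℝ)..(u ^ p), x ^ (γ - 1) * Real.exp (-(x * (η - 1)))) *
          Real.exp (-(u ^ p)) * u ^ (-1 - β)) (Ioi 0) := by
      refine ContinuousOn.mul (ContinuousOn.mul (continuousOn_const.mul
        (hprim.comp_continuousOn hup)) (Real.continuous_exp.comp_continuousOn hup.neg)) ?_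
      exact fun u hu =>
        (Real.continuousAt_rpow_const u (-1 - β) (Or.inl (ne_of_gt hu))).continuousWithinAt
    exact hco.aestronglyMeasurable measurableSet_Ioi
  · -- bound
    filter_upwards [eventually_ge_atTop (2:ℝ)] with η hη
    refine (ae_restrict_iff' measurableSet_Ioi).mpr (ae_of_all _ fun u hu => ?_)
    have hu : (0:ℝ) < u := hu
    have hζ : (0:ℝ) < η - 1 := by linarith
    have ha : (0:ℝ) ≤ u ^ p := Real.rpow_nonneg hu.le p
    rw [Gpart_eq' γ (η - 1) (u ^ p) hζ ha]
    set I := ∫ t in (0:ℝ)..(u ^ p * (η - 1)), Real.exp (-t) * t ^ (γ - 1) with hI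
    have hT : (0:ℝ) ≤ u ^ p * (η - 1) := mul_nonneg ha hζ.le
    have hInn : 0 ≤ I := intervalIntegral.integral_nonneg hT fun t ht =>
      mul_nonneg (Real.exp_nonneg _) (Real.rpow_nonneg ht.1 _)
    have hIle : I ≤ Real.Gamma γ := by
      rw [hI, intervalIntegral.integral_of_le hT, Real.Gamma_eq_integral hγ]
      refine setIntegral_mono_set hGint ?_ ?_
      · exact (ae_restrict_iff' measurableSet_Ioi).mpr (ae_of_all _ fun t ht =>
          mul_nonneg (Real.exp_nonneg _) (Real.rpow_nonneg (le_of_lt ht) _))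
      · exact HasSubset.Subset.eventuallyLE Ioc_subset_Ioi_self
    have h1 : (Real.Gamma γ)⁻¹ * I ≤ 1 := by
      rw [inv_mul_le_iff₀ hΓpos]; linarith
    have h0 : 0 ≤ (Real.Gamma γ)⁻¹ * I := by positivity
    rw [Real.norm_eq_abs, abs_of_nonneg (mul_nonneg (mul_nonneg h0 (Real.exp_nonneg _))
      (Real.rpow_nonneg hu.le _))]
    have h2 := mul_le_mul_of_nonneg_right (mul_le_mul_of_nonneg_right h1
      (Real.exp_nonneg (-(u ^ p)))) (Real.rpow_nonneg hu.le (-1 - β))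
    simpa [hf] using h2
  · -- pointwise limit
    refine (ae_restrict_iff' measurableSet_Ioi).mpr (ae_of_all _ fun u hu => ?_)
    have hu : (0:ℝ) < u := hu
    have ha : (0:ℝ) ≤ u ^ p := Real.rpow_nonneg hu.le p
    have hap : (0:ℝ) < u ^ p := Real.rpow_pos_of_pos hu p
    have hIlim : Tendsto (fun T : ℝ => ∫ t in (0:ℝ)..T, Real.exp (-t) * t ^ (γ - 1))
        atTop (nhds (Real.Gamma γ)) := by
      rw [Real.Gamma_eq_integral hγ]
      exact intervalIntegral_tendsto_integral_Ioi 0 hGint tendsto_id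
    have hT : Tendsto (fun η : ℝ => u ^ p * (η - 1)) atTop atTop := by
      apply Tendsto.const_mul_atTop hap
      exact tendsto_atTop_add_const_right atTop (-1) tendsto_id |>.congr fun x => by simp [sub_eq_add_neg]
    have hmain : Tendsto (fun η : ℝ =>
        ((Real.Gamma γ)⁻¹ * ∫ t in (0:ℝ)..(u ^ p * (η - 1)), Real.exp (-t) * t ^ (γ - 1)) *
          Real.exp (-(u ^ p)) * u ^ (-1 - β)) atTop (nhds (f u)) := by
      have := (((hIlim.comp hT).const_mul ((Real.Gamma γ)⁻¹)).mul_const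
        (Real.exp (-(u ^ p)))).mul_const (u ^ (-1 - β))
      rw [inv_mul_cancel₀ hΓpos.ne', one_mul] at this
      exact this
    refine hmain.congr' ?_
    filter_upwards [eventually_gt_atTop (1:ℝ)] with η hη
    rw [Gpart_eq' γ (η - 1) (u ^ p) (by linarith) ha]
end

section
/- Let β ∈ ℝ, p > 0, η > 1, and let γ be a positive integer with pγ > β. Assume further that np ≠ β for every integer n with 0 ≤ n ≤ γ−1. Then K_{β,γ,p,η} = (Γ(γ − β/p)/(γ−1)!) Σ_{n=0}^{γ−1} C(γ−1,n) (−1)^n (1 − η^{−(np−β)/p})/(np − β), where C(γ−1,n) denotes the binomial coefficient. -/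
open MeasureTheory Real Set

lemma aux_integrableOn {p q b : ℝ} (hp : 0 < p) (hq : -1 < q) (hb : 0 < b) :
    IntegrableOn (fun x : ℝ => x ^ q * Real.exp (-b * x ^ p)) (Set.Ioi 0) := by
  have h1 : -1 < (q + 1) / p - 1 := by
    have : 0 < (q + 1) / p := div_pos (by linarith) hp
    linarith
  have h0 : IntegrableOn (fun t : ℝ => t ^ ((q + 1) / p - 1) * Real.exp (-b * t)) (Set.Ioi 0) := by
    have := integrableOn_rpow_mul_exp_neg_mul_rpow (p := 1) h1 one_pos hb
    refine this.congr_fun (fun x hx => ?_) measurableSet_Ioi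
    dsimp only
    rw [Real.rpow_one]
  have h2 := (integrableOn_Ioi_comp_rpow_iff'
      (fun t : ℝ => t ^ ((q + 1) / p - 1) * Real.exp (-b * t)) hp.ne').mpr h0
  refine h2.congr_fun (fun x hx => ?_) measurableSet_Ioi
  have hx0 : (0:ℝ) < x := hx
  have hexp : p - 1 + p * ((q + 1) / p - 1) = q := by field_simp; ring
  dsimp only
  rw [smul_eq_mul, ← mul_assoc, ← Real.rpow_mul hx0.le, ← Real.rpow_add hx0, hexp]

lemma aux_inner (ζ T : ℝ) (m : ℕ) :
    ∫ x in (0:ℝ)..T, x ^ m * Real.exp (-(x * ζ))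
      = T ^ (m + 1) * ∫ s in (0:ℝ)..1, s ^ m * Real.exp (-(ζ * T * s)) := by
  have h := intervalIntegral.smul_integral_comp_mul_left
      (f := fun x => x ^ m * Real.exp (-(x * ζ))) (a := (0:ℝ)) (b := 1) T
  simp only [mul_zero, mul_one] at h
  rw [← h]
  have h2 : (∫ s in (0:ℝ)..1, (T * s) ^ m * Real.exp (-(T * s * ζ)))
      = ∫ s in (0:ℝ)..1, T ^ m * (s ^ m * Real.exp (-(ζ * T * s))) := by
    apply intervalIntegral.integral_congr
    intro s _
    simp only [mul_pow]
    ring_nf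
  rw [h2, intervalIntegral.integral_const_mul, smul_eq_mul, pow_succ]
  ring

lemma aux_sub2 (ζ e : ℝ) (hζ : 0 < ζ) (m : ℕ) :
    ∫ s in (0:ℝ)..1, s ^ m * (1 + ζ * s) ^ e
      = (ζ ^ (m + 1))⁻¹ * ∫ v in (1:ℝ)..(ζ + 1), (v - 1) ^ m * v ^ e := by
  have h := intervalIntegral.integral_comp_mul_add
      (f := fun v => (v - 1) ^ m * v ^ e) (a := (0:ℝ)) (b := 1) hζ.ne' 1
  simp only [mul_zero, zero_add, mul_one] at h
  have h2 : (∫ s in (0:ℝ)..1, (fun v => (v - 1) ^ m * v ^ e) (ζ * s + 1))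
      = ∫ s in (0:ℝ)..1, ζ ^ m * (s ^ m * (1 + ζ * s) ^ e) := by
    apply intervalIntegral.integral_congr
    intro s _
    simp only [add_sub_cancel_right, mul_pow]
    ring_nf
  rw [h2, intervalIntegral.integral_const_mul] at h
  rw [smul_eq_mul] at h
  field_simp at h ⊢
  linear_combination h

lemma aux_expand (η e : ℝ) (hη : 1 < η) (m : ℕ)
    (hk : ∀ k, k ≤ m → ((k : ℝ) + e) ≠ -1) :
    ∫ v in (1:ℝ)..η, (v - 1) ^ m * v ^ e
      = ∑ k ∈ Finset.range (m + 1), (-1) ^ (k + m) * (m.choose k : ℝ) *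
          ((η ^ ((k : ℝ) + e + 1) - 1) / ((k : ℝ) + e + 1)) := by
  have hnotmem : (0:ℝ) ∉ Set.uIcc (1:ℝ) η := by
    rw [Set.uIcc_of_le hη.le]
    rintro ⟨h0, -⟩; linarith
  have hcongr : (∫ v in (1:ℝ)..η, (v - 1) ^ m * v ^ e)
      = ∫ v in (1:ℝ)..η, ∑ k ∈ Finset.range (m + 1),
          ((-1) ^ (k + m) * (m.choose k : ℝ)) * v ^ ((k : ℝ) + e) := by
    apply intervalIntegral.integral_congr
    intro v hv
    rw [Set.uIcc_of_le hη.le] at hv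
    dsimp only
    have hv0 : (0:ℝ) < v := lt_of_lt_of_le one_pos hv.1
    rw [sub_pow, Finset.sum_mul]
    refine Finset.sum_congr rfl (fun k hkr => ?_)
    rw [one_pow, mul_one, Real.rpow_add hv0, Real.rpow_natCast]
    ring
  rw [hcongr, intervalIntegral.integral_finset_sum]
  · refine Finset.sum_congr rfl (fun k hkr => ?_)
    rw [intervalIntegral.integral_const_mul,
      integral_rpow (Or.inr ⟨hk k (Nat.lt_succ_iff.mp (Finset.mem_range.mp hkr)), hnotmem⟩),
      Real.one_rpow]
  · intro k hkr
    exact (intervalIntegral.intervalIntegrable_rpow (Or.inr hnotmem)).const_mul _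

/-- For β ∈ ℝ, p > 0, η > 1 and a positive integer γ with pγ > β such that
np ≠ β for all integers 0 ≤ n ≤ γ−1, the normalizing constant
K_{β,γ,p,η} = ∫_0^∞ G_{γ,(η−1)}(u^p) e^{−u^p} u^{−1−β} du satisfies
K_{β,γ,p,η} = (Γ(γ − β/p)/(γ−1)!) Σ_{n=0}^{γ−1} C(γ−1,n) (−1)^n (1 − η^{−(np−β)/p})/(np − β). -/
theorem incomplete_gamma_normalizing_constant_integer_gamma
    (β p η : ℝ) (γ : ℕ) (hγ : 0 < γ) (hp : 0 < p) (hη : 1 < η) (hβ : β < p * γ)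
    (hne : ∀ n ∈ Finset.range γ, (n : ℝ) * p ≠ β) :
    (∫ u in Set.Ioi (0:ℝ),
        (((η - 1) ^ (γ : ℝ) / Real.Gamma γ) *
            ∫ x in (0:ℝ)..(u ^ p), x ^ ((γ : ℝ) - 1) * Real.exp (-(x * (η - 1)))) *
          Real.exp (-(u ^ p)) * u ^ (-1 - β))
      = (Real.Gamma ((γ : ℝ) - β / p) / ((γ - 1).factorial : ℝ)) *
          ∑ n ∈ Finset.range γ,
            ((γ - 1).choose n : ℝ) * (-1) ^ n *
              ((1 - η ^ (-(((n : ℝ) * p - β) / p))) / ((n : ℝ) * p - β)) := by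
  obtain ⟨m, rfl⟩ : ∃ m, γ = m + 1 := ⟨γ - 1, (Nat.succ_pred_eq_of_pos hγ).symm⟩
  set ζ : ℝ := η - 1 with hζdef
  have hζ : (0:ℝ) < ζ := by simp only [hζdef]; linarith
  set q : ℝ := p * (m + 1) - 1 - β with hqdef
  have hβ' : β < p * (m + 1) := by
    have : ((m + 1 : ℕ) : ℝ) = (m : ℝ) + 1 := by push_cast; ring
    rw [this] at hβ; exact hβ
  have hq : -1 < q := by simp only [hqdef]; linarith
  set c : ℝ := ζ ^ ((m + 1 : ℕ) : ℝ) / Real.Gamma ((m + 1 : ℕ) : ℝ) with hcdef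
  set H : ℝ → ℝ → ℝ :=
    fun u s => u ^ q * (s ^ m * Real.exp (-((1 + ζ * s) * u ^ p))) with hHdef
  -- Step 1 : pointwise rewriting of the integrand
  have step1 : (∫ u in Set.Ioi (0:ℝ),
        ((c * ∫ x in (0:ℝ)..(u ^ p), x ^ (((m + 1 : ℕ) : ℝ) - 1) * Real.exp (-(x * ζ))) *
          Real.exp (-(u ^ p)) * u ^ (-1 - β)))
      = c * ∫ u in Set.Ioi (0:ℝ), ∫ s in Set.Ioc (0:ℝ) 1, H u s := by
    rw [← integral_const_mul]
    refine setIntegral_congr_fun measurableSet_Ioi (fun u hu => ?_)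
    have hu0 : (0:ℝ) < u := hu
    have hT : (0:ℝ) < u ^ p := Real.rpow_pos_of_pos hu0 p
    have hcast : (((m + 1 : ℕ) : ℝ) - 1) = ((m : ℕ) : ℝ) := by push_cast; ring
    have e1 : (∫ x in (0:ℝ)..(u ^ p), x ^ (((m + 1 : ℕ) : ℝ) - 1) * Real.exp (-(x * ζ)))
        = ∫ x in (0:ℝ)..(u ^ p), x ^ m * Real.exp (-(x * ζ)) := by
      refine intervalIntegral.integral_congr (fun x _ => ?_)
      rw [hcast, Real.rpow_natCast]
    rw [e1, aux_inner ζ (u ^ p) m, intervalIntegral.integral_of_le zero_le_one]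
    have e2 : (∫ s in Set.Ioc (0:ℝ) 1, H u s)
        = u ^ q * Real.exp (-(u ^ p)) * ∫ s in Set.Ioc (0:ℝ) 1,
            s ^ m * Real.exp (-(ζ * u ^ p * s)) := by
      rw [mul_assoc, ← integral_const_mul, ← integral_const_mul]
      refine setIntegral_congr_fun measurableSet_Ioc (fun s _ => ?_)
      simp only [hHdef]
      rw [show (-((1 + ζ * s) * u ^ p)) = (-u ^ p) + (-(ζ * u ^ p * s)) from by ring,
        Real.exp_add]
      ring
    have e3 : (u ^ p) ^ (m + 1) * u ^ (-1 - β) = u ^ q := by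
      rw [← Real.rpow_natCast (u ^ p) (m + 1), ← Real.rpow_mul hu0.le, ← Real.rpow_add hu0]
      congr 1
      push_cast
      simp only [hqdef]
      ring
    rw [e2]
    rw [show (c * ((u ^ p) ^ (m + 1) *
          ∫ s in Set.Ioc (0:ℝ) 1, s ^ m * Real.exp (-(ζ * u ^ p * s))) *
          Real.exp (-(u ^ p)) * u ^ (-1 - β))
        = c * (((u ^ p) ^ (m + 1) * u ^ (-1 - β)) * Real.exp (-(u ^ p)) *
            ∫ s in Set.Ioc (0:ℝ) 1, s ^ m * Real.exp (-(ζ * u ^ p * s))) from by ring, e3]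
  -- integrability for Fubini
  have hmeas : AEStronglyMeasurable (fun z : ℝ × ℝ => H z.1 z.2)
      ((volume.restrict (Set.Ioi 0)).prod (volume.restrict (Set.Ioc 0 1))) := by
    apply Measurable.aestronglyMeasurable
    apply Measurable.mul
    · exact measurable_fst.pow measurable_const
    · exact (measurable_snd.pow measurable_const).mul
        (((((measurable_const.add (measurable_snd.const_mul ζ)).mul
          (measurable_fst.pow measurable_const)).neg).exp))
  have hg1 : IntegrableOn (fun u : ℝ => u ^ q * Real.exp (-(u ^ p))) (Set.Ioi 0) := by
    refine (aux_integrableOn hp hq one_pos).congr_fun (fun x _ => ?_) measurableSet_Ioi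
    dsimp only
    rw [neg_one_mul]
  have hg2 : IntegrableOn (fun s : ℝ => (s : ℝ) ^ m) (Set.Ioc (0:ℝ) 1) :=
    (continuous_pow m).integrableOn_Ioc
  have hint : Integrable (fun z : ℝ × ℝ => H z.1 z.2)
      ((volume.restrict (Set.Ioi 0)).prod (volume.restrict (Set.Ioc 0 1))) := by
    refine Integrable.mono' (Integrable.mul_prod hg1 hg2) hmeas ?_
    rw [Measure.prod_restrict]
    refine (ae_restrict_iff' (measurableSet_Ioi.prod measurableSet_Ioc)).mpr
      (Filter.Eventually.of_forall ?_)
    rintro ⟨u, s⟩ ⟨hu, hs⟩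
    have hu0 : (0:ℝ) < u := hu
    have hs0 : (0:ℝ) < s := hs.1
    have hup : (0:ℝ) ≤ u ^ p := (Real.rpow_pos_of_pos hu0 p).le
    have hexp : Real.exp (-((1 + ζ * s) * u ^ p)) ≤ Real.exp (-(u ^ p)) := by
      apply Real.exp_le_exp.mpr
      nlinarith [mul_pos hζ hs0]
    have h1 : (0:ℝ) ≤ u ^ q := (Real.rpow_pos_of_pos hu0 q).le
    have h2 : (0:ℝ) ≤ s ^ m := (pow_pos hs0 m).le
    rw [Real.norm_eq_abs, abs_of_nonneg (by positivity)]
    calc u ^ q * (s ^ m * Real.exp (-((1 + ζ * s) * u ^ p)))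
        = (u ^ q * s ^ m) * Real.exp (-((1 + ζ * s) * u ^ p)) := by ring
      _ ≤ (u ^ q * s ^ m) * Real.exp (-(u ^ p)) :=
        mul_le_mul_of_nonneg_left hexp (mul_nonneg h1 h2)
      _ = u ^ q * Real.exp (-(u ^ p)) * s ^ m := by ring
  -- Step 2+3 : Fubini and the inner Gamma integral
  have step2 : (∫ u in Set.Ioi (0:ℝ), ∫ s in Set.Ioc (0:ℝ) 1, H u s)
      = (1 / p) * Real.Gamma ((q + 1) / p) *
          ∫ s in Set.Ioc (0:ℝ) 1, s ^ m * (1 + ζ * s) ^ (-(q + 1) / p) := by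
    rw [integral_integral_swap hint, ← integral_const_mul]
    refine setIntegral_congr_fun measurableSet_Ioc (fun s hs => ?_)
    have hs0 : (0:ℝ) < s := hs.1
    have hb : (0:ℝ) < 1 + ζ * s := by nlinarith [mul_pos hζ hs0]
    have e4 : (∫ u in Set.Ioi (0:ℝ), H u s)
        = s ^ m * ∫ u in Set.Ioi (0:ℝ), u ^ q * Real.exp (-(1 + ζ * s) * u ^ p) := by
      rw [← integral_const_mul]
      refine setIntegral_congr_fun measurableSet_Ioi (fun u _ => ?_)
      simp only [hHdef, neg_mul]
      ring
    rw [e4, integral_rpow_mul_exp_neg_mul_rpow hp hq hb]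
    ring
  -- Step 4+5 : evaluate the remaining s-integral
  set e : ℝ := -(q + 1) / p with hedef
  have hkne : ∀ k, k ≤ m → ((k : ℝ) + e) ≠ -1 := by
    intro k hkm hcontra
    have hmem : m - k ∈ Finset.range (m + 1) :=
      Finset.mem_range.mpr (lt_of_le_of_lt (Nat.sub_le m k) (Nat.lt_succ_self m))
    have h := hne (m - k) hmem
    rw [Nat.cast_sub hkm] at h
    apply h
    have hp' : p ≠ 0 := hp.ne'
    simp only [hedef, hqdef] at hcontra
    field_simp at hcontra
    push_cast at hcontra ⊢
    linarith
  have step3 : (∫ s in Set.Ioc (0:ℝ) 1, s ^ m * (1 + ζ * s) ^ e)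
      = (ζ ^ (m + 1))⁻¹ * ∑ k ∈ Finset.range (m + 1), (-1) ^ (k + m) * (m.choose k : ℝ) *
          ((η ^ ((k : ℝ) + e + 1) - 1) / ((k : ℝ) + e + 1)) := by
    rw [← intervalIntegral.integral_of_le zero_le_one, aux_sub2 ζ e hζ m,
      show ζ + 1 = η from by simp [hζdef], aux_expand η e hη m hkne]
  rw [step1, step2, step3]
  -- Step 6 : final algebra
  have hΓ : Real.Gamma ((m + 1 : ℕ) : ℝ) = (m.factorial : ℝ) := by
    exact_mod_cast Real.Gamma_nat_eq_factorial m
  have hΓ2 : Real.Gamma ((q + 1) / p) = Real.Gamma (((m + 1 : ℕ) : ℝ) - β / p) := by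
    congr 1
    simp only [hqdef]
    push_cast
    field_simp
    ring
  have hζpow : ζ ^ ((m + 1 : ℕ) : ℝ) = ζ ^ (m + 1) := Real.rpow_natCast ζ (m + 1)
  simp only [hcdef, hΓ, hΓ2, hζpow, Nat.add_sub_cancel]
  rw [← Finset.sum_range_reflect
    (fun n => ((m.choose n : ℝ)) * (-1) ^ n *
      ((1 - η ^ (-(((n : ℝ) * p - β) / p))) / ((n : ℝ) * p - β))) (m + 1)]
  simp only [Finset.mul_sum]
  refine Finset.sum_congr rfl (fun k hkr => ?_)
  have hkm : k ≤ m := Nat.lt_succ_iff.mp (Finset.mem_range.mp hkr)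
  simp only [Nat.add_sub_cancel]
  rw [Nat.choose_symm hkm, Nat.cast_sub hkm]
  have hd : ((k : ℝ) + e + 1) ≠ 0 := by
    intro h0; exact hkne k hkm (by linarith)
  have hsign : ((-1 : ℝ)) ^ (k + m) = (-1) ^ (m - k) := by
    rw [show k + m = (m - k) + 2 * k from by omega, pow_add, pow_mul]
    norm_num
  have hexp2 : -((((m : ℝ) - (k : ℝ)) * p - β) / p) = (k : ℝ) + e + 1 := by
    simp only [hedef, hqdef]
    push_cast
    field_simp
    ring
  have hden : ((m : ℝ) - (k : ℝ)) * p - β = -p * ((k : ℝ) + e + 1) := by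
    simp only [hedef, hqdef]
    field_simp
    ring
  rw [hexp2, hden, hsign]
  have hΓpos : Real.Gamma (((m + 1 : ℕ) : ℝ) - β / p) ≠ 0 := by
    apply (Real.Gamma_pos_of_pos ?_).ne'
    push_cast
    have : β / p < (m : ℝ) + 1 := by
      rw [div_lt_iff₀ hp]
      linarith
    linarith
  have hmfac : (m.factorial : ℝ) ≠ 0 := Nat.cast_ne_zero.mpr (Nat.factorial_ne_zero m)
  field_simp
  ring
end

section
/- Let β ∈ ℝ, γ > 0, p > 0, η > 1 with pγ > β. Then for every u > 0, f_{β,γ,p,η}(u) ≤ V₁ g₁(u), where g₁(u) = (p/Γ(γ − β/p)) u^{pγ−β−1} e^{−u^p} is the probability density function of the generalized gamma distribution GGa(pγ−β, p, 1) and V₁ = ((η−1)^γ/(p K_{β,γ,p,η})) · (Γ(γ − β/p)/Γ(γ+1)). -/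
open MeasureTheory

/-- For β ∈ ℝ, γ > 0, p > 0, η > 1 with pγ > β, the density
f_{β,γ,p,η}(u) = K⁻¹ G_{γ,(η−1)}(u^p) e^{−u^p} u^{−1−β} of the incomplete gamma
distribution satisfies, for all u > 0, f_{β,γ,p,η}(u) ≤ V₁ g₁(u), where
g₁(u) = (p/Γ(γ − β/p)) u^{pγ−β−1} e^{−u^p} is the pdf of GGa(pγ−β, p, 1) and
V₁ = ((η−1)^γ/(p K)) (Γ(γ − β/p)/Γ(γ+1)). -/
theorem incomplete_gamma_density_le_generalized_gamma
    (β γ p η : ℝ) (hγ : 0 < γ) (hp : 0 < p) (hη : 1 < η) (hβ : β < p * γ)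
    (K : ℝ)
    (hK : K = ∫ u in Set.Ioi (0:ℝ),
        (((η - 1) ^ γ / Real.Gamma γ) *
            ∫ x in (0:ℝ)..(u ^ p), x ^ (γ - 1) * Real.exp (-(x * (η - 1)))) *
          Real.exp (-(u ^ p)) * u ^ (-1 - β)) :
    ∀ u > (0:ℝ),
      K⁻¹ *
          (((η - 1) ^ γ / Real.Gamma γ) *
            ∫ x in (0:ℝ)..(u ^ p), x ^ (γ - 1) * Real.exp (-(x * (η - 1)))) *
          Real.exp (-(u ^ p)) * u ^ (-1 - β)
        ≤ ((η - 1) ^ γ / (p * K) * (Real.Gamma (γ - β / p) / Real.Gamma (γ + 1))) *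
            ((p / Real.Gamma (γ - β / p)) * u ^ (p * γ - β - 1) * Real.exp (-(u ^ p))) := by
  intro u hu
  have hη1 : (0:ℝ) < η - 1 := by linarith
  have hG : 0 < Real.Gamma γ := Real.Gamma_pos_of_pos hγ
  have hGd : 0 < Real.Gamma (γ - β / p) := by
    apply Real.Gamma_pos_of_pos
    have : β / p < γ := (div_lt_iff₀ hp).mpr (by linarith [hβ])
    linarith
  have hup : 0 < u ^ p := Real.rpow_pos_of_pos hu p
  -- nonnegativity of K
  have hK0 : 0 ≤ K := by
    rw [hK]
    apply setIntegral_nonneg measurableSet_Ioi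
    intro v hv
    have hv0 : (0:ℝ) < v := hv
    have hvp : (0:ℝ) ≤ v ^ p := (Real.rpow_pos_of_pos hv0 p).le
    have hIn : 0 ≤ ∫ x in (0:ℝ)..(v ^ p), x ^ (γ - 1) * Real.exp (-(x * (η - 1))) := by
      apply intervalIntegral.integral_nonneg hvp
      intro x hx
      exact mul_nonneg (Real.rpow_nonneg hx.1 _) (Real.exp_nonneg _)
    have h1 : 0 ≤ (η - 1) ^ γ / Real.Gamma γ := by positivity
    have h2 : 0 ≤ v ^ (-1 - β) := (Real.rpow_pos_of_pos hv0 _).le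
    have h3 : 0 ≤ Real.exp (-(v ^ p)) := Real.exp_nonneg _
    positivity
  rcases hK0.eq_or_lt with h0 | hKpos
  · simp [← h0]
  -- bound on the inner integral
  have hint1 : IntervalIntegrable (fun x : ℝ => x ^ (γ - 1)) volume 0 (u ^ p) :=
    intervalIntegral.intervalIntegrable_rpow' (by linarith)
  have hint2 : IntervalIntegrable
      (fun x : ℝ => x ^ (γ - 1) * Real.exp (-(x * (η - 1)))) volume 0 (u ^ p) :=
    hint1.mul_continuousOn (Continuous.continuousOn (by continuity))
  have hI_le : (∫ x in (0:ℝ)..(u ^ p), x ^ (γ - 1) * Real.exp (-(x * (η - 1))))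
      ≤ (u ^ p) ^ γ / γ := by
    have h1 : (∫ x in (0:ℝ)..(u ^ p), x ^ (γ - 1) * Real.exp (-(x * (η - 1))))
        ≤ ∫ x in (0:ℝ)..(u ^ p), x ^ (γ - 1) := by
      apply intervalIntegral.integral_mono_on hup.le hint2 hint1
      intro x hx
      have hx0 : 0 ≤ x := hx.1
      calc x ^ (γ - 1) * Real.exp (-(x * (η - 1)))
          ≤ x ^ (γ - 1) * 1 := by
            apply mul_le_mul_of_nonneg_left _ (Real.rpow_nonneg hx0 _)
            rw [Real.exp_le_one_iff]
            nlinarith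
        _ = x ^ (γ - 1) := mul_one _
    have h2 : (∫ x in (0:ℝ)..(u ^ p), x ^ (γ - 1)) = (u ^ p) ^ γ / γ := by
      rw [integral_rpow (Or.inl (by linarith))]
      rw [Real.zero_rpow (by linarith : γ - 1 + 1 ≠ 0)]
      rw [show γ - 1 + 1 = γ by ring]
      ring
    linarith
  have hE : 0 < Real.exp (-(u ^ p)) := Real.exp_pos _
  have hub : 0 ≤ u ^ (-1 - β) := (Real.rpow_pos_of_pos hu _).le
  calc K⁻¹ *
          (((η - 1) ^ γ / Real.Gamma γ) *
            ∫ x in (0:ℝ)..(u ^ p), x ^ (γ - 1) * Real.exp (-(x * (η - 1)))) *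
          Real.exp (-(u ^ p)) * u ^ (-1 - β)
      ≤ K⁻¹ * (((η - 1) ^ γ / Real.Gamma γ) * ((u ^ p) ^ γ / γ)) *
          Real.exp (-(u ^ p)) * u ^ (-1 - β) := by
        gcongr
    _ = ((η - 1) ^ γ / (p * K) * (Real.Gamma (γ - β / p) / Real.Gamma (γ + 1))) *
            ((p / Real.Gamma (γ - β / p)) * u ^ (p * γ - β - 1) * Real.exp (-(u ^ p))) := by
        rw [Real.Gamma_add_one hγ.ne', ← Real.rpow_mul hu.le,
            show p * γ - β - 1 = p * γ + (-1 - β) from by ring, Real.rpow_add hu]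
        have hfin : ∀ a g d T E w Kv pv gv : ℝ, g ≠ 0 → d ≠ 0 → Kv ≠ 0 → pv ≠ 0 → gv ≠ 0 →
            Kv⁻¹ * (a / g * (T / gv)) * E * w
              = a / (pv * Kv) * (d / (gv * g)) * (pv / d * (T * w) * E) := by
          intros a g d T E w Kv pv gv h1 h2 h3 h4 h5
          field_simp
        exact hfin _ _ _ _ _ _ _ _ _ hG.ne' hGd.ne' hKpos.ne' hp.ne' hγ.ne'
end

section
/- Fix p > 0, α ∈ (0,2), λ > 0, t > 0 and a probability measure Q on (0,∞), and let γ = 1 + ⌊α/p⌋. Assume C_γ = ((e^{λtp}−1)^γ/γ!) ∫_{(0,∞)} s^γ Q(ds) < ∞ and that κ is well defined (the defining integral is positive and finite). Then for every u > 0, f(u) ≤ V₂ g₂(u), where g₂ is the probability density function of the log-Laplace distribution LL(α, γp), V₂ = κ · (γp/(α(γp − α))) · V₂′, and V₂′ = max{ min{1, e^{−γ} γ^γ (e^{pλt}−1)^γ/γ!}, C_γ }. -/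
open MeasureTheory

lemma exp_tail_le (m : ℕ) {y : ℝ} (hy : 0 ≤ y) :
    Real.exp y - ∑ n ∈ Finset.range m, y ^ n / n.factorial
      ≤ y ^ m / m.factorial * Real.exp y := by
  have hsum := Real.summable_pow_div_factorial y
  have hexp : Real.exp y = ∑' n : ℕ, y ^ n / n.factorial := by
    rw [Real.exp_eq_exp_ℝ, NormedSpace.exp_eq_tsum_div]
  have hadd := Summable.sum_add_tsum_nat_add m hsum
  have htail : Summable (fun i : ℕ => y ^ (i + m) / (i + m).factorial) :=
    (summable_nat_add_iff m).mpr hsum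
  have hbound : ∀ i : ℕ, y ^ (i + m) / (i + m).factorial
      ≤ (y ^ m / m.factorial) * (y ^ i / i.factorial) := by
    intro i
    have hf : (i.factorial * m.factorial : ℝ) ≤ ((i + m).factorial : ℝ) := by
      exact_mod_cast Nat.le_of_dvd (i + m).factorial_pos
        (Nat.factorial_mul_factorial_dvd_factorial_add i m)
    have h1 : y ^ (i + m) / ((i + m).factorial : ℝ)
        ≤ y ^ (i + m) / (i.factorial * m.factorial : ℝ) := by
      apply div_le_div_of_nonneg_left (by positivity) (by positivity) hf
    calc y ^ (i + m) / ((i + m).factorial : ℝ)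
        ≤ y ^ (i + m) / (i.factorial * m.factorial : ℝ) := h1
      _ = (y ^ m / m.factorial) * (y ^ i / i.factorial) := by
          rw [pow_add]; ring
  have h2 : (∑' i : ℕ, y ^ (i + m) / (i + m).factorial)
      ≤ ∑' i : ℕ, (y ^ m / m.factorial) * (y ^ i / i.factorial) :=
    Summable.tsum_le_tsum hbound htail (hsum.mul_left _)
  have h3 : (∑' i : ℕ, (y ^ m / m.factorial) * (y ^ i / i.factorial))
      = y ^ m / m.factorial * Real.exp y := by
    rw [tsum_mul_left, ← hexp]
  linarith [hadd, hexp ▸ hadd]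

lemma pow_mul_exp_neg_le (m : ℕ) (hm : 1 ≤ m) {x : ℝ} (hx : 0 ≤ x) :
    x ^ m * Real.exp (-x) ≤ (m : ℝ) ^ m * Real.exp (-(m : ℝ)) := by
  have hm' : (0:ℝ) < m := by exact_mod_cast hm
  have hz : x ≤ (m : ℝ) * Real.exp (x / m - 1) := by
    have := Real.add_one_le_exp (x / m - 1)
    have h' : x / m ≤ Real.exp (x / m - 1) := by linarith
    calc x = (m : ℝ) * (x / m) := by field_simp
      _ ≤ (m : ℝ) * Real.exp (x / m - 1) := by
          exact mul_le_mul_of_nonneg_left h' hm'.le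
  have hpow : x ^ m ≤ ((m : ℝ) * Real.exp (x / m - 1)) ^ m :=
    pow_le_pow_left₀ hx hz m
  have hrw : ((m : ℝ) * Real.exp (x / m - 1)) ^ m
      = (m : ℝ) ^ m * Real.exp (x - m) := by
    rw [mul_pow, ← Real.exp_nat_mul]
    congr 1
    field_simp
  have hstep : x ^ m * Real.exp (-x)
      ≤ (m : ℝ) ^ m * Real.exp (x - m) * Real.exp (-x) :=
    mul_le_mul_of_nonneg_right (hrw ▸ hpow) (Real.exp_nonneg _)
  calc x ^ m * Real.exp (-x) ≤ (m : ℝ) ^ m * Real.exp (x - m) * Real.exp (-x) := hstep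
    _ = (m : ℝ) ^ m * Real.exp (-(m:ℝ)) := by
        rw [mul_assoc, ← Real.exp_add]; ring_nf

lemma integrable_exp_mul_pow (Q : Measure ℝ) [IsFiniteMeasure Q] (γ : ℕ)
    (hCfin : IntegrableOn (fun s => s ^ γ) (Set.Ioi 0) Q)
    {d : ℝ} (hd : 0 ≤ d) {n : ℕ} (hn : n ≤ γ) :
    IntegrableOn (fun s => Real.exp (-(d * s)) * s ^ n) (Set.Ioi 0) Q := by
  apply Integrable.mono' ((integrable_const (1:ℝ)).add hCfin)
  · exact ((Real.measurable_exp.comp (measurable_const.mul measurable_id).neg).mul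
      (measurable_id.pow_const n)).aestronglyMeasurable
  · filter_upwards [ae_restrict_mem measurableSet_Ioi] with s hs
    have hs0 : (0:ℝ) < s := hs
    have h1 : Real.exp (-(d * s)) ≤ 1 := Real.exp_le_one_iff.mpr (by nlinarith)
    have h2 : s ^ n ≤ 1 + s ^ γ := by
      rcases le_total s 1 with h | h
      · have h3 : s ^ n ≤ 1 := pow_le_one₀ hs0.le h
        have : (0:ℝ) ≤ s ^ γ := by positivity
        linarith
      · have h3 : s ^ n ≤ s ^ γ := pow_le_pow_right₀ h hn
        linarith
    have hnorm : ‖Real.exp (-(d * s)) * s ^ n‖ = Real.exp (-(d * s)) * s ^ n := by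
      rw [Real.norm_eq_abs, abs_of_nonneg (by positivity)]
    rw [hnorm]
    calc Real.exp (-(d * s)) * s ^ n ≤ 1 * s ^ n :=
          mul_le_mul_of_nonneg_right h1 (by positivity)
      _ = s ^ n := one_mul _
      _ ≤ 1 + s ^ γ := h2

set_option maxHeartbeats 1000000 in
/-- Fix p > 0, α ∈ (0,2), λ > 0, t > 0 and a probability measure Q on (0,∞),
and let γ = 1 + ⌊α/p⌋. With ℓ_n(u) = (1/n!)(e^{pλt}−1)^n ∫_{(0,∞)} e^{−u^p s} s^n Q(ds),
κ = (∫_0^∞ (ℓ_0(u) − Σ_{n<γ} ℓ_n(u e^{λt}) u^{np}) u^{−1−α} du)⁻¹ well defined (the defining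
integral is positive and finite), and C_γ = ((e^{λtp}−1)^γ/γ!) ∫ s^γ Q(ds) < ∞, the density
f(u) = κ (ℓ_0(u) − Σ_{n<γ} ℓ_n(u e^{λt}) u^{np}) u^{−1−α} satisfies, for all u > 0,
f(u) ≤ V₂ g₂(u), where g₂ is the pdf of LL(α, γp), V₂ = κ (γp/(α(γp−α))) V₂′, and
V₂′ = max{min{1, e^{−γ} γ^γ (e^{pλt}−1)^γ/γ!}, C_γ}. -/
theorem density_le_logLaplace_bound
    (p α lam t : ℝ) (hp : 0 < p) (hα : α ∈ Set.Ioo (0:ℝ) 2) (hlam : 0 < lam) (ht : 0 < t)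
    (Q : Measure ℝ) [IsProbabilityMeasure Q] (hQ : Q (Set.Ioi (0:ℝ))ᶜ = 0)
    (γ : ℕ) (hγ : γ = 1 + ⌊α / p⌋₊)
    (ell : ℕ → ℝ → ℝ)
    (hell : ∀ n u, ell n u = (1 / (n.factorial : ℝ)) * (Real.exp (p * lam * t) - 1) ^ n *
      ∫ s in Set.Ioi (0:ℝ), Real.exp (-(u ^ p * s)) * s ^ n ∂Q)
    (Cγ : ℝ)
    (hC : Cγ = ((Real.exp (lam * t * p) - 1) ^ γ / (γ.factorial : ℝ)) *
      ∫ s in Set.Ioi (0:ℝ), s ^ γ ∂Q)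
    (hCfin : IntegrableOn (fun s => s ^ γ) (Set.Ioi 0) Q)
    (κ : ℝ)
    (hκ : κ = (∫ u in Set.Ioi (0:ℝ),
        (ell 0 u - ∑ n ∈ Finset.range γ, ell n (u * Real.exp (lam * t)) * u ^ ((n : ℝ) * p)) *
          u ^ (-1 - α))⁻¹)
    (hκfin : IntegrableOn (fun u =>
        (ell 0 u - ∑ n ∈ Finset.range γ, ell n (u * Real.exp (lam * t)) * u ^ ((n : ℝ) * p)) *
          u ^ (-1 - α)) (Set.Ioi 0))
    (hκpos : 0 < ∫ u in Set.Ioi (0:ℝ),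
        (ell 0 u - ∑ n ∈ Finset.range γ, ell n (u * Real.exp (lam * t)) * u ^ ((n : ℝ) * p)) *
          u ^ (-1 - α)) :
    ∀ u > (0:ℝ),
      κ * (ell 0 u - ∑ n ∈ Finset.range γ, ell n (u * Real.exp (lam * t)) * u ^ ((n : ℝ) * p)) *
          u ^ (-1 - α)
        ≤ (κ * (((γ : ℝ) * p) / (α * ((γ : ℝ) * p - α))) *
              max (min 1 (Real.exp (-(γ : ℝ)) * (γ : ℝ) ^ γ *
                (Real.exp (p * lam * t) - 1) ^ γ / (γ.factorial : ℝ))) Cγ) *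
            (if u ≤ 1 then (α / ((γ : ℝ) * p)) * ((γ : ℝ) * p - α) * u ^ ((γ : ℝ) * p - α - 1)
             else (1 - α / ((γ : ℝ) * p)) * α * u ^ (-1 - α)) := by
  intro u hu
  obtain ⟨hα0, hα2⟩ := hα
  have hγ1 : 1 ≤ γ := by omega
  have hγ0 : (0:ℝ) < (γ:ℝ) := by exact_mod_cast Nat.lt_of_lt_of_le Nat.zero_lt_one hγ1
  have hγpα : α < (γ:ℝ) * p := by
    have h1 : α / p < (γ:ℝ) := by
      rw [hγ]
      push_cast
      have := Nat.lt_floor_add_one (α / p)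
      linarith
    calc α = (α / p) * p := by field_simp
      _ < (γ:ℝ) * p := by exact mul_lt_mul_of_pos_right h1 hp
  have hγp0 : (0:ℝ) < (γ:ℝ) * p := by positivity
  have hκ0 : 0 < κ := by rw [hκ]; exact inv_pos.mpr hκpos
  set c := u ^ p with hcdef
  have hc : 0 < c := Real.rpow_pos_of_pos hu p
  set b := Real.exp (p * lam * t) with hbdef
  have hb1 : 1 < b := by
    rw [hbdef]
    exact Real.one_lt_exp_iff.mpr (by positivity)
  set a := b - 1 with hadef
  have ha : 0 < a := by simp only [hadef]; linarith
  have hub : (u * Real.exp (lam * t)) ^ p = c * b := by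
    rw [Real.mul_rpow hu.le (Real.exp_nonneg _), ← Real.exp_mul, hcdef, hbdef]
    congr 2
    ring
  have hcn : ∀ n : ℕ, u ^ ((n:ℝ) * p) = c ^ n := by
    intro n
    rw [mul_comm, Real.rpow_mul hu.le, ← hcdef, Real.rpow_natCast]
  clear_value c b a
  -- integrability of the pieces
  have hint : ∀ n, n ≤ γ → IntegrableOn
      (fun s => Real.exp (-(c * b * s)) * (a * c * s) ^ n / n.factorial) (Set.Ioi 0) Q := by
    intro n hn
    have h0 := integrable_exp_mul_pow Q γ hCfin (d := c * b) (by positivity) hn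
    have h1 := h0.const_mul ((a * c) ^ n / (n.factorial : ℝ))
    have heq : (fun s => ((a * c) ^ n / (n.factorial : ℝ)) *
        (Real.exp (-(c * b * s)) * s ^ n))
        = fun s => Real.exp (-(c * b * s)) * (a * c * s) ^ n / n.factorial := by
      funext s; simp only [mul_pow]; ring
    rw [← heq]
    exact h1
  have hint0 : IntegrableOn (fun s => Real.exp (-(c * s))) (Set.Ioi 0) Q := by
    have := integrable_exp_mul_pow Q γ hCfin (d := c) hc.le (Nat.zero_le γ)
    simpa using this
  have hintsum : IntegrableOn (fun s => ∑ n ∈ Finset.range γ,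
      Real.exp (-(c * b * s)) * (a * c * s) ^ n / n.factorial) (Set.Ioi 0) Q :=
    integrable_finset_sum _ (fun n hn => hint n (Finset.mem_range.mp hn).le)
  have hintD : IntegrableOn (fun s => Real.exp (-(c * s)) - ∑ n ∈ Finset.range γ,
      Real.exp (-(c * b * s)) * (a * c * s) ^ n / n.factorial) (Set.Ioi 0) Q :=
    hint0.sub hintsum
  -- the density numerator as a single integral
  have h0 : ell 0 u = ∫ s in Set.Ioi 0, Real.exp (-(c * s)) ∂Q := by
    rw [hell 0 u]
    simp [← hcdef]
  have hterm : ∀ n ∈ Finset.range γ,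
      ell n (u * Real.exp (lam * t)) * u ^ ((n:ℝ) * p)
        = ∫ s in Set.Ioi 0, Real.exp (-(c * b * s)) * (a * c * s) ^ n / n.factorial ∂Q := by
    intro n _
    rw [hell, hcn n]
    simp only [hub]
    have heq : ∀ s : ℝ, Real.exp (-(c * b * s)) * (a * c * s) ^ n / (n.factorial : ℝ)
        = (a ^ n * c ^ n / (n.factorial : ℝ)) * (Real.exp (-(c * b * s)) * s ^ n) := by
      intro s; simp only [mul_pow]; ring
    simp only [heq]
    rw [MeasureTheory.integral_const_mul]
    ring
  have hLHS : ell 0 u - ∑ n ∈ Finset.range γ,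
      ell n (u * Real.exp (lam * t)) * u ^ ((n:ℝ) * p)
      = ∫ s in Set.Ioi 0, (Real.exp (-(c * s)) - ∑ n ∈ Finset.range γ,
          Real.exp (-(c * b * s)) * (a * c * s) ^ n / n.factorial) ∂Q := by
    rw [h0, Finset.sum_congr rfl hterm,
      ← integral_finset_sum _ (fun n hn => hint n (Finset.mem_range.mp hn).le),
      ← integral_sub hint0 hintsum]
  -- pointwise factorization and bounds
  have hfac : ∀ s : ℝ, 0 < s →
      Real.exp (-(c * s)) - ∑ n ∈ Finset.range γ,
        Real.exp (-(c * b * s)) * (a * c * s) ^ n / n.factorial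
      = Real.exp (-(c * s)) * (1 - Real.exp (-(a * c * s)) *
          ∑ n ∈ Finset.range γ, (a * c * s) ^ n / n.factorial) := by
    intro s _
    have hterm2 : ∀ n : ℕ, Real.exp (-(c * b * s)) * (a * c * s) ^ n / (n.factorial : ℝ)
        = Real.exp (-(c * s)) * (Real.exp (-(a * c * s)) * ((a * c * s) ^ n / n.factorial)) := by
      intro n
      rw [← mul_assoc, ← Real.exp_add,
        show -(c * s) + -(a * c * s) = -(c * b * s) from by rw [hadef]; ring]
      ring
    rw [Finset.sum_congr rfl (fun n _ => hterm2 n), ← Finset.mul_sum, ← Finset.mul_sum]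
    ring
  have hone : ∀ s : ℝ, 0 < s →
      1 - Real.exp (-(a * c * s)) *
        ∑ n ∈ Finset.range γ, (a * c * s) ^ n / n.factorial ≤ 1 := by
    intro s hs
    have h1 : (0:ℝ) ≤ Real.exp (-(a * c * s)) *
        ∑ n ∈ Finset.range γ, (a * c * s) ^ n / n.factorial := by
      apply mul_nonneg (Real.exp_nonneg _)
      apply Finset.sum_nonneg
      intro n _
      positivity
    linarith
  have htailb : ∀ s : ℝ, 0 < s →
      1 - Real.exp (-(a * c * s)) *
        ∑ n ∈ Finset.range γ, (a * c * s) ^ n / n.factorial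
      ≤ (a * c * s) ^ γ / γ.factorial := by
    intro s hs
    set y := a * c * s with hydef
    have hy : 0 ≤ y := by positivity
    have ht1 := exp_tail_le γ hy
    have hxy : Real.exp (-y) * Real.exp y = 1 := by
      rw [← Real.exp_add]; simp
    have hmul := mul_le_mul_of_nonneg_left ht1 (Real.exp_nonneg (-y))
    rw [mul_sub, hxy,
      show Real.exp (-y) * (y ^ γ / γ.factorial * Real.exp y)
        = y ^ γ / (γ.factorial : ℝ) * (Real.exp (-y) * Real.exp y) from by ring,
      hxy, mul_one] at hmul
    linarith
  have hDint := hLHS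
  -- now split on u ≤ 1
  rw [hDint]
  by_cases hu1 : u ≤ 1
  · rw [if_pos hu1]
    -- pointwise bound D s ≤ (a^γ c^γ / γ!) s^γ
    have hbd : ∀ s ∈ Set.Ioi (0:ℝ),
        Real.exp (-(c * s)) - ∑ n ∈ Finset.range γ,
          Real.exp (-(c * b * s)) * (a * c * s) ^ n / n.factorial
        ≤ (a ^ γ * c ^ γ / γ.factorial) * s ^ γ := by
      intro s hs
      have hs0 : (0:ℝ) < s := hs
      rw [hfac s hs0]
      have h1 := htailb s hs0
      have h2 : Real.exp (-(c * s)) * (1 - Real.exp (-(a * c * s)) *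
          ∑ n ∈ Finset.range γ, (a * c * s) ^ n / n.factorial)
          ≤ Real.exp (-(c * s)) * ((a * c * s) ^ γ / γ.factorial) :=
        mul_le_mul_of_nonneg_left h1 (Real.exp_nonneg _)
      have h3 : Real.exp (-(c * s)) * ((a * c * s) ^ γ / γ.factorial)
          ≤ (a * c * s) ^ γ / γ.factorial := by
        have he : Real.exp (-(c * s)) ≤ 1 := Real.exp_le_one_iff.mpr (by nlinarith)
        have : (0:ℝ) ≤ (a * c * s) ^ γ / γ.factorial := by positivity
        nlinarith
      calc Real.exp (-(c * s)) * (1 - Real.exp (-(a * c * s)) *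
              ∑ n ∈ Finset.range γ, (a * c * s) ^ n / n.factorial)
          ≤ (a * c * s) ^ γ / γ.factorial := le_trans h2 h3
        _ = (a ^ γ * c ^ γ / γ.factorial) * s ^ γ := by simp only [mul_pow]; ring
    have hintbd : IntegrableOn (fun s => (a ^ γ * c ^ γ / (γ.factorial : ℝ)) * s ^ γ)
        (Set.Ioi 0) Q := hCfin.const_mul _
    have hIle : (∫ s in Set.Ioi 0, (Real.exp (-(c * s)) - ∑ n ∈ Finset.range γ,
          Real.exp (-(c * b * s)) * (a * c * s) ^ n / n.factorial) ∂Q)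
        ≤ Cγ * c ^ γ := by
      calc (∫ s in Set.Ioi 0, (Real.exp (-(c * s)) - ∑ n ∈ Finset.range γ,
            Real.exp (-(c * b * s)) * (a * c * s) ^ n / n.factorial) ∂Q)
          ≤ ∫ s in Set.Ioi 0, (a ^ γ * c ^ γ / (γ.factorial : ℝ)) * s ^ γ ∂Q :=
            setIntegral_mono_on hintD hintbd measurableSet_Ioi hbd
        _ = (a ^ γ * c ^ γ / (γ.factorial : ℝ)) * ∫ s in Set.Ioi 0, s ^ γ ∂Q :=
            MeasureTheory.integral_const_mul _ _
        _ = Cγ * c ^ γ := by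
            rw [hC, show Real.exp (lam * t * p) = b from by
              rw [hbdef]; congr 1; ring, ← hadef]
            ring
    -- exponent juggling
    have hup : u ^ ((γ:ℝ) * p - α - 1) = c ^ γ * u ^ (-1 - α) := by
      rw [show (γ:ℝ) * p - α - 1 = (γ:ℝ) * p + (-1 - α) from by ring,
        Real.rpow_add hu, show (γ:ℝ) * p = p * (γ:ℝ) from mul_comm _ _,
        Real.rpow_mul hu.le, ← hcdef, Real.rpow_natCast]
    have hα' : α ≠ 0 := ne_of_gt hα0
    have hγp' : (γ:ℝ) * p ≠ 0 := ne_of_gt hγp0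
    have hγpα' : (γ:ℝ) * p - α ≠ 0 := ne_of_gt (by linarith)
    have hR : (((γ:ℝ) * p) / (α * ((γ:ℝ) * p - α))) *
        ((α / ((γ:ℝ) * p)) * ((γ:ℝ) * p - α)) = 1 := by
      field_simp
    set V' := max (min 1 (Real.exp (-(γ:ℝ)) * (γ:ℝ) ^ γ * a ^ γ / (γ.factorial : ℝ))) Cγ
      with hV'def
    have hCV : Cγ ≤ V' := le_max_right _ _
    have hRHS : (κ * (((γ:ℝ) * p) / (α * ((γ:ℝ) * p - α))) * V') *
        ((α / ((γ:ℝ) * p)) * ((γ:ℝ) * p - α) * u ^ ((γ:ℝ) * p - α - 1))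
        = κ * (V' * c ^ γ) * u ^ (-1 - α) := by
      calc (κ * (((γ:ℝ) * p) / (α * ((γ:ℝ) * p - α))) * V') *
            ((α / ((γ:ℝ) * p)) * ((γ:ℝ) * p - α) * u ^ ((γ:ℝ) * p - α - 1))
          = κ * V' * u ^ ((γ:ℝ) * p - α - 1) *
            ((((γ:ℝ) * p) / (α * ((γ:ℝ) * p - α))) *
              ((α / ((γ:ℝ) * p)) * ((γ:ℝ) * p - α))) := by ring
        _ = κ * V' * u ^ ((γ:ℝ) * p - α - 1) := by rw [hR, mul_one]
        _ = κ * (V' * c ^ γ) * u ^ (-1 - α) := by rw [hup]; ring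
    rw [hRHS]
    have hc' : (0:ℝ) ≤ c ^ γ := by positivity
    have hu' : (0:ℝ) ≤ u ^ (-1 - α) := Real.rpow_nonneg hu.le _
    apply mul_le_mul_of_nonneg_right _ hu'
    apply mul_le_mul_of_nonneg_left _ hκ0.le
    calc (∫ s in Set.Ioi 0, (Real.exp (-(c * s)) - ∑ n ∈ Finset.range γ,
          Real.exp (-(c * b * s)) * (a * c * s) ^ n / n.factorial) ∂Q)
        ≤ Cγ * c ^ γ := hIle
      _ ≤ V' * c ^ γ := mul_le_mul_of_nonneg_right hCV hc'
  · rw [if_neg hu1]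
    have hu2 : 1 < u := lt_of_not_ge hu1
    set M := min 1 (Real.exp (-(γ:ℝ)) * (γ:ℝ) ^ γ * a ^ γ / (γ.factorial : ℝ)) with hMdef
    have hbd : ∀ s ∈ Set.Ioi (0:ℝ),
        Real.exp (-(c * s)) - ∑ n ∈ Finset.range γ,
          Real.exp (-(c * b * s)) * (a * c * s) ^ n / n.factorial ≤ M := by
      intro s hs
      have hs0 : (0:ℝ) < s := hs
      rw [hfac s hs0]
      apply le_min
      · calc Real.exp (-(c * s)) * (1 - Real.exp (-(a * c * s)) *
              ∑ n ∈ Finset.range γ, (a * c * s) ^ n / n.factorial)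
            ≤ Real.exp (-(c * s)) * 1 :=
              mul_le_mul_of_nonneg_left (hone s hs0) (Real.exp_nonneg _)
          _ = Real.exp (-(c * s)) := mul_one _
          _ ≤ 1 := Real.exp_le_one_iff.mpr (by nlinarith)
      · have h1 := htailb s hs0
        have h2 : Real.exp (-(c * s)) * (1 - Real.exp (-(a * c * s)) *
            ∑ n ∈ Finset.range γ, (a * c * s) ^ n / n.factorial)
            ≤ Real.exp (-(c * s)) * ((a * c * s) ^ γ / γ.factorial) :=
          mul_le_mul_of_nonneg_left h1 (Real.exp_nonneg _)
        have h3 : Real.exp (-(c * s)) * ((a * c * s) ^ γ / γ.factorial)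
            = (a ^ γ / γ.factorial) * ((c * s) ^ γ * Real.exp (-(c * s))) := by
          rw [show a * c * s = a * (c * s) from by ring, mul_pow]
          ring
        have h4 : (c * s) ^ γ * Real.exp (-(c * s))
            ≤ (γ:ℝ) ^ γ * Real.exp (-(γ:ℝ)) :=
          pow_mul_exp_neg_le γ hγ1 (by positivity)
        have h5 : (a ^ γ / (γ.factorial : ℝ)) * ((c * s) ^ γ * Real.exp (-(c * s)))
            ≤ (a ^ γ / γ.factorial) * ((γ:ℝ) ^ γ * Real.exp (-(γ:ℝ))) :=
          mul_le_mul_of_nonneg_left h4 (by positivity)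
        calc Real.exp (-(c * s)) * (1 - Real.exp (-(a * c * s)) *
              ∑ n ∈ Finset.range γ, (a * c * s) ^ n / n.factorial)
            ≤ Real.exp (-(c * s)) * ((a * c * s) ^ γ / γ.factorial) := h2
          _ = (a ^ γ / γ.factorial) * ((c * s) ^ γ * Real.exp (-(c * s))) := h3
          _ ≤ (a ^ γ / γ.factorial) * ((γ:ℝ) ^ γ * Real.exp (-(γ:ℝ))) := h5
          _ = Real.exp (-(γ:ℝ)) * (γ:ℝ) ^ γ * a ^ γ / (γ.factorial : ℝ) := by ring
    have hQ1 : Q (Set.Ioi (0:ℝ)) = 1 := by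
      have hcompl := measure_compl (μ := Q) (s := (Set.Ioi (0:ℝ))ᶜ) measurableSet_Ioi.compl (measure_ne_top Q _)
      rw [compl_compl, hQ, measure_univ] at hcompl
      simpa using hcompl
    have hIle : (∫ s in Set.Ioi 0, (Real.exp (-(c * s)) - ∑ n ∈ Finset.range γ,
          Real.exp (-(c * b * s)) * (a * c * s) ^ n / n.factorial) ∂Q) ≤ M := by
      calc (∫ s in Set.Ioi 0, (Real.exp (-(c * s)) - ∑ n ∈ Finset.range γ,
            Real.exp (-(c * b * s)) * (a * c * s) ^ n / n.factorial) ∂Q)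
          ≤ ∫ _ in Set.Ioi (0:ℝ), M ∂Q :=
            setIntegral_mono_on hintD (integrable_const M) measurableSet_Ioi hbd
        _ = M := by rw [setIntegral_const, measureReal_def, hQ1]; simp
    have hα' : α ≠ 0 := ne_of_gt hα0
    have hγp' : (γ:ℝ) * p ≠ 0 := ne_of_gt hγp0
    have hγpα' : (γ:ℝ) * p - α ≠ 0 := ne_of_gt (by linarith)
    have hR : (((γ:ℝ) * p) / (α * ((γ:ℝ) * p - α))) *
        ((1 - α / ((γ:ℝ) * p)) * α) = 1 := by
      field_simp
    set V' := max M Cγ with hV'def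
    have hMV : M ≤ V' := le_max_left _ _
    have hRHS : (κ * (((γ:ℝ) * p) / (α * ((γ:ℝ) * p - α))) * V') *
        ((1 - α / ((γ:ℝ) * p)) * α * u ^ (-1 - α))
        = κ * V' * u ^ (-1 - α) := by
      calc (κ * (((γ:ℝ) * p) / (α * ((γ:ℝ) * p - α))) * V') *
            ((1 - α / ((γ:ℝ) * p)) * α * u ^ (-1 - α))
          = κ * V' * u ^ (-1 - α) * ((((γ:ℝ) * p) / (α * ((γ:ℝ) * p - α))) *
              ((1 - α / ((γ:ℝ) * p)) * α)) := by ring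
        _ = κ * V' * u ^ (-1 - α) := by rw [hR, mul_one]
    rw [hRHS]
    have hu' : (0:ℝ) ≤ u ^ (-1 - α) := Real.rpow_nonneg hu.le _
    apply mul_le_mul_of_nonneg_right _ hu'
    apply mul_le_mul_of_nonneg_left _ hκ0.le
    exact le_trans hIle hMV
end

section
/- Fix p > 0, α ∈ (0,2), λ > 0, t > 0 and a probability measure Q on (0,∞), and let γ = 1 + ⌊α/p⌋. Let ζ = sup{c > 0 : Q((0,c)) = 0} and assume ζ > 0. Assume C_γ = ((e^{λtp}−1)^γ/γ!) ∫_{(0,∞)} s^γ Q(ds) < ∞ and that κ is well defined. Then for every u > 0, f(u) ≤ V₃ g₃(u), where g₃(u) = (p ζ^{γ−α/p}/Γ(γ − α/p)) u^{pγ−α−1} e^{−u^p ζ} is the probability density function of the generalized gamma distribution GGa(pγ−α, p, ζ) and V₃ = κ ζ^{α/p−γ} (Γ(γ − α/p)/p) C_γ. -/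
open MeasureTheory


lemma exp_remainder_le (γ : ℕ) (y : ℝ) (hy : 0 ≤ y) :
    Real.exp y - ∑ n ∈ Finset.range γ, y ^ n / n.factorial
      ≤ y ^ γ / γ.factorial * Real.exp y := by
  have hsum : Summable (fun n : ℕ => y ^ n / n.factorial) :=
    Real.summable_pow_div_factorial y
  have hexp : Real.exp y = ∑' n : ℕ, y ^ n / n.factorial := by
    rw [Real.exp_eq_exp_ℝ, NormedSpace.exp_eq_tsum_div]
  have hsplit := Summable.sum_add_tsum_nat_add γ hsum
  have htail : Real.exp y - ∑ n ∈ Finset.range γ, y ^ n / n.factorial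
      = ∑' i : ℕ, y ^ (i + γ) / (i + γ).factorial := by
    rw [hexp, ← hsplit]; ring
  rw [htail]
  have hterm : ∀ i : ℕ, y ^ (i + γ) / (i + γ).factorial
      ≤ y ^ γ / γ.factorial * (y ^ i / i.factorial) := by
    intro i
    rw [pow_add]
    have hfac : (γ.factorial : ℝ) * i.factorial ≤ ((i + γ).factorial : ℝ) := by
      have := Nat.factorial_mul_factorial_dvd_factorial_add i γ
      exact_mod_cast Nat.le_of_dvd (Nat.factorial_pos _) (by rwa [mul_comm] at this)
    have h1 : (0:ℝ) < (i + γ).factorial := by positivity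
    have h2 : (0:ℝ) < (γ.factorial : ℝ) * i.factorial := by positivity
    calc y ^ i * y ^ γ / (i + γ).factorial
        ≤ y ^ i * y ^ γ / ((γ.factorial : ℝ) * i.factorial) := by
          apply div_le_div_of_nonneg_left (by positivity) h2 hfac
      _ = y ^ γ / γ.factorial * (y ^ i / i.factorial) := by ring
  calc ∑' i : ℕ, y ^ (i + γ) / (i + γ).factorial
      ≤ ∑' i : ℕ, y ^ γ / γ.factorial * (y ^ i / i.factorial) := by
        apply Summable.tsum_le_tsum hterm ((summable_nat_add_iff γ).mpr hsum) (hsum.mul_left _)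
    _ = y ^ γ / γ.factorial * Real.exp y := by rw [tsum_mul_left, ← hexp]

lemma supp_null (Q : Measure ℝ) (ζ : ℝ)
    (hζdef : ζ = sSup {c : ℝ | 0 < c ∧ Q (Set.Ioo 0 c) = 0}) (hζ : 0 < ζ) :
    Q (Set.Ioo 0 ζ) = 0 := by
  set S := {c : ℝ | 0 < c ∧ Q (Set.Ioo 0 c) = 0} with hS
  have hne : S.Nonempty := by
    by_contra h
    rw [Set.not_nonempty_iff_eq_empty] at h
    rw [hζdef, h, Real.sSup_empty] at hζ; exact lt_irrefl _ hζ
  have hbdd : BddAbove S := by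
    by_contra h
    rw [hζdef, Real.sSup_of_not_bddAbove h] at hζ; exact lt_irrefl _ hζ
  have key : ∀ c : ℝ, c < ζ → Q (Set.Ioo 0 c) = 0 := by
    intro c hc
    rw [hζdef] at hc
    obtain ⟨c', hc'S, hcc'⟩ := (lt_csSup_iff hbdd hne).mp hc
    exact measure_mono_null (Set.Ioo_subset_Ioo_right hcc'.le) hc'S.2
  have hsub : Set.Ioo 0 ζ ⊆ ⋃ n : ℕ, Set.Ioo 0 (ζ - ζ / (n + 1)) := by
    rintro x ⟨hx0, hxζ⟩
    have hzx : 0 < ζ - x := sub_pos.mpr hxζ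
    obtain ⟨n, hn⟩ := exists_nat_gt (ζ / (ζ - x))
    refine Set.mem_iUnion.mpr ⟨n, hx0, ?_⟩
    have hn1 : ζ / (ζ - x) < (n : ℝ) + 1 := hn.trans (lt_add_one _)
    have : ζ / ((n : ℝ) + 1) < ζ - x := by
      rw [div_lt_iff₀ (by positivity)]
      rw [div_lt_iff₀ hzx] at hn1
      linarith [hn1]
    linarith
  refine measure_mono_null hsub (measure_iUnion_null fun n => ?_)
  refine key _ ?_
  have : 0 < ζ / ((n : ℝ) + 1) := by positivity
  linarith


/-- In the setting of the transition-law density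
f(u) = κ (ℓ_0(u) − Σ_{n<γ} ℓ_n(u e^{λt}) u^{np}) u^{−1−α}, with
ζ = sup{c > 0 : Q((0,c)) = 0} > 0 and C_γ = ((e^{λtp}−1)^γ/γ!) ∫ s^γ Q(ds) < ∞
and κ well defined, we have f(u) ≤ V₃ g₃(u) for all u > 0, where
g₃(u) = (p ζ^{γ−α/p}/Γ(γ − α/p)) u^{pγ−α−1} e^{−u^p ζ} is the pdf of GGa(pγ−α, p, ζ)
and V₃ = κ ζ^{α/p−γ} (Γ(γ − α/p)/p) C_γ. -/
theorem density_le_generalized_gamma_bound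
    (p α lam t : ℝ) (hp : 0 < p) (hα : α ∈ Set.Ioo (0:ℝ) 2) (hlam : 0 < lam) (ht : 0 < t)
    (Q : Measure ℝ) [IsProbabilityMeasure Q] (hQ : Q (Set.Ioi (0:ℝ))ᶜ = 0)
    (γ : ℕ) (hγ : γ = 1 + ⌊α / p⌋₊)
    (ell : ℕ → ℝ → ℝ)
    (hell : ∀ n u, ell n u = (1 / (n.factorial : ℝ)) * (Real.exp (p * lam * t) - 1) ^ n *
      ∫ s in Set.Ioi (0:ℝ), Real.exp (-(u ^ p * s)) * s ^ n ∂Q)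
    (ζ : ℝ) (hζdef : ζ = sSup {c : ℝ | 0 < c ∧ Q (Set.Ioo 0 c) = 0}) (hζ : 0 < ζ)
    (Cγ : ℝ)
    (hC : Cγ = ((Real.exp (lam * t * p) - 1) ^ γ / (γ.factorial : ℝ)) *
      ∫ s in Set.Ioi (0:ℝ), s ^ γ ∂Q)
    (hCfin : IntegrableOn (fun s => s ^ γ) (Set.Ioi 0) Q)
    (κ : ℝ)
    (hκ : κ = (∫ u in Set.Ioi (0:ℝ),
        (ell 0 u - ∑ n ∈ Finset.range γ, ell n (u * Real.exp (lam * t)) * u ^ ((n : ℝ) * p)) *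
          u ^ (-1 - α))⁻¹)
    (hκfin : IntegrableOn (fun u =>
        (ell 0 u - ∑ n ∈ Finset.range γ, ell n (u * Real.exp (lam * t)) * u ^ ((n : ℝ) * p)) *
          u ^ (-1 - α)) (Set.Ioi 0))
    (hκpos : 0 < ∫ u in Set.Ioi (0:ℝ),
        (ell 0 u - ∑ n ∈ Finset.range γ, ell n (u * Real.exp (lam * t)) * u ^ ((n : ℝ) * p)) *
          u ^ (-1 - α)) :
    ∀ u > (0:ℝ),
      κ * (ell 0 u - ∑ n ∈ Finset.range γ, ell n (u * Real.exp (lam * t)) * u ^ ((n : ℝ) * p)) *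
          u ^ (-1 - α)
        ≤ (κ * ζ ^ (α / p - (γ : ℝ)) * (Real.Gamma ((γ : ℝ) - α / p) / p) * Cγ) *
            ((p * ζ ^ ((γ : ℝ) - α / p) / Real.Gamma ((γ : ℝ) - α / p)) *
              u ^ (p * (γ : ℝ) - α - 1) * Real.exp (-(u ^ p * ζ))) := by
  intro u hu
  set x := u ^ p with hxdef
  have hx : 0 < x := Real.rpow_pos_of_pos hu p
  set b := Real.exp (p * lam * t) with hbdef
  have hb0 : 0 < b := Real.exp_pos _
  have hb1 : 1 ≤ b := Real.one_le_exp (by positivity)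
  -- (u * e^{λt})^p = x * b
  have h_e_pow : (u * Real.exp (lam * t)) ^ p = x * b := by
    rw [Real.mul_rpow hu.le (Real.exp_pos _).le, ← Real.exp_mul, hxdef, hbdef]
    ring_nf
  -- u^{n p} = x^n
  have h_upow : ∀ n : ℕ, u ^ ((n : ℝ) * p) = x ^ n := by
    intro n
    rw [mul_comm, Real.rpow_mul hu.le, Real.rpow_natCast]
  -- integrability of the kernels
  have hcont : ∀ (c : ℝ) (n : ℕ),
      AEStronglyMeasurable (fun s : ℝ => Real.exp (-(c * s)) * s ^ n) (Q.restrict (Set.Ioi 0)) := by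
    intro c n
    exact (((Real.continuous_exp.comp (continuous_const.mul continuous_id).neg).mul
      (continuous_pow n))).aestronglyMeasurable
  have hgint : IntegrableOn (fun s : ℝ => 1 + s ^ γ) (Set.Ioi 0) Q := by
    apply Integrable.add _ hCfin
    exact (integrableOn_const_iff).mpr (Or.inr (measure_lt_top _ _))
  have hint : ∀ (c : ℝ), 0 ≤ c → ∀ n : ℕ, n ≤ γ →
      IntegrableOn (fun s : ℝ => Real.exp (-(c * s)) * s ^ n) (Set.Ioi 0) Q := by
    intro c hc n hn
    apply Integrable.mono' hgint (hcont c n)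
    filter_upwards [ae_restrict_mem measurableSet_Ioi] with s hs
    have hs0 : (0:ℝ) < s := hs
    have h1 : Real.exp (-(c * s)) ≤ 1 := Real.exp_le_one_iff.mpr (by nlinarith)
    have h2 : s ^ n ≤ 1 + s ^ γ := by
      rcases le_or_gt s 1 with h | h
      · have := pow_le_one₀ hs0.le h (n := n); nlinarith [pow_nonneg hs0.le γ]
      · have := pow_le_pow_right₀ h.le hn; nlinarith
    have hnorm : ‖Real.exp (-(c * s)) * s ^ n‖ = Real.exp (-(c * s)) * s ^ n := by
      rw [Real.norm_eq_abs, abs_of_nonneg (by positivity)]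
    rw [hnorm]
    nlinarith [Real.exp_pos (-(c * s)), pow_nonneg hs0.le n]
  -- Step A : integral representation
  have hsummand : ∀ n ∈ Finset.range γ,
      ell n (u * Real.exp (lam * t)) * u ^ ((n : ℝ) * p)
        = ∫ s in Set.Ioi (0:ℝ),
            (x * (b - 1)) ^ n / n.factorial * (Real.exp (-(x * b * s)) * s ^ n) ∂Q := by
    intro n _
    rw [hell]
    simp only [h_e_pow, h_upow]
    rw [MeasureTheory.integral_const_mul, mul_pow]
    ring
  have hintsummand : ∀ n ∈ Finset.range γ,
      IntegrableOn (fun s : ℝ =>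
        (x * (b - 1)) ^ n / n.factorial * (Real.exp (-(x * b * s)) * s ^ n)) (Set.Ioi 0) Q := by
    intro n hn
    exact ((hint (x * b) (by positivity) n (Finset.mem_range.mp hn).le).const_mul _)
  have hint0 : IntegrableOn (fun s : ℝ => Real.exp (-(x * s))) (Set.Ioi 0) Q := by
    have := hint x hx.le 0 (Nat.zero_le _)
    simpa using this
  have hA : ell 0 u - ∑ n ∈ Finset.range γ, ell n (u * Real.exp (lam * t)) * u ^ ((n : ℝ) * p)
      = ∫ s in Set.Ioi (0:ℝ),
          (Real.exp (-(x * s)) - ∑ n ∈ Finset.range γ,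
            (x * (b - 1)) ^ n / n.factorial * (Real.exp (-(x * b * s)) * s ^ n)) ∂Q := by
    have h0 : ell 0 u = ∫ s in Set.Ioi (0:ℝ), Real.exp (-(x * s)) ∂Q := by
      rw [hell]
      simp only [← hxdef, pow_zero, mul_one, Nat.factorial_zero, Nat.cast_one, one_mul, div_one]
    rw [h0, Finset.sum_congr rfl hsummand,
      ← MeasureTheory.integral_finset_sum _ hintsummand,
      ← MeasureTheory.integral_sub hint0 (MeasureTheory.integrable_finset_sum _ hintsummand)]
  -- a.e. lower bound of support
  have hQnull : Q (Set.Ioo 0 ζ) = 0 := supp_null Q ζ hζdef hζ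
  have hae : ∀ᵐ s ∂(Q.restrict (Set.Ioi 0)), ζ ≤ s := by
    rw [ae_iff]
    have : {s : ℝ | ¬ ζ ≤ s} = Set.Iio ζ := by ext s; simp [Set.mem_Iio, not_le]
    rw [this, Measure.restrict_apply measurableSet_Iio]
    rw [Set.Iio_inter_Ioi]
    exact measure_mono_null (Set.Ioo_subset_Ioo_left le_rfl) (by
      have : Set.Ioo (0:ℝ) ζ = Set.Ioo 0 ζ := rfl
      exact hQnull) |>.symm ▸ (by
        have : Q (Set.Ioo 0 ζ) = 0 := hQnull
        simpa [Set.Iio_inter_Ioi] using this)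
  -- pointwise bound
  have hpt : ∀ s : ℝ, 0 < s → ζ ≤ s →
      Real.exp (-(x * s)) - ∑ n ∈ Finset.range γ,
          (x * (b - 1)) ^ n / n.factorial * (Real.exp (-(x * b * s)) * s ^ n)
        ≤ ((b - 1) ^ γ / γ.factorial * Real.exp (-(x * ζ)) * x ^ γ) * s ^ γ := by
    intro s hs0 hsζ
    set z := x * (b - 1) * s with hzdef
    have hz0 : 0 ≤ z := mul_nonneg (mul_nonneg hx.le (by linarith)) hs0.le
    have hsum_eq : ∑ n ∈ Finset.range γ,
        (x * (b - 1)) ^ n / n.factorial * (Real.exp (-(x * b * s)) * s ^ n)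
        = Real.exp (-(x * b * s)) * ∑ n ∈ Finset.range γ, z ^ n / n.factorial := by
      rw [Finset.mul_sum]
      refine Finset.sum_congr rfl fun n _ => ?_
      simp only [hzdef, mul_pow]
      ring
    have hsplit : Real.exp (-(x * s)) = Real.exp (-(x * b * s)) * Real.exp z := by
      rw [← Real.exp_add, hzdef]; ring_nf
    calc Real.exp (-(x * s)) - ∑ n ∈ Finset.range γ,
          (x * (b - 1)) ^ n / n.factorial * (Real.exp (-(x * b * s)) * s ^ n)
        = Real.exp (-(x * b * s)) *
            (Real.exp z - ∑ n ∈ Finset.range γ, z ^ n / n.factorial) := by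
          rw [hsum_eq, hsplit]; ring
      _ ≤ Real.exp (-(x * b * s)) * (z ^ γ / γ.factorial * Real.exp z) :=
          mul_le_mul_of_nonneg_left (exp_remainder_le γ z hz0) (Real.exp_pos _).le
      _ = z ^ γ / γ.factorial * Real.exp (-(x * s)) := by
          rw [hsplit]; ring
      _ ≤ z ^ γ / γ.factorial * Real.exp (-(x * ζ)) := by
          apply mul_le_mul_of_nonneg_left _ (by positivity)
          exact Real.exp_le_exp.mpr (by nlinarith)
      _ = ((b - 1) ^ γ / γ.factorial * Real.exp (-(x * ζ)) * x ^ γ) * s ^ γ := by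
          rw [hzdef, mul_pow, mul_pow]; ring
  -- Step B : integral bound
  have hintF : IntegrableOn (fun s : ℝ =>
      Real.exp (-(x * s)) - ∑ n ∈ Finset.range γ,
        (x * (b - 1)) ^ n / n.factorial * (Real.exp (-(x * b * s)) * s ^ n)) (Set.Ioi 0) Q :=
    hint0.sub (MeasureTheory.integrable_finset_sum _ hintsummand)
  have hB : (∫ s in Set.Ioi (0:ℝ),
      (Real.exp (-(x * s)) - ∑ n ∈ Finset.range γ,
        (x * (b - 1)) ^ n / n.factorial * (Real.exp (-(x * b * s)) * s ^ n)) ∂Q)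
      ≤ Cγ * x ^ γ * Real.exp (-(x * ζ)) := by
    have hmono := MeasureTheory.integral_mono_ae hintF (hCfin.const_mul
      ((b - 1) ^ γ / γ.factorial * Real.exp (-(x * ζ)) * x ^ γ)) ?_
    · rw [MeasureTheory.integral_const_mul] at hmono
      refine hmono.trans_eq ?_
      have hbe : Real.exp (lam * t * p) = b := by rw [hbdef]; congr 1; ring
      rw [hC, hbe]
      ring
    · filter_upwards [ae_restrict_mem measurableSet_Ioi, hae] with s hs hsζ
      exact hpt s hs hsζ
  -- positivity facts
  have hκ0 : 0 < κ := by rw [hκ]; exact inv_pos.mpr hκpos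
  have hγα : α / p < (γ : ℝ) := by
    rw [hγ]; push_cast
    linarith [Nat.lt_floor_add_one (α / p)]
  have hΓ : 0 < Real.Gamma ((γ : ℝ) - α / p) :=
    Real.Gamma_pos_of_pos (by linarith)
  -- right-hand side simplification
  have h2 : u ^ (p * (γ : ℝ) - α - 1) = x ^ γ * u ^ (-1 - α) := by
    rw [show p * (γ : ℝ) - α - 1 = p * (γ : ℝ) + (-1 - α) by ring,
      Real.rpow_add hu, Real.rpow_mul hu.le, Real.rpow_natCast]
  have h1 : ζ ^ (α / p - (γ : ℝ)) * ζ ^ ((γ : ℝ) - α / p) = 1 := by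
    rw [← Real.rpow_add hζ, show α / p - (γ : ℝ) + ((γ : ℝ) - α / p) = 0 by ring,
      Real.rpow_zero]
  have h3 : Real.Gamma ((γ : ℝ) - α / p) / p * (p / Real.Gamma ((γ : ℝ) - α / p)) = 1 := by
    rw [div_mul_div_comm, mul_comm p (Real.Gamma ((γ : ℝ) - α / p))]
    exact div_self (by positivity)
  have hEq : (κ * ζ ^ (α / p - (γ : ℝ)) * (Real.Gamma ((γ : ℝ) - α / p) / p) * Cγ) *
      ((p * ζ ^ ((γ : ℝ) - α / p) / Real.Gamma ((γ : ℝ) - α / p)) *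
        u ^ (p * (γ : ℝ) - α - 1) * Real.exp (-(x * ζ)))
      = κ * (Cγ * x ^ γ * Real.exp (-(x * ζ))) * u ^ (-1 - α) := by
    rw [h2]
    calc (κ * ζ ^ (α / p - (γ : ℝ)) * (Real.Gamma ((γ : ℝ) - α / p) / p) * Cγ) *
        ((p * ζ ^ ((γ : ℝ) - α / p) / Real.Gamma ((γ : ℝ) - α / p)) *
          (x ^ γ * u ^ (-1 - α)) * Real.exp (-(x * ζ)))
        = (ζ ^ (α / p - (γ : ℝ)) * ζ ^ ((γ : ℝ) - α / p)) *
            (Real.Gamma ((γ : ℝ) - α / p) / p * (p / Real.Gamma ((γ : ℝ) - α / p))) *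
            (κ * (Cγ * x ^ γ * Real.exp (-(x * ζ))) * u ^ (-1 - α)) := by ring
      _ = κ * (Cγ * x ^ γ * Real.exp (-(x * ζ))) * u ^ (-1 - α) := by
          rw [h1, h3]; ring
  rw [hEq, hA]
  have hu' : 0 ≤ u ^ (-1 - α) := Real.rpow_nonneg hu.le _
  exact mul_le_mul_of_nonneg_right (mul_le_mul_of_nonneg_left hB hκ0.le) hu'
end

section
/- Fix p > 0, α ∈ (0,2), λ > 0, t > 0 and a probability measure Q on (0,∞), and let γ = 1 + ⌊α/p⌋. Then for every u > 0, ((e^{pλt}−1)^γ/γ!) u^{γp} ∫_{(0,∞)} e^{−u^p e^{pλt} s} s^γ Q(ds) ≤ ℓ_0(u) − Σ_{n=0}^{γ−1} ℓ_n(u e^{λt}) u^{np} ≤ ((e^{pλt}−1)^γ/γ!) u^{γp} ∫_{(0,∞)} e^{−u^p s} s^γ Q(ds). -/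
open MeasureTheory

/-- `exp y` as a tsum. -/
lemma real_exp_tsum (y : ℝ) : Real.exp y = ∑' n : ℕ, y ^ n / n.factorial := by
  rw [Real.exp_eq_exp_ℝ, NormedSpace.exp_eq_tsum_div]

/-- Taylor remainder upper bound for `exp` at nonnegative points. -/
lemma exp_taylor_upper {y : ℝ} (hy : 0 ≤ y) (m : ℕ) :
    Real.exp y - ∑ n ∈ Finset.range m, y ^ n / n.factorial
      ≤ y ^ m / m.factorial * Real.exp y := by
  have hsum := Real.summable_pow_div_factorial y
  have hsplit := Summable.sum_add_tsum_nat_add (f := fun n : ℕ => y ^ n / n.factorial) m hsum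
  have hrem : Real.exp y - ∑ n ∈ Finset.range m, y ^ n / n.factorial
      = ∑' i : ℕ, y ^ (i + m) / (i + m).factorial := by
    rw [real_exp_tsum, ← hsplit]; ring
  rw [hrem]
  have hterm : ∀ i : ℕ, y ^ (i + m) / (i + m).factorial
      ≤ y ^ m / m.factorial * (y ^ i / i.factorial) := by
    intro i
    have hdvd : (i.factorial * m.factorial : ℕ) ∣ (i + m).factorial :=
      Nat.factorial_mul_factorial_dvd_factorial_add i m
    have hle : (i.factorial * m.factorial : ℕ) ≤ (i + m).factorial :=
      Nat.le_of_dvd (i + m).factorial_pos hdvd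
    have hle' : ((i.factorial * m.factorial : ℕ) : ℝ) ≤ ((i + m).factorial : ℝ) := by
      exact_mod_cast hle
    have hpos : (0:ℝ) < (i.factorial * m.factorial : ℕ) := by positivity
    have hnum : (0:ℝ) ≤ y ^ (i + m) := pow_nonneg hy _
    calc y ^ (i + m) / (i + m).factorial
        ≤ y ^ (i + m) / ((i.factorial * m.factorial : ℕ) : ℝ) := by
          apply div_le_div_of_nonneg_left hnum hpos hle'
      _ = y ^ m / m.factorial * (y ^ i / i.factorial) := by
          rw [pow_add]; push_cast; ring
  have hsum2 : Summable (fun i : ℕ => y ^ m / m.factorial * (y ^ i / i.factorial)) :=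
    hsum.mul_left _
  have hsum1 : Summable (fun i : ℕ => y ^ (i + m) / (i + m).factorial) :=
    (summable_nat_add_iff m).2 hsum
  calc ∑' i : ℕ, y ^ (i + m) / (i + m).factorial
      ≤ ∑' i : ℕ, y ^ m / m.factorial * (y ^ i / i.factorial) :=
        Summable.tsum_le_tsum hterm hsum1 hsum2
    _ = y ^ m / m.factorial * Real.exp y := by
        rw [tsum_mul_left, ← real_exp_tsum]

/-- Taylor remainder lower bound for `exp` at nonnegative points. -/
lemma exp_taylor_lower {y : ℝ} (hy : 0 ≤ y) (m : ℕ) :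
    y ^ m / m.factorial ≤ Real.exp y - ∑ n ∈ Finset.range m, y ^ n / n.factorial := by
  have h := Real.sum_le_exp_of_nonneg hy (m + 1)
  rw [Finset.sum_range_succ] at h
  linarith

lemma exp_neg_mul_pow_le {x : ℝ} (hx : 0 ≤ x) (n : ℕ) :
    Real.exp (-x) * x ^ n ≤ n.factorial := by
  have h1 : x ^ n / n.factorial ≤ Real.exp x := by
    refine le_trans ?_ (Real.sum_le_exp_of_nonneg hx (n + 1))
    exact Finset.single_le_sum (f := fun i => x ^ i / i.factorial)
      (fun i _ => by positivity) (Finset.self_mem_range_succ n)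
  have h2 : x ^ n ≤ Real.exp x * n.factorial :=
    (div_le_iff₀ (by positivity)).mp h1
  rw [Real.exp_neg, inv_mul_le_iff₀ (Real.exp_pos x)]
  exact h2

lemma integrable_aux (Q : Measure ℝ) [IsProbabilityMeasure Q] {b : ℝ} (hb : 0 < b) (n : ℕ) :
    IntegrableOn (fun s : ℝ => Real.exp (-(b * s)) * s ^ n) (Set.Ioi 0) Q := by
  have hcont : Continuous fun s : ℝ => Real.exp (-(b * s)) * s ^ n := by continuity
  refine Integrable.mono' (integrable_const ((n.factorial : ℝ) / b ^ n))
    hcont.aestronglyMeasurable ?_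
  refine (ae_restrict_iff' measurableSet_Ioi).2 (ae_of_all _ fun s hs => ?_)
  have hs0 : (0:ℝ) < s := hs
  have hkey := exp_neg_mul_pow_le (x := b * s) (by positivity) n
  have heq : Real.exp (-(b * s)) * s ^ n
      = (Real.exp (-(b * s)) * (b * s) ^ n) / b ^ n := by
    rw [mul_pow]; field_simp
  have hpos : (0:ℝ) ≤ Real.exp (-(b * s)) * s ^ n := by positivity
  rw [Real.norm_eq_abs, abs_of_nonneg hpos, heq]
  exact div_le_div_of_nonneg_right hkey (by positivity) |>.trans_eq rfl

/-- Fix p > 0, α ∈ (0,2), λ > 0, t > 0 and a probability measure Q on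
(0,∞), and let γ = 1 + ⌊α/p⌋. With ℓ_n(u) = (1/n!)(e^{pλt}−1)^n ∫_{(0,∞)} e^{−u^p s} s^n Q(ds),
for every u > 0,
((e^{pλt}−1)^γ/γ!) u^{γp} ∫ e^{−u^p e^{pλt} s} s^γ Q(ds)
≤ ℓ_0(u) − Σ_{n=0}^{γ−1} ℓ_n(u e^{λt}) u^{np}
≤ ((e^{pλt}−1)^γ/γ!) u^{γp} ∫ e^{−u^p s} s^γ Q(ds). -/
theorem ell_difference_bounds
    (p α lam t : ℝ) (hp : 0 < p) (hα : α ∈ Set.Ioo (0:ℝ) 2) (hlam : 0 < lam) (ht : 0 < t)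
    (Q : Measure ℝ) [IsProbabilityMeasure Q] (hQ : Q (Set.Ioi (0:ℝ))ᶜ = 0)
    (γ : ℕ) (hγ : γ = 1 + ⌊α / p⌋₊)
    (ell : ℕ → ℝ → ℝ)
    (hell : ∀ n u, ell n u = (1 / (n.factorial : ℝ)) * (Real.exp (p * lam * t) - 1) ^ n *
      ∫ s in Set.Ioi (0:ℝ), Real.exp (-(u ^ p * s)) * s ^ n ∂Q) :
    ∀ u > (0:ℝ),
      ((Real.exp (p * lam * t) - 1) ^ γ / (γ.factorial : ℝ)) * u ^ ((γ : ℝ) * p) *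
          (∫ s in Set.Ioi (0:ℝ), Real.exp (-(u ^ p * Real.exp (p * lam * t) * s)) * s ^ γ ∂Q)
        ≤ ell 0 u - ∑ n ∈ Finset.range γ, ell n (u * Real.exp (lam * t)) * u ^ ((n : ℝ) * p)
      ∧ ell 0 u - ∑ n ∈ Finset.range γ, ell n (u * Real.exp (lam * t)) * u ^ ((n : ℝ) * p)
        ≤ ((Real.exp (p * lam * t) - 1) ^ γ / (γ.factorial : ℝ)) * u ^ ((γ : ℝ) * p) *
            (∫ s in Set.Ioi (0:ℝ), Real.exp (-(u ^ p * s)) * s ^ γ ∂Q) := by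
  intro u hu
  set c := Real.exp (p * lam * t) with hc
  set a := c - 1 with ha
  set v := u ^ p with hv
  have hc1 : 1 < c := by
    rw [hc]; have : 0 < p * lam * t := by positivity
    calc (1:ℝ) = Real.exp 0 := (Real.exp_zero).symm
    _ < Real.exp (p * lam * t) := Real.exp_lt_exp.2 this
  have ha0 : 0 ≤ a := by simp [ha]; linarith
  have hv0 : 0 < v := Real.rpow_pos_of_pos hu p
  have hvc0 : 0 < v * c := by positivity
  -- rewrite rpow quantities
  have hup : (u * Real.exp (lam * t)) ^ p = v * c := by
    rw [Real.mul_rpow hu.le (Real.exp_pos _).le,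
      Real.rpow_def_of_pos (Real.exp_pos _), Real.log_exp, hv, hc]
    congr 1; ring
  have hvn : ∀ n : ℕ, u ^ ((n : ℝ) * p) = v ^ n := by
    intro n
    rw [mul_comm, Real.rpow_mul hu.le, hv, Real.rpow_natCast]
  -- notation for integrals
  set I : ℕ → ℝ → ℝ := fun n b => ∫ s in Set.Ioi (0:ℝ), Real.exp (-(b * s)) * s ^ n ∂Q
    with hI
  have hint : ∀ (b : ℝ), 0 < b → ∀ n : ℕ,
      IntegrableOn (fun s : ℝ => Real.exp (-(b * s)) * s ^ n) (Set.Ioi 0) Q :=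
    fun b hb n => integrable_aux Q hb n
  -- rewrite ell terms
  have hell0 : ell 0 u = I 0 v := by
    rw [hell]; simp [hI, hv]
  have hellsum : ∀ n : ℕ, ell n (u * Real.exp (lam * t)) * u ^ ((n : ℝ) * p)
      = ((1 / (n.factorial : ℝ)) * a ^ n * v ^ n) * I n (v * c) := by
    intro n
    rw [hell, hvn, hup, hI]
    ring
  -- the target integrals
  have htgt1 : (∫ s in Set.Ioi (0:ℝ),
      Real.exp (-(u ^ p * Real.exp (p * lam * t) * s)) * s ^ γ ∂Q) = I γ (v * c) := by
    rw [hI]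
  have htgt2 : (∫ s in Set.Ioi (0:ℝ), Real.exp (-(u ^ p * s)) * s ^ γ ∂Q) = I γ v := by
    rw [hI]
  -- write the difference as a single integral
  have hdiff : ell 0 u - ∑ n ∈ Finset.range γ, ell n (u * Real.exp (lam * t)) * u ^ ((n : ℝ) * p)
      = ∫ s in Set.Ioi (0:ℝ),
          (Real.exp (-(v * s)) - ∑ n ∈ Finset.range γ,
            (1 / (n.factorial : ℝ)) * a ^ n * v ^ n * (Real.exp (-(v * c * s)) * s ^ n)) ∂Q := by
    rw [hell0, Finset.sum_congr rfl fun n _ => hellsum n]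
    rw [integral_sub]
    · congr 1
      · simp [hI]
      · rw [integral_finset_sum]
        · exact Finset.sum_congr rfl fun n _ => by
            rw [integral_const_mul]
        · exact fun n _ => ((hint (v * c) hvc0 n).const_mul _)
    · simpa [IntegrableOn] using hint v hv0 0
    · exact integrable_finset_sum _ fun n _ => ((hint (v * c) hvc0 n).const_mul _)
  -- pointwise identity and bounds
  have hpt : ∀ s : ℝ, 0 < s →
      (Real.exp (-(v * s)) - ∑ n ∈ Finset.range γ,
        (1 / (n.factorial : ℝ)) * a ^ n * v ^ n * (Real.exp (-(v * c * s)) * s ^ n))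
      = Real.exp (-(v * c * s)) *
        (Real.exp (a * v * s) - ∑ n ∈ Finset.range γ, (a * v * s) ^ n / n.factorial) := by
    intro s hs
    have h1 : Real.exp (-(v * c * s)) * Real.exp (a * v * s) = Real.exp (-(v * s)) := by
      rw [← Real.exp_add]; congr 1; rw [ha]; ring
    rw [mul_sub, h1, Finset.mul_sum]
    congr 1
    refine Finset.sum_congr rfl fun n _ => ?_
    rw [mul_pow, mul_pow]
    ring
  set C := a ^ γ / (γ.factorial : ℝ) * v ^ γ with hC
  have hlow : ∀ s ∈ Set.Ioi (0:ℝ),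
      C * (Real.exp (-(v * c * s)) * s ^ γ)
        ≤ Real.exp (-(v * s)) - ∑ n ∈ Finset.range γ,
            (1 / (n.factorial : ℝ)) * a ^ n * v ^ n * (Real.exp (-(v * c * s)) * s ^ n) := by
    intro s hs
    rw [hpt s hs]
    have hy : 0 ≤ a * v * s := by
      have : 0 < s := hs; positivity
    have h := exp_taylor_lower hy γ
    have hep : (0:ℝ) < Real.exp (-(v * c * s)) := Real.exp_pos _
    have h2 := mul_le_mul_of_nonneg_left h hep.le
    refine le_trans (le_of_eq ?_) h2
    have hs0 : (0:ℝ) < s := hs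
    rw [hC, mul_pow, mul_pow]
    ring
  have hhigh : ∀ s ∈ Set.Ioi (0:ℝ),
      Real.exp (-(v * s)) - ∑ n ∈ Finset.range γ,
          (1 / (n.factorial : ℝ)) * a ^ n * v ^ n * (Real.exp (-(v * c * s)) * s ^ n)
        ≤ C * (Real.exp (-(v * s)) * s ^ γ) := by
    intro s hs
    rw [hpt s hs]
    have hs0 : (0:ℝ) < s := hs
    have hy : 0 ≤ a * v * s := by positivity
    have h := exp_taylor_upper hy γ
    have hep : (0:ℝ) < Real.exp (-(v * c * s)) := Real.exp_pos _
    have h2 := mul_le_mul_of_nonneg_left h hep.le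
    refine le_trans h2 (le_of_eq ?_)
    have h1 : Real.exp (-(v * c * s)) * Real.exp (a * v * s) = Real.exp (-(v * s)) := by
      rw [← Real.exp_add]; congr 1; rw [ha]; ring
    calc Real.exp (-(v * c * s)) * ((a * v * s) ^ γ / γ.factorial * Real.exp (a * v * s))
        = (a * v * s) ^ γ / γ.factorial *
            (Real.exp (-(v * c * s)) * Real.exp (a * v * s)) := by ring
      _ = (a * v * s) ^ γ / γ.factorial * Real.exp (-(v * s)) := by rw [h1]
      _ = C * (Real.exp (-(v * s)) * s ^ γ) := by
          rw [hC, mul_pow, mul_pow]; ring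
  -- integrability of the middle function
  have hfint : IntegrableOn (fun s : ℝ =>
      Real.exp (-(v * s)) - ∑ n ∈ Finset.range γ,
        (1 / (n.factorial : ℝ)) * a ^ n * v ^ n * (Real.exp (-(v * c * s)) * s ^ n))
      (Set.Ioi 0) Q := by
    refine Integrable.sub ?_ ?_
    · simpa [IntegrableOn] using hint v hv0 0
    · exact integrable_finset_sum _ fun n _ => ((hint (v * c) hvc0 n).const_mul _)
  have hglow : IntegrableOn (fun s : ℝ => C * (Real.exp (-(v * c * s)) * s ^ γ))
      (Set.Ioi 0) Q := (hint (v * c) hvc0 γ).const_mul _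
  have hghigh : IntegrableOn (fun s : ℝ => C * (Real.exp (-(v * s)) * s ^ γ))
      (Set.Ioi 0) Q := (hint v hv0 γ).const_mul _
  have hgoalconst : ∀ J : ℝ, ((Real.exp (p * lam * t) - 1) ^ γ / (γ.factorial : ℝ)) *
      u ^ ((γ : ℝ) * p) * J = C * J := by
    intro J
    rw [hvn γ, hC, ← hc, ← ha]
  constructor
  · rw [hdiff, hgoalconst, htgt1, hI, ← integral_const_mul]
    exact setIntegral_mono_on hglow hfint measurableSet_Ioi hlow
  · rw [hdiff, hgoalconst, htgt2, hI, ← integral_const_mul]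
    exact setIntegral_mono_on hfint hghigh measurableSet_Ioi hhigh
end
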